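/- arXiv:2406.05890 — 8 statements merged into one kernel-verified Lean document; each statement's English description precedes it below -/
import Mathlib

section
/- Let p be a prime and let (a_n)_{n≥0} be the sequence in ℚ_p given by a_n = (c_1 + c_2·n)·λ^n, where c_1, c_2, λ ∈ ℚ_p and c_2 ≠ 0, λ ≠ 0. If |c_1|_p > |c_2|_p, then the Kepler set of (a_n) is K((a_n)) = λ·(1 + c_2/c_1 + (c_2/c_1)²·ℤ_p). If |c_1|_p ≤ |c_2|_p, then K((a_n)) = {x ∈ ℚ_p : x/λ − 1 ∉ p·ℤ_p}, i.e. the complement in ℚ_p of λ·(1 + p·ℤ_p). -/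
/-!
Since `a (n + 1) / a n = λ (1 + c₂ / (c₁ + c₂ n))`, the Kepler set is the image under the
homeomorphism `u ↦ λ (1 + u)` of the closure of the ratios `c₂ / (c₁ + c₂ n)`.

If `|c₂| < |c₁|`, put `t = c₂ / c₁`: the ratios are `t / (1 + t n)`, the values at `n ∈ ℕ` of a
continuous function on the compact space `ℤ_p` in which `ℕ` is dense, so their closure is the
image of all of `ℤ_p`, namely `t + t² ℤ_p`.

If `|c₁| ≤ |c₂|`, put `b = c₁ / c₂ ∈ ℤ_p`: the ratios are `(b + n)⁻¹`; since `b + ℕ` is dense in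
`ℤ_p` and inversion is continuous off `0`, their closure is the set of inverses of nonzero
elements of `ℤ_p`, i.e. `{u | 1 ≤ |u|}`.
-/

/-- The Kepler set of a sequence `a` in `ℚ_[p]`: the closure of the set of
consecutive ratios `a (n+1) / a n` over indices `n` with `a n ≠ 0`. -/
def keplerSet (p : ℕ) [Fact p.Prime] (a : ℕ → ℚ_[p]) : Set ℚ_[p] :=
  closure {x : ℚ_[p] | ∃ n : ℕ, a n ≠ 0 ∧ x = a (n + 1) / a n}

open Set

variable {p : ℕ} [Fact p.Prime]

lemma PadicInt.denseRange_add_natCast (b : ℤ_[p]) : DenseRange fun n : ℕ => b + n :=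
  (Homeomorph.addLeft b).surjective.denseRange.comp PadicInt.denseRange_natCast
    (continuous_const_add b)

lemma Padic.norm_one_add_mul_eq_one {t y : ℚ_[p]} (ht : ‖t‖ < 1) (hy : ‖y‖ ≤ 1) :
    ‖1 + t * y‖ = 1 := by
  have hty : ‖t * y‖ < ‖(1 : ℚ_[p])‖ := by
    rw [norm_mul, norm_one]
    exact (mul_le_of_le_one_right (norm_nonneg t) hy).trans_lt ht
  rw [IsUltrametricDist.norm_add_eq_max_of_norm_ne_norm hty.ne', max_eq_left hty.le, norm_one]

lemma keplerSet_eq_image_closure {c₁ c₂ lam : ℚ_[p]} (hlam : lam ≠ 0) {a : ℕ → ℚ_[p]}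
    (ha : ∀ n : ℕ, a n = (c₁ + c₂ * (n : ℚ_[p])) * lam ^ n) :
    keplerSet p a = (fun u => lam * (1 + u)) ''
      closure {u | ∃ n : ℕ, c₁ + c₂ * (n : ℚ_[p]) ≠ 0 ∧ u = c₂ / (c₁ + c₂ * n)} := by
  have hratio : ∀ n : ℕ, c₁ + c₂ * (n : ℚ_[p]) ≠ 0 →
      a (n + 1) / a n = lam * (1 + c₂ / (c₁ + c₂ * n)) := by
    intro n hn
    rw [ha, ha]
    push_cast
    field_simp
    ring
  have ha0 : ∀ n : ℕ, a n ≠ 0 ↔ c₁ + c₂ * (n : ℚ_[p]) ≠ 0 := fun n => by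
    simp [ha, hlam]
  let h : ℚ_[p] ≃ₜ ℚ_[p] := (Homeomorph.addLeft 1).trans (Homeomorph.mulLeft₀ lam hlam)
  change _ = h '' _
  rw [h.image_closure, keplerSet]
  congr 1
  ext x
  constructor
  · rintro ⟨n, hn, rfl⟩
    exact ⟨_, ⟨n, (ha0 n).1 hn, rfl⟩, (hratio n ((ha0 n).1 hn)).symm⟩
  · rintro ⟨_, ⟨n, hn, rfl⟩, rfl⟩
    exact ⟨n, (ha0 n).2 hn, (hratio n hn).symm⟩

lemma Padic.closure_range_div_one_add_mul_natCast {t : ℚ_[p]} (ht : ‖t‖ < 1) :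
    closure (range fun n : ℕ => t / (1 + t * n)) = {u | ∃ z : ℤ_[p], u = t + t ^ 2 * z} := by
  have hnorm (y : ℤ_[p]) : ‖1 + t * y‖ = 1 := Padic.norm_one_add_mul_eq_one ht y.2
  have hne (y : ℤ_[p]) : 1 + t * y ≠ 0 := norm_ne_zero_iff.mp (by simp [hnorm])
  -- `σ` is an involution of `ℤ_[p]` and `t / (1 + t y) = t + t² σ y`
  let σ (y : ℤ_[p]) : ℤ_[p] := ⟨-y / (1 + t * y), by simpa [norm_div, hnorm] using y.2⟩
  let g (y : ℤ_[p]) : ℚ_[p] := t / (1 + t * y)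
  have hg : Continuous g := continuous_const.div (by fun_prop) hne
  have hrange : range g = {u | ∃ z : ℤ_[p], u = t + t ^ 2 * z} := by
    ext u
    constructor
    · rintro ⟨y, rfl⟩
      refine ⟨σ y, ?_⟩
      have := hne y
      simp only [g, σ]
      field_simp
      ring
    · rintro ⟨z, rfl⟩
      refine ⟨σ z, ?_⟩
      have := hne z
      simp only [g, σ]
      field_simp
      ring
  calc closure (range fun n : ℕ => t / (1 + t * n))
      = closure (g '' range Nat.cast) := by rw [← range_comp]; rfl
    _ = range g := subset_antisymm
          (closure_minimal (image_subset_range _ _) (isCompact_range hg).isClosed)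
          (hg.range_subset_closure_image_dense PadicInt.denseRange_natCast)
    _ = _ := hrange

lemma Padic.closure_inv_add_natCast {b : ℚ_[p]} (hb : ‖b‖ ≤ 1) :
    closure {u | ∃ n : ℕ, b + n ≠ 0 ∧ u = (b + n)⁻¹} = {u : ℚ_[p] | 1 ≤ ‖u‖} := by
  let B : ℤ_[p] := ⟨b, hb⟩
  apply subset_antisymm
  · refine closure_minimal ?_ (isClosed_le continuous_const continuous_norm)
    rintro _ ⟨n, hn, rfl⟩
    rw [mem_ofPred_eq, norm_inv, one_le_inv₀ (norm_pos_iff.mpr hn)]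
    exact (B + n).2
  · intro u hu
    have hu0 : u ≠ 0 := norm_pos_iff.mp (zero_lt_one.trans_le hu)
    let v : ℤ_[p] := ⟨u⁻¹, by simpa using inv_le_one_of_one_le₀ hu⟩
    have hv : v ≠ 0 := fun h => inv_ne_zero hu0 (congrArg Subtype.val h)
    let s := {y : ℤ_[p] | y ≠ 0} ∩ range fun n : ℕ => B + n
    have hvs : v ∈ closure s :=
      isOpen_ne.inter_closure ⟨hv, (PadicInt.denseRange_add_natCast B).closure_range ▸ mem_univ v⟩
    have hcont : ContinuousWithinAt (fun y : ℤ_[p] => (y : ℚ_[p])⁻¹) s v :=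
      (continuous_subtype_val.continuousAt.inv₀ (inv_ne_zero hu0)).continuousWithinAt
    have hu_mem := hcont.mem_closure_image hvs
    rw [show (v : ℚ_[p])⁻¹ = u from inv_inv u] at hu_mem
    refine closure_mono ?_ hu_mem
    rintro _ ⟨_, ⟨hy, n, rfl⟩, rfl⟩
    have hcoe : ((B + n : ℤ_[p]) : ℚ_[p]) = b + n := by
      rw [PadicInt.coe_add, PadicInt.coe_natCast]
    exact ⟨n, hcoe ▸ PadicInt.coe_ne_zero.mpr hy, congrArg Inv.inv hcoe⟩

lemma Padic.norm_le_inv_iff_norm_lt_one (x : ℚ_[p]) : ‖x‖ ≤ (p : ℝ)⁻¹ ↔ ‖x‖ < 1 := by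
  simpa using Padic.norm_le_pow_iff_norm_lt_pow_add_one x (-1)

lemma Padic.closure_ratios_of_norm_lt {c₁ c₂ : ℚ_[p]} (h : ‖c₂‖ < ‖c₁‖) :
    closure {u | ∃ n : ℕ, c₁ + c₂ * (n : ℚ_[p]) ≠ 0 ∧ u = c₂ / (c₁ + c₂ * n)} =
      {u | ∃ z : ℤ_[p], u = c₂ / c₁ + (c₂ / c₁) ^ 2 * z} := by
  have hc₁ : c₁ ≠ 0 := norm_pos_iff.mp ((norm_nonneg c₂).trans_lt h)
  have ht : ‖c₂ / c₁‖ < 1 := by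
    rwa [norm_div, div_lt_one (norm_pos_iff.mpr hc₁)]
  have hne (n : ℕ) : c₁ + c₂ * (n : ℚ_[p]) ≠ 0 := by
    have hn := Padic.norm_one_add_mul_eq_one ht (by simpa using Padic.norm_int_le_one (p := p) n)
    rw [← norm_ne_zero_iff, show c₁ + c₂ * (n : ℚ_[p]) = c₁ * (1 + c₂ / c₁ * n) by field_simp,
      norm_mul, hn, mul_one]
    exact norm_ne_zero_iff.mpr hc₁
  rw [← Padic.closure_range_div_one_add_mul_natCast ht]
  congr 1
  ext u
  refine exists_congr fun n => ?_
  have hn := hne n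
  rw [and_iff_right hn, eq_comm]
  field_simp

lemma Padic.closure_ratios_of_norm_le {c₁ c₂ : ℚ_[p]} (hc₂ : c₂ ≠ 0) (h : ‖c₁‖ ≤ ‖c₂‖) :
    closure {u | ∃ n : ℕ, c₁ + c₂ * (n : ℚ_[p]) ≠ 0 ∧ u = c₂ / (c₁ + c₂ * n)} =
      {u | 1 ≤ ‖u‖} := by
  have hb : ‖c₁ / c₂‖ ≤ 1 := by
    rwa [norm_div, div_le_one (norm_pos_iff.mpr hc₂)]
  rw [← Padic.closure_inv_add_natCast hb]
  congr 1
  ext u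
  refine exists_congr fun n => ?_
  rw [show c₁ + c₂ * (n : ℚ_[p]) = c₂ * (c₁ / c₂ + n) by field_simp, mul_ne_zero_iff,
    and_iff_right hc₂, div_mul_cancel_left₀ hc₂]

theorem stmt_0 (p : ℕ) [Fact p.Prime] (c₁ c₂ lam : ℚ_[p]) (hc₂ : c₂ ≠ 0) (hlam : lam ≠ 0)
    (a : ℕ → ℚ_[p]) (ha : ∀ n : ℕ, a n = (c₁ + c₂ * (n : ℚ_[p])) * lam ^ n) :
    (‖c₂‖ < ‖c₁‖ →
      keplerSet p a =
        {x : ℚ_[p] | ∃ z : ℤ_[p], x = lam * (1 + c₂ / c₁ + (c₂ / c₁) ^ 2 * (z : ℚ_[p]))}) ∧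
    (‖c₁‖ ≤ ‖c₂‖ →
      keplerSet p a = {x : ℚ_[p] | ¬ ‖x / lam - 1‖ ≤ (p : ℝ)⁻¹}) := by
  rw [keplerSet_eq_image_closure hlam ha]
  refine ⟨fun h => ?_, fun h => ?_⟩
  · rw [Padic.closure_ratios_of_norm_lt h]
    ext x
    simp [add_assoc, eq_comm]
  · rw [Padic.closure_ratios_of_norm_le hc₂ h]
    ext x
    rw [mem_ofPred_eq, Padic.norm_le_inv_iff_norm_lt_one, not_lt]
    constructor
    · rintro ⟨u, hu, rfl⟩
      rwa [mul_div_cancel_left₀ _ hlam, add_sub_cancel_left]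
    · exact fun hx => ⟨x / lam - 1, hx, by field_simp; ring⟩
end

section
/- Let p ≥ 3 be a prime and let (a_n)_{n≥0} be given by a_n = c_1·λ_1^n + c_2·λ_2^n with a_n ∈ ℚ_p for all n, where c_1, c_2, λ_1, λ_2 are nonzero elements of ℚ_p or of the unramified quadratic extension ℚ_p(√d). Assume |λ_1|_p = |λ_2|_p > 0 and that λ_2/λ_1 is not a root of unity. Let l be the order of λ_2/λ_1 modulo p. If −c_1/c_2 belongs to the closure of {(λ_2/λ_1)^n : n ∈ ℕ} and l = 1, then the Kepler set of (a_n) is K((a_n)) = ℚ_p \ ( (λ_1+λ_2)/2 + p^{1+ν_p(λ_2)}·ℤ_p ). -/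
/-!
Put `q = λ₂ / λ₁` and `w = -c₁ / c₂`, so that `aₙ = c₂ λ₁ⁿ (qⁿ - w)`. Since `|q - 1| ≤ 1/p` and
`p` is odd, `|qⁿ - qᵐ| = |q - 1| |n - m|_p`, and by compactness of `ℤ_p` the limit `w` of powers
of `q` satisfies `|qⁿ - w| = |q - 1| |n - z|_p` for some `z ∈ ℤ_p`. For the ratios
`rₙ = aₙ₊₁ / aₙ` and `t = (λ₁ + λ₂) / 2` this gives `|rₙ - t| = |λ₁| / |n - z|` and
`|rₙ - rₘ| = |λ₁| |n - m| / (|n - z| |m - z|)`. Hence the inversion `x ↦ z + p^ν / (x - t)`,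
`ν = ν_p(λ₂)`, which maps `{|x - t| ≥ p^(-ν)}` homeomorphically onto `ℤ_p \ {z}`, sends `rₙ` to
a point `sₙ` with `|sₙ - sₘ| = |n - m|_p`. Such an isometric image of `{n ∈ ℕ | n ≠ z}` is dense
in `ℤ_p`: modulo `pᵏ` it induces an injective, hence bijective, self-map of `ℤ / pᵏ`.
-/

lemma IsUltrametricDist.norm_add_eq_left_of_norm_lt {S : Type*} [SeminormedAddGroup S]
    [IsUltrametricDist S] {x y : S} (h : ‖y‖ < ‖x‖) : ‖x + y‖ = ‖x‖ := by
  rw [norm_add_eq_max_of_norm_ne_norm h.ne', max_eq_left h.le]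

lemma Nat.Prime.dvd_sum_range_id {p : ℕ} (hp : p.Prime) (hp2 : p ≠ 2) :
    p ∣ ∑ k ∈ Finset.range p, k := by
  have h : p ∣ (∑ k ∈ Finset.range p, k) * 2 :=
    Finset.sum_range_id_mul_two p ▸ dvd_mul_right p _
  exact (hp.dvd_mul.mp h).resolve_right
    fun h2 ↦ hp2 ((Nat.prime_dvd_prime_iff_eq hp Nat.prime_two).mp h2)

section BinetRatio

variable {F : Type*} [Field F] (lam q w : F) {n m : ℕ}

lemma ratio_sub_half_eq (h2 : (2 : F) ≠ 0) (hn : q ^ n - w ≠ 0) :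
    lam * (q ^ (n + 1) - w) / (q ^ n - w) - lam * (1 + q) / 2
      = lam * (q - 1) * (q ^ n + w) / (2 * (q ^ n - w)) := by
  field_simp
  ring

lemma ratio_sub_ratio_eq (hn : q ^ n - w ≠ 0) (hm : q ^ m - w ≠ 0) :
    lam * (q ^ (n + 1) - w) / (q ^ n - w) - lam * (q ^ (m + 1) - w) / (q ^ m - w)
      = lam * w * (q - 1) * (q ^ m - q ^ n) / ((q ^ n - w) * (q ^ m - w)) := by
  field_simp
  ring

end BinetRatio

namespace PadicInt

variable {p : ℕ} [Fact p.Prime]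

lemma norm_sub_le_pow_iff_toZModPow_eq (x y : ℤ_[p]) (k : ℕ) :
    ‖x - y‖ ≤ (p : ℝ) ^ (-(k : ℤ)) ↔ toZModPow k x = toZModPow k y := by
  rw [norm_le_pow_iff_mem_span_pow, ← ker_toZModPow, RingHom.mem_ker, map_sub, sub_eq_zero]

lemma exists_natCast_ne_and_cast_eq (z : ℤ_[p]) {k : ℕ} (r : ZMod (p ^ k)) :
    ∃ n : ℕ, (n : ℤ_[p]) ≠ z ∧ (n : ZMod (p ^ k)) = r := by
  have hp0 : ((p ^ k : ℕ) : ℤ_[p]) ≠ 0 := by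
    exact_mod_cast pow_ne_zero k (Fact.out : p.Prime).ne_zero
  by_cases h : (r.val : ℤ_[p]) = z
  · refine ⟨r.val + p ^ k, fun h' ↦ hp0 ?_, by simp⟩
    rw [Nat.cast_add, h] at h'
    simpa using h'
  · exact ⟨r.val, h, by simp⟩

theorem denseRange_of_norm_sub_eq (z : ℤ_[p]) (s : {n : ℕ // (n : ℤ_[p]) ≠ z} → ℤ_[p])
    (hs : ∀ n m, ‖s n - s m‖ = ‖((n : ℕ) : ℤ_[p]) - (m : ℕ)‖) : DenseRange s := by
  refine Metric.denseRange_iff.mpr fun y ε hε ↦ ?_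
  obtain ⟨k, hk⟩ := exists_pow_neg_lt p hε
  have : NeZero (p ^ k) := ⟨pow_ne_zero k (Fact.out : p.Prime).ne_zero⟩
  choose n hn hnr using exists_natCast_ne_and_cast_eq (k := k) z
  let F : ZMod (p ^ k) → ZMod (p ^ k) := fun r ↦ toZModPow k (s ⟨n r, hn r⟩)
  have hF : F.Injective := by
    intro r r' h
    rw [← norm_sub_le_pow_iff_toZModPow_eq, hs, norm_sub_le_pow_iff_toZModPow_eq] at h
    simpa [hnr] using h
  obtain ⟨r, hr⟩ := (Finite.injective_iff_surjective.mp hF) (toZModPow k y)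
  refine ⟨⟨n r, hn r⟩, lt_of_le_of_lt ?_ hk⟩
  rw [dist_eq_norm, norm_sub_rev, norm_sub_le_pow_iff_toZModPow_eq]
  exact hr

end PadicInt

lemma norm_div_sub_div {F : Type*} [NormedField F] (c : F) {x y : F} (hx : x ≠ 0) (hy : y ≠ 0) :
    ‖c / x - c / y‖ = ‖c‖ * ‖x - y‖ / (‖x‖ * ‖y‖) := by
  rw [div_sub_div _ _ hx hy, norm_div, norm_mul, norm_sub_rev, ← norm_mul, ← norm_mul, mul_sub,
    mul_comm c x]

namespace Padic

variable {p : ℕ} [Fact p.Prime]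

theorem closure_image_eq_of_norm_sub (r : ℕ → ℚ_[p]) (z : ℤ_[p]) (t : ℚ_[p]) {c : ℚ_[p]}
    (hc : c ≠ 0) (hrt : ∀ n : ℕ, (n : ℤ_[p]) ≠ z → ‖r n - t‖ = ‖c‖ / ‖(n : ℤ_[p]) - z‖)
    (hrr : ∀ n m : ℕ, (n : ℤ_[p]) ≠ z → (m : ℤ_[p]) ≠ z →
      ‖r n - r m‖ = ‖c‖ * ‖(n : ℤ_[p]) - m‖ / (‖(n : ℤ_[p]) - z‖ * ‖(m : ℤ_[p]) - z‖)) :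
    closure (r '' {n | (n : ℤ_[p]) ≠ z}) = {x | ‖c‖ ≤ ‖x - t‖} := by
  have hc0 : 0 < ‖c‖ := norm_pos_iff.mpr hc
  have hrt_ge : ∀ n : ℕ, (n : ℤ_[p]) ≠ z → ‖c‖ ≤ ‖r n - t‖ := fun n hn ↦ by
    rw [hrt n hn]
    exact le_div_self hc0.le (norm_pos_iff.mpr (sub_ne_zero.mpr hn)) (PadicInt.norm_le_one _)
  have hne : ∀ {x : ℚ_[p]}, ‖c‖ ≤ ‖x - t‖ → x - t ≠ 0 := fun hx h ↦ by
    rw [h, norm_zero] at hx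
    exact hx.not_gt hc0
  have hinv : ∀ {x : ℚ_[p]}, ‖c‖ ≤ ‖x - t‖ → ‖(z : ℚ_[p]) + c / (x - t)‖ ≤ 1 := fun hx ↦ by
    refine (nonarchimedean _ _).trans (max_le (PadicInt.norm_le_one z) ?_)
    rw [norm_div]
    exact div_le_one_of_le₀ hx (norm_nonneg _)
  refine subset_antisymm (closure_minimal ?_ ?_) fun x hx ↦ ?_
  · rintro _ ⟨n, hn, rfl⟩
    exact hrt_ge n hn
  · exact isClosed_le continuous_const (continuous_id.sub continuous_const).norm
  let s : {n : ℕ // (n : ℤ_[p]) ≠ z} → ℤ_[p] := fun n ↦ ⟨z + c / (r n - t), hinv (hrt_ge n n.2)⟩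
  have hs : ∀ n m, ‖s n - s m‖ = ‖((n : ℕ) : ℤ_[p]) - (m : ℕ)‖ := fun n m ↦ by
    have hn := sub_ne_zero.mpr n.2
    have hm := sub_ne_zero.mpr m.2
    rw [PadicInt.norm_def, PadicInt.coe_sub, add_sub_add_left_eq_sub,
      norm_div_sub_div c (hne (hrt_ge n n.2)) (hne (hrt_ge m m.2)), norm_sub_rev,
      sub_sub_sub_cancel_right, hrr m n m.2 n.2, hrt n n.2, hrt m m.2, norm_sub_rev (m : ℤ_[p])]
    field_simp [norm_ne_zero_iff.mpr hn, norm_ne_zero_iff.mpr hm]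
  let φ : ℤ_[p] → ℚ_[p] := fun y ↦ t + c / ((y : ℚ_[p]) - z)
  have hφ : ∀ {x : ℚ_[p]} (hx : ‖c‖ ≤ ‖x - t‖), φ ⟨z + c / (x - t), hinv hx⟩ = x := fun hx ↦ by
    simp [φ, div_div_cancel₀ hc]
  have hφy : ContinuousAt φ ⟨z + c / (x - t), hinv hx⟩ := by
    refine continuousAt_const.add (continuousAt_const.div ?_ ?_)
    · exact (continuous_subtype_val.sub continuous_const).continuousAt
    · simpa using div_ne_zero hc (hne hx)
  have hx' := mem_closure_image hφy (PadicInt.denseRange_of_norm_sub_eq z s hs _)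
  rw [hφ hx] at hx'
  refine closure_mono ?_ hx'
  rintro _ ⟨_, ⟨n, rfl⟩, rfl⟩
  exact ⟨n, n.2, (hφ (hrt_ge n n.2)).symm⟩

end Padic

namespace PadicExtension

open IsUltrametricDist

variable {p : ℕ} [Fact p.Prime] {K : Type*} [NormedField K] [NormedAlgebra ℚ_[p] K]

lemma inv_prime_lt_one : (p : ℝ)⁻¹ < 1 :=
  inv_lt_one_of_one_lt₀ (by exact_mod_cast (Fact.out : p.Prime).one_lt)

variable (p) in
lemma norm_natCast_eq (n : ℕ) : ‖(n : K)‖ = ‖(n : ℤ_[p])‖ := by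
  rw [← map_natCast (algebraMap ℚ_[p] K), norm_algebraMap', PadicInt.norm_def,
    PadicInt.coe_natCast]

lemma norm_natCast_eq_one {m : ℕ} (hm : ¬ p ∣ m) : ‖(m : K)‖ = 1 := by
  rw [norm_natCast_eq p, PadicInt.norm_natCast_eq_one_iff,
    Nat.Prime.coprime_iff_not_dvd Fact.out]
  exact hm

variable [IsUltrametricDist K]

lemma norm_natCast_le_inv_of_dvd {m : ℕ} (hm : p ∣ m) : ‖(m : K)‖ ≤ (p : ℝ)⁻¹ := by
  obtain ⟨k, rfl⟩ := hm
  rw [Nat.cast_mul, norm_mul, norm_natCast_eq p p, PadicInt.norm_p]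
  exact mul_le_of_le_one_right (by positivity) (norm_natCast_le_one K k)

lemma norm_eq_one_of_norm_sub_one_lt {u : K} (hu : ‖u - 1‖ < 1) : ‖u‖ = 1 := by
  have := norm_add_eq_left_of_norm_lt (x := (1 : K)) (y := u - 1) (by simpa using hu)
  simpa using this

lemma norm_pow_sub_one_le {u : K} (hu : ‖u‖ ≤ 1) (n : ℕ) : ‖u ^ n - 1‖ ≤ ‖u - 1‖ := by
  rw [← geom_sum_mul, norm_mul]
  refine mul_le_of_le_one_left (norm_nonneg _) (norm_sum_le_of_forall_le_of_nonneg zero_le_one ?_)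
  intro i _
  simpa using pow_le_one₀ (norm_nonneg u) hu

lemma norm_geom_sum_sub_le {u : K} (hu : ‖u‖ ≤ 1) (n : ℕ) :
    ‖∑ i ∈ Finset.range n, u ^ i - n‖ ≤ ‖u - 1‖ := by
  have : ∑ i ∈ Finset.range n, u ^ i - n = ∑ i ∈ Finset.range n, (u ^ i - 1) := by simp
  rw [this]
  exact norm_sum_le_of_forall_le_of_nonneg (norm_nonneg _) fun i _ ↦ norm_pow_sub_one_le hu i

lemma norm_pow_sub_one_of_not_dvd {u : K} (hu : ‖u - 1‖ < 1) {m : ℕ} (hm : ¬ p ∣ m) :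
    ‖u ^ m - 1‖ = ‖u - 1‖ := by
  have hlt : ‖∑ i ∈ Finset.range m, u ^ i - m‖ < ‖(m : K)‖ := by
    rw [norm_natCast_eq_one hm]
    exact (norm_geom_sum_sub_le (norm_eq_one_of_norm_sub_one_lt hu).le m).trans_lt hu
  have hgeom : ‖∑ i ∈ Finset.range m, u ^ i‖ = 1 := by
    rw [← add_sub_cancel (m : K) (∑ i ∈ Finset.range m, u ^ i), norm_add_eq_left_of_norm_lt hlt,
      norm_natCast_eq_one hm]
  rw [← geom_sum_mul, norm_mul, hgeom, one_mul]

lemma norm_pow_prime_sub_one (hp : p ≠ 2) {u : K} (hu : ‖u - 1‖ ≤ (p : ℝ)⁻¹) :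
    ‖u ^ p - 1‖ = (p : ℝ)⁻¹ * ‖u - 1‖ := by
  have hu1 : ‖u‖ ≤ 1 := (norm_eq_one_of_norm_sub_one_lt (hu.trans_lt inv_prime_lt_one)).le
  have hdvd := Nat.Prime.dvd_sum_range_id Fact.out hp
  have hdouble : ∑ k ∈ Finset.range p, u ^ k - p
      = (u - 1) * (∑ k ∈ Finset.range p, (∑ i ∈ Finset.range k, u ^ i - k)
          + (∑ k ∈ Finset.range p, k : ℕ)) := by
    rw [Nat.cast_sum, ← Finset.sum_add_distrib, Finset.mul_sum]
    simp_rw [sub_add_cancel, mul_comm (u - 1), geom_sum_mul, Finset.sum_sub_distrib]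
    simp
  have hsmall : ‖∑ k ∈ Finset.range p, u ^ k - p‖ < ‖(p : K)‖ := by
    rw [norm_natCast_eq p p, PadicInt.norm_p, hdouble, norm_mul]
    calc ‖u - 1‖ * ‖_‖ ≤ ‖u - 1‖ * (p : ℝ)⁻¹ := by
          refine mul_le_mul_of_nonneg_left ((norm_add_le_max _ _).trans (max_le ?_ ?_))
            (norm_nonneg _)
          · exact norm_sum_le_of_forall_le_of_nonneg (by positivity)
              fun k _ ↦ (norm_geom_sum_sub_le hu1 k).trans hu
          · exact norm_natCast_le_inv_of_dvd hdvd
      _ < 1 * (p : ℝ)⁻¹ := mul_lt_mul_of_pos_right (hu.trans_lt inv_prime_lt_one)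
            (inv_pos.mpr (Nat.cast_pos.mpr (Fact.out : p.Prime).pos))
      _ = (p : ℝ)⁻¹ := one_mul _
  rw [← geom_sum_mul, norm_mul, ← add_sub_cancel (p : K) (∑ k ∈ Finset.range p, u ^ k),
    norm_add_eq_left_of_norm_lt hsmall, norm_natCast_eq p p, PadicInt.norm_p]

lemma norm_pow_sub_one (hp : p ≠ 2) {u : K} (hu : ‖u - 1‖ ≤ (p : ℝ)⁻¹) (n : ℕ) :
    ‖u ^ n - 1‖ = ‖u - 1‖ * ‖(n : ℤ_[p])‖ := by
  have hu1 : ‖u‖ ≤ 1 := (norm_eq_one_of_norm_sub_one_lt (hu.trans_lt inv_prime_lt_one)).le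
  have hppow : ∀ e : ℕ, ‖u ^ p ^ e - 1‖ = ‖u - 1‖ * (p : ℝ)⁻¹ ^ e := by
    intro e
    induction e with
    | zero => simp
    | succ e ih =>
      rw [pow_succ, pow_mul, norm_pow_prime_sub_one hp ((norm_pow_sub_one_le hu1 _).trans hu), ih]
      ring
  rcases eq_or_ne n 0 with rfl | hn
  · simp
  obtain ⟨e, m, hm, rfl⟩ := Nat.exists_eq_pow_mul_and_not_dvd hn p (Fact.out : p.Prime).one_lt.ne'
  have hsmall : ‖u ^ p ^ e - 1‖ < 1 :=
    ((norm_pow_sub_one_le hu1 _).trans hu).trans_lt inv_prime_lt_one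
  rw [pow_mul, norm_pow_sub_one_of_not_dvd hsmall hm, hppow, Nat.cast_mul, Nat.cast_pow, norm_mul,
    norm_pow, PadicInt.norm_p,
    PadicInt.norm_natCast_eq_one_iff.mpr ((Nat.Prime.coprime_iff_not_dvd Fact.out).mpr hm), mul_one]

lemma norm_pow_sub_pow (hp : p ≠ 2) {u : K} (hu : ‖u - 1‖ ≤ (p : ℝ)⁻¹) (n m : ℕ) :
    ‖u ^ n - u ^ m‖ = ‖u - 1‖ * ‖(n : ℤ_[p]) - m‖ := by
  wlog hmn : m ≤ n generalizing n m
  · rw [norm_sub_rev (u ^ n), this m n (by omega), norm_sub_rev (m : ℤ_[p])]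
  rw [← Nat.sub_add_cancel hmn, pow_add, ← sub_one_mul, norm_mul, norm_pow,
    norm_eq_one_of_norm_sub_one_lt (hu.trans_lt inv_prime_lt_one), one_pow, mul_one,
    norm_pow_sub_one hp hu, Nat.cast_add, add_sub_cancel_right]

lemma exists_norm_pow_sub_eq_of_mem_closure (hp : p ≠ 2) {u : K} (hu : ‖u - 1‖ ≤ (p : ℝ)⁻¹)
    {w : K} (hw : w ∈ closure {y | ∃ n : ℕ, y = u ^ n}) :
    ∃ z : ℤ_[p], ∀ n : ℕ, ‖u ^ n - w‖ = ‖u - 1‖ * ‖(n : ℤ_[p]) - z‖ := by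
  obtain ⟨f, hf, hfw⟩ := mem_closure_iff_seq_limit.mp hw
  choose N hN using hf
  obtain ⟨z, φ, hφ, hNz⟩ := CompactSpace.tendsto_subseq fun k ↦ (N k : ℤ_[p])
  refine ⟨z, fun n ↦ tendsto_nhds_unique
    ((tendsto_const_nhds.sub (hfw.comp hφ.tendsto_atTop)).norm) ?_⟩
  simp only [Function.comp_def, hN, norm_pow_sub_pow hp hu]
  exact tendsto_const_nhds.mul (tendsto_const_nhds.sub hNz).norm

lemma norm_ratio_sub_half (hp : p ≠ 2) {q w : K} (hq : ‖q - 1‖ ≤ (p : ℝ)⁻¹) (hw : ‖w‖ = 1)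
    {z : ℤ_[p]} (hz : ∀ n : ℕ, ‖q ^ n - w‖ = ‖q - 1‖ * ‖(n : ℤ_[p]) - z‖) (lam : K) {n : ℕ}
    (hn : q ^ n - w ≠ 0) :
    ‖lam * (q ^ (n + 1) - w) / (q ^ n - w) - lam * (1 + q) / 2‖ = ‖lam‖ / ‖(n : ℤ_[p]) - z‖ := by
  have h2 : ‖(2 : K)‖ = 1 := by
    exact_mod_cast norm_natCast_eq_one (K := K) (p := p) (m := 2)
      fun h ↦ hp ((Nat.prime_dvd_prime_iff_eq Fact.out Nat.prime_two).mp h)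
  have hsum : ‖q ^ n + w‖ = 1 := by
    have hlt : ‖q ^ n - w‖ < ‖2 * w‖ := by
      rw [norm_mul, h2, hw, one_mul, hz]
      exact (mul_le_of_le_one_right (norm_nonneg _) (PadicInt.norm_le_one _)).trans_lt
        (hq.trans_lt inv_prime_lt_one)
    rw [show q ^ n + w = 2 * w + (q ^ n - w) by ring, norm_add_eq_left_of_norm_lt hlt, norm_mul,
      h2, hw, one_mul]
  obtain ⟨hq0, hnz⟩ := mul_ne_zero_iff.mp (hz n ▸ norm_ne_zero_iff.mpr hn)
  rw [ratio_sub_half_eq lam q w (norm_ne_zero_iff.mp (h2 ▸ one_ne_zero)) hn, norm_div, norm_mul,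
    norm_mul, norm_mul, hsum, h2, hz]
  field_simp

lemma norm_ratio_sub_ratio (hp : p ≠ 2) {q w : K} (hq : ‖q - 1‖ ≤ (p : ℝ)⁻¹) (hw : ‖w‖ = 1)
    {z : ℤ_[p]} (hz : ∀ n : ℕ, ‖q ^ n - w‖ = ‖q - 1‖ * ‖(n : ℤ_[p]) - z‖) (lam : K) {n m : ℕ}
    (hn : q ^ n - w ≠ 0) (hm : q ^ m - w ≠ 0) :
    ‖lam * (q ^ (n + 1) - w) / (q ^ n - w) - lam * (q ^ (m + 1) - w) / (q ^ m - w)‖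
      = ‖lam‖ * ‖(n : ℤ_[p]) - m‖ / (‖(n : ℤ_[p]) - z‖ * ‖(m : ℤ_[p]) - z‖) := by
  obtain ⟨hq0, hnz⟩ := mul_ne_zero_iff.mp (hz n ▸ norm_ne_zero_iff.mpr hn)
  rw [ratio_sub_ratio_eq lam q w hn hm, norm_div, norm_mul, norm_mul, norm_mul, norm_mul, hw,
    norm_pow_sub_pow hp hq, hz, hz, norm_sub_rev (m : ℤ_[p])]
  field_simp

theorem keplerSet_eq_of_binet (hp : p ≠ 2) {q w lam C : K} (hq : ‖q - 1‖ ≤ (p : ℝ)⁻¹) (hq1 : q ≠ 1)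
    {z : ℤ_[p]} (hz : ∀ n : ℕ, ‖q ^ n - w‖ = ‖q - 1‖ * ‖(n : ℤ_[p]) - z‖) (hC : C ≠ 0)
    (hlam : lam ≠ 0) {a : ℕ → ℚ_[p]}
    (ha : ∀ n, algebraMap ℚ_[p] K (a n) = C * lam ^ n * (q ^ n - w)) {t : ℚ_[p]}
    (ht : algebraMap ℚ_[p] K t = lam * (1 + q) / 2) {c : ℚ_[p]} (hc : ‖c‖ = ‖lam‖) :
    keplerSet p a = {x | ‖c‖ ≤ ‖x - t‖} := by
  have hw : ‖w‖ = 1 := by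
    have h0 := hz 0
    rw [pow_zero, Nat.cast_zero, zero_sub, norm_neg, norm_sub_rev] at h0
    refine norm_eq_one_of_norm_sub_one_lt (h0 ▸ ?_)
    exact (mul_le_of_le_one_right (norm_nonneg _) (PadicInt.norm_le_one z)).trans_lt
      (hq.trans_lt inv_prime_lt_one)
  have hne : ∀ n : ℕ, q ^ n - w ≠ 0 ↔ (n : ℤ_[p]) ≠ z := fun n ↦ by
    rw [← norm_ne_zero_iff, hz, mul_ne_zero_iff, norm_ne_zero_iff, norm_ne_zero_iff, sub_ne_zero,
      sub_ne_zero]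
    exact and_iff_right hq1
  have ha0 : ∀ n, a n ≠ 0 ↔ (n : ℤ_[p]) ≠ z := fun n ↦ by
    rw [← hne, ← (algebraMap ℚ_[p] K).injective.ne_iff, ha, map_zero]
    simp [hC, hlam]
  have hr : ∀ n : ℕ, (n : ℤ_[p]) ≠ z →
      algebraMap ℚ_[p] K (a (n + 1) / a n) = lam * (q ^ (n + 1) - w) / (q ^ n - w) := fun n hn ↦ by
    have := (hne n).mpr hn
    rw [map_div₀, ha, ha]
    field_simp
    ring
  have hset : {x | ∃ n, a n ≠ 0 ∧ x = a (n + 1) / a n}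
      = (fun n ↦ a (n + 1) / a n) '' {n | (n : ℤ_[p]) ≠ z} := by
    ext x
    simp [ha0, eq_comm]
  rw [keplerSet, hset]
  have hc0 : c ≠ 0 := norm_ne_zero_iff.mp (hc ▸ norm_ne_zero_iff.mpr hlam)
  refine Padic.closure_image_eq_of_norm_sub _ z t hc0 (fun n hn ↦ ?_) fun n m hn hm ↦ ?_
  · rw [← norm_algebraMap' K, map_sub, hr n hn, ht,
      norm_ratio_sub_half hp hq hw hz lam ((hne n).mpr hn), hc]
  · rw [← norm_algebraMap' K, map_sub, hr n hn, hr m hm,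
      norm_ratio_sub_ratio hp hq hw hz lam ((hne n).mpr hn) ((hne m).mpr hm), hc]

end PadicExtension

theorem stmt_2_general (p : ℕ) [Fact p.Prime] (hp : 3 ≤ p)
    -- `K` is `ℚ_p` or the unramified quadratic extension `ℚ_p(√d)` of `ℚ_p`
    (K : Type) [NormedField K] [Algebra ℚ_[p] K]
    (hiso : ∀ x : ℚ_[p], ‖algebraMap ℚ_[p] K x‖ = ‖x‖)
    (hna : ∀ x y : K, ‖x + y‖ ≤ max ‖x‖ ‖y‖)
    -- the sequence `a n = c₁ λ₁ ^ n + c₂ λ₂ ^ n`, with values in `ℚ_p`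
    (c₁ c₂ lam₁ lam₂ : K) (hc₂ : c₂ ≠ 0) (hlam₁ : lam₁ ≠ 0)
    (hnorm : ‖lam₁‖ = ‖lam₂‖)
    (hru : ∀ n : ℕ, 0 < n → (lam₂ / lam₁) ^ n ≠ 1)
    (a : ℕ → ℚ_[p])
    (ha : ∀ n : ℕ, algebraMap ℚ_[p] K (a n) = c₁ * lam₁ ^ n + c₂ * lam₂ ^ n)
    -- `l` is the order of `λ₂/λ₁` modulo `p`, and `l = 1`
    (l : ℕ) (hl : ‖(lam₂ / lam₁) ^ l - 1‖ ≤ (p : ℝ)⁻¹)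
    (hl1 : l = 1)
    -- `-c₁/c₂` belongs to the closure of `{(λ₂/λ₁) ^ n}`
    (hcl : -(c₁ / c₂) ∈ closure {z : K | ∃ n : ℕ, z = (lam₂ / lam₁) ^ n})
    -- `v₂ = ν_p(lam₂)` and `t = (λ₁ + λ₂)/2 ∈ ℚ_p`
    (v₂ : ℤ) (hv₂ : ‖lam₂‖ = (p : ℝ) ^ (-v₂))
    (t : ℚ_[p]) (ht : algebraMap ℚ_[p] K t = (lam₁ + lam₂) / 2) :
    keplerSet p a = {x : ℚ_[p] | ‖x - t‖ ≤ (p : ℝ) ^ (-(1 + v₂))}ᶜ := by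
  let _ : NormedAlgebra ℚ_[p] K :=
    { ‹Algebra ℚ_[p] K› with norm_smul_le := fun x y ↦ by rw [Algebra.smul_def, norm_mul, hiso] }
  have : IsUltrametricDist K := .isUltrametricDist_of_forall_norm_add_le_max_norm hna
  have hp2 : p ≠ 2 := by omega
  have hq : ‖lam₂ / lam₁ - 1‖ ≤ (p : ℝ)⁻¹ := by simpa [hl1] using hl
  obtain ⟨z, hz⟩ := PadicExtension.exists_norm_pow_sub_eq_of_mem_closure hp2 hq hcl
  have ha' : ∀ n, algebraMap ℚ_[p] K (a n) = c₂ * lam₁ ^ n * ((lam₂ / lam₁) ^ n - -(c₁ / c₂)) :=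
    fun n ↦ by
      rw [ha, div_pow]
      field_simp
      ring
  have ht' : algebraMap ℚ_[p] K t = lam₁ * (1 + lam₂ / lam₁) / 2 := by
    rw [ht]
    field_simp
  have hc : ‖(p : ℚ_[p]) ^ v₂‖ = ‖lam₁‖ := by rw [Padic.norm_p_zpow, hnorm, hv₂]
  have hq1 : lam₂ / lam₁ ≠ 1 := by simpa using hru 1 one_pos
  rw [PadicExtension.keplerSet_eq_of_binet hp2 hq hq1 hz hc₂ hlam₁ ha' ht' hc]
  ext x
  simp [Padic.norm_le_pow_iff_norm_lt_pow_add_one]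

theorem stmt_2 (p : ℕ) [Fact p.Prime] (hp : 3 ≤ p)
    -- `K` is `ℚ_p` or the unramified quadratic extension `ℚ_p(√d)` of `ℚ_p`
    (K : Type) [NormedField K] [Algebra ℚ_[p] K]
    (hiso : ∀ x : ℚ_[p], ‖algebraMap ℚ_[p] K x‖ = ‖x‖)
    (hna : ∀ x y : K, ‖x + y‖ ≤ max ‖x‖ ‖y‖)
    (hval : ∀ x : K, x ≠ 0 → ∃ m : ℤ, ‖x‖ = (p : ℝ) ^ (-m))
    (d : ℚ_[p]) (hd : ‖d‖ = 1) (hdns : ¬ ∃ y : ℚ_[p], y ^ 2 = d)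
    (sq : K) (hsq : sq ^ 2 = algebraMap ℚ_[p] K d)
    (hspan : ∀ x : K, ∃ u v : ℚ_[p], x = algebraMap ℚ_[p] K u + algebraMap ℚ_[p] K v * sq)
    -- the sequence `a n = c₁ λ₁ ^ n + c₂ λ₂ ^ n`, with values in `ℚ_p`
    (c₁ c₂ lam₁ lam₂ : K) (hc₁ : c₁ ≠ 0) (hc₂ : c₂ ≠ 0) (hlam₁ : lam₁ ≠ 0) (hlam₂ : lam₂ ≠ 0)
    (hnorm : ‖lam₁‖ = ‖lam₂‖) (hpos : 0 < ‖lam₂‖)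
    (hru : ∀ n : ℕ, 0 < n → (lam₂ / lam₁) ^ n ≠ 1)
    (a : ℕ → ℚ_[p])
    (ha : ∀ n : ℕ, algebraMap ℚ_[p] K (a n) = c₁ * lam₁ ^ n + c₂ * lam₂ ^ n)
    -- `l` is the order of `λ₂/λ₁` modulo `p`, and `l = 1`
    (l : ℕ) (hl0 : 0 < l) (hl : ‖(lam₂ / lam₁) ^ l - 1‖ ≤ (p : ℝ)⁻¹)
    (hlmin : ∀ m : ℕ, 0 < m → ‖(lam₂ / lam₁) ^ m - 1‖ ≤ (p : ℝ)⁻¹ → l ≤ m)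
    (hl1 : l = 1)
    -- `-c₁/c₂` belongs to the closure of `{(λ₂/λ₁) ^ n}`
    (hcl : -(c₁ / c₂) ∈ closure {z : K | ∃ n : ℕ, z = (lam₂ / lam₁) ^ n})
    -- `v₂ = ν_p(lam₂)` and `t = (λ₁ + λ₂)/2 ∈ ℚ_p`
    (v₂ : ℤ) (hv₂ : ‖lam₂‖ = (p : ℝ) ^ (-v₂))
    (t : ℚ_[p]) (ht : algebraMap ℚ_[p] K t = (lam₁ + lam₂) / 2) :
    keplerSet p a = {x : ℚ_[p] | ‖x - t‖ ≤ (p : ℝ) ^ (-(1 + v₂))}ᶜ :=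
  stmt_2_general p hp K hiso hna c₁ c₂ lam₁ lam₂ hc₂ hlam₁ hnorm hru a ha l hl hl1 hcl v₂ hv₂ t ht
end

section
/- Let p ≥ 3 be a prime, let ℚ_p(√d) be a ramified quadratic extension of ℚ_p, and let λ_1 = a + b√d and λ_2 = a − b√d with a, b ∈ ℚ_p, b ≠ 0, λ_1 ≠ 0, and suppose λ_2/λ_1 is not a root of unity. Then: (i) if ν_p(a) ≤ ν_p(b), then ν_π(λ_2/λ_1 − 1) is a positive odd integer; (ii) if ν_p(a) > ν_p(b), then ν_π((λ_2/λ_1)² − 1) is a positive odd integer. Consequently, the order l of λ_2/λ_1 modulo π is at most 2, and k = ν_π((λ_2/λ_1)^l − 1) is a positive odd integer. -/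
lemma my_ultra_max {K : Type} [NormedField K]
    (hna : ∀ x y : K, ‖x + y‖ ≤ max ‖x‖ ‖y‖) {x y : K} (h : ‖y‖ < ‖x‖) :
    ‖x + y‖ = ‖x‖ := by
  apply le_antisymm
  · exact (hna x y).trans (le_of_eq (max_eq_left h.le))
  · have h1 : ‖x‖ ≤ max ‖x + y‖ ‖y‖ := by
      have := hna (x + y) (-y); simpa using this
    rcases max_cases ‖x + y‖ ‖y‖ with ⟨he, _⟩ | ⟨he, _⟩
    · rwa [he] at h1
    · rw [he] at h1; exact absurd h1 (not_le.mpr h)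

theorem stmt_7 (p : ℕ) [Fact p.Prime] (hp : 3 ≤ p)
    -- `K` is a ramified quadratic extension `ℚ_p(√d)` of `ℚ_p`, `d ∈ p·ℤ_p^*`
    (K : Type) [NormedField K] [Algebra ℚ_[p] K]
    (hiso : ∀ x : ℚ_[p], ‖algebraMap ℚ_[p] K x‖ = ‖x‖)
    (hna : ∀ x y : K, ‖x + y‖ ≤ max ‖x‖ ‖y‖)
    (d : ℚ_[p]) (hd : ‖d‖ = (p : ℝ)⁻¹)
    (sq : K) (hsq : sq ^ 2 = algebraMap ℚ_[p] K d)
    (hspan : ∀ x : K, ∃ u v : ℚ_[p], x = algebraMap ℚ_[p] K u + algebraMap ℚ_[p] K v * sq)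
    -- `λ₁ = a + b√d`, `λ₂ = a - b√d`
    (a b : ℚ_[p]) (hb : b ≠ 0)
    (lam₁ lam₂ : K)
    (hlam₁ : lam₁ = algebraMap ℚ_[p] K a + algebraMap ℚ_[p] K b * sq)
    (hlam₂ : lam₂ = algebraMap ℚ_[p] K a - algebraMap ℚ_[p] K b * sq)
    (hlam₁0 : lam₁ ≠ 0)
    -- `λ₂/λ₁` is not a root of unity
    (hru : ∀ n : ℕ, 0 < n → (lam₂ / lam₁) ^ n ≠ 1)
    -- `l` is the order of `λ₂/λ₁` modulo `π`
    (l : ℕ) (hl0 : 0 < l) (hl : ‖(lam₂ / lam₁) ^ l - 1‖ ≤ (p : ℝ) ^ (-(1 / 2 : ℝ)))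
    (hlmin : ∀ m : ℕ, 0 < m → ‖(lam₂ / lam₁) ^ m - 1‖ ≤ (p : ℝ) ^ (-(1 / 2 : ℝ)) → l ≤ m) :
    -- (i): if `ν_p(a) ≤ ν_p(b)` then `ν_π(λ₂/λ₁ - 1)` is a positive odd integer
    (‖b‖ ≤ ‖a‖ →
      ∃ k₁ : ℕ, Odd k₁ ∧ 0 < k₁ ∧ ‖lam₂ / lam₁ - 1‖ = (p : ℝ) ^ (-(k₁ : ℝ) / 2)) ∧
    -- (ii): if `ν_p(a) > ν_p(b)` then `ν_π((λ₂/λ₁)² - 1)` is a positive odd integer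
    (‖a‖ < ‖b‖ →
      ∃ k₂ : ℕ, Odd k₂ ∧ 0 < k₂ ∧ ‖(lam₂ / lam₁) ^ 2 - 1‖ = (p : ℝ) ^ (-(k₂ : ℝ) / 2)) ∧
    -- consequently `l ≤ 2`, and `k = ν_π((λ₂/λ₁) ^ l - 1)` is a positive odd integer
    (l ≤ 2 ∧
      ∃ k : ℕ, Odd k ∧ 0 < k ∧ ‖(lam₂ / lam₁) ^ l - 1‖ = (p : ℝ) ^ (-(k : ℝ) / 2)) := by
  set A := algebraMap ℚ_[p] K with hA
  have hr1 : (1 : ℝ) < (p : ℝ) := by exact_mod_cast lt_of_lt_of_le (by norm_num) hp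
  have hr0 : (0 : ℝ) < (p : ℝ) := lt_trans one_pos hr1
  -- norm of 2
  have h2Q : ‖(2 : ℚ_[p])‖ = 1 := by
    have h1 : ‖((2:ℤ) : ℚ_[p])‖ ≤ 1 := Padic.norm_int_le_one 2
    have h2 : ¬ ‖((2:ℤ) : ℚ_[p])‖ < 1 := by
      rw [Padic.norm_intCast_lt_one_iff]
      intro h
      have := Int.le_of_dvd (by norm_num) h; omega
    push_cast at h1 h2
    linarith
  -- norm of sq
  have hsqn : ‖sq‖ = (p : ℝ) ^ (-(1/2) : ℝ) := by
    have h1 : ‖sq‖ ^ 2 = (p : ℝ)⁻¹ := by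
      rw [← norm_pow, hsq, hiso, hd]
    have h2 : ((p : ℝ) ^ (-(1/2) : ℝ)) ^ 2 = (p : ℝ)⁻¹ := by
      rw [← Real.rpow_natCast ((p:ℝ) ^ (-(1/2):ℝ)) 2, ← Real.rpow_mul hr0.le]
      norm_num [Real.rpow_neg_one]
    nlinarith [norm_nonneg sq, Real.rpow_pos_of_pos hr0 (-(1/2) : ℝ)]
  have hsq0 : sq ≠ 0 := by
    intro h
    rw [h] at hsqn
    simp only [norm_zero] at hsqn
    exact absurd hsqn.symm (ne_of_gt (Real.rpow_pos_of_pos hr0 _))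
  have hsqpos : (0:ℝ) < ‖sq‖ := norm_pos_iff.mpr hsq0
  have hsqlt1 : ‖sq‖ < 1 := by
    rw [hsqn]; exact Real.rpow_lt_one_of_one_lt_of_neg hr1 (by norm_num)
  -- difference and sum
  have hdiff : lam₂ - lam₁ = A ((-2) * b) * sq := by
    rw [hlam₁, hlam₂, map_mul, map_neg, map_ofNat]; ring
  have hsum : lam₂ + lam₁ = A (2 * a) := by
    rw [hlam₁, hlam₂, map_mul, map_ofNat]; ring
  have hdiffn : ‖lam₂ - lam₁‖ = ‖b‖ * ‖sq‖ := by
    rw [hdiff, norm_mul, hiso, norm_mul, norm_neg, h2Q, one_mul]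
  have hbn : ‖b‖ = (p:ℝ) ^ ((-b.valuation : ℤ) : ℝ) := by
    rw [Padic.norm_eq_zpow_neg_valuation hb, Real.rpow_intCast]
  -- (ii) hypothesis implies lam₁ norm
  have hlam₁b : ‖a‖ < ‖b‖ → ‖lam₁‖ = ‖b‖ * ‖sq‖ := by
    intro hab
    have ha0 : a ≠ 0 := by
      intro h
      apply hru 2 two_pos
      have hl1 : lam₁ = A b * sq := by rw [hlam₁, h, map_zero, zero_add]
      have hbs : A b * sq ≠ 0 := by rw [← hl1]; exact hlam₁0
      have hl2 : lam₂ = -(A b * sq) := by rw [hlam₂, h, map_zero, zero_sub]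
      rw [hl1, hl2, neg_div, div_self hbs]
      norm_num
    have han : ‖a‖ = (p:ℝ) ^ ((-a.valuation : ℤ) : ℝ) := by
      rw [Padic.norm_eq_zpow_neg_valuation ha0, Real.rpow_intCast]
    have hvab : b.valuation + 1 ≤ a.valuation := by
      rw [han, hbn] at hab
      have := (Real.rpow_lt_rpow_left_iff hr1).mp hab
      have h2 : (-a.valuation : ℝ) < (-b.valuation : ℝ) := by exact_mod_cast this
      have h3 : -a.valuation < -b.valuation := by exact_mod_cast h2
      omega
    have key : ‖a‖ < ‖b‖ * ‖sq‖ := by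
      rw [han, hbn, hsqn, ← Real.rpow_add hr0]
      apply (Real.rpow_lt_rpow_left_iff hr1).mpr
      push_cast
      have : (a.valuation : ℝ) ≥ (b.valuation : ℝ) + 1 := by exact_mod_cast hvab
      linarith
    rw [hlam₁, add_comm]
    rw [my_ultra_max hna (by rw [norm_mul, hiso, hiso]; exact key), norm_mul, hiso]
  -- case (i) core
  have case1 : ‖b‖ ≤ ‖a‖ →
      ∃ k₁ : ℕ, Odd k₁ ∧ 0 < k₁ ∧ ‖lam₂ / lam₁ - 1‖ = (p : ℝ) ^ (-(k₁ : ℝ) / 2) := by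
    intro hba
    have ha0 : a ≠ 0 := by
      intro h; rw [h, norm_zero] at hba
      exact hb (norm_le_zero_iff.mp hba)
    have han : ‖a‖ = (p:ℝ) ^ ((-a.valuation : ℤ) : ℝ) := by
      rw [Padic.norm_eq_zpow_neg_valuation ha0, Real.rpow_intCast]
    have hlam₁n : ‖lam₁‖ = ‖a‖ := by
      rw [hlam₁, ← hiso a]
      apply my_ultra_max hna
      rw [norm_mul, hiso, hiso]
      calc ‖b‖ * ‖sq‖ ≤ ‖a‖ * ‖sq‖ :=
            mul_le_mul_of_nonneg_right hba (norm_nonneg _)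
        _ < ‖a‖ * 1 := mul_lt_mul_of_pos_left hsqlt1 (norm_pos_iff.mpr ha0)
        _ = ‖a‖ := mul_one _
    have hnorm : ‖lam₂ / lam₁ - 1‖ = ‖b‖ * ‖sq‖ / ‖a‖ := by
      rw [div_sub_one hlam₁0, norm_div, hdiffn, hlam₁n]
    have hvab : a.valuation ≤ b.valuation := by
      rw [han, hbn] at hba
      have := (Real.rpow_le_rpow_left_iff hr1).mp hba
      have h2 : (-b.valuation : ℝ) ≤ (-a.valuation : ℝ) := by exact_mod_cast this
      have h3 : -b.valuation ≤ -a.valuation := by exact_mod_cast h2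
      omega
    set n : ℕ := (b.valuation - a.valuation).toNat with hn
    have hn' : (n : ℤ) = b.valuation - a.valuation := Int.toNat_of_nonneg (by omega)
    refine ⟨2 * n + 1, ⟨n, by ring⟩, by omega, ?_⟩
    rw [hnorm, han, hbn, hsqn, ← Real.rpow_add hr0, ← Real.rpow_sub hr0]
    congr 1
    have hnr : (n : ℝ) = (b.valuation : ℝ) - (a.valuation : ℝ) := by
      exact_mod_cast congrArg (Int.cast : ℤ → ℝ) hn'
    push_cast
    linarith
  -- case (ii) core
  have case2 : ‖a‖ < ‖b‖ →
      ∃ k₂ : ℕ, Odd k₂ ∧ 0 < k₂ ∧ ‖(lam₂ / lam₁) ^ 2 - 1‖ = (p : ℝ) ^ (-(k₂ : ℝ) / 2) := by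
    intro hab
    have ha0 : a ≠ 0 := by
      intro h
      apply hru 2 two_pos
      have hl1 : lam₁ = A b * sq := by rw [hlam₁, h, map_zero, zero_add]
      have hl2 : lam₂ = -(A b * sq) := by rw [hlam₂, h, map_zero, zero_sub]
      have hbs : A b * sq ≠ 0 := by rw [← hl1]; exact hlam₁0
      rw [hl1, hl2, neg_div, div_self hbs]
      norm_num
    have han : ‖a‖ = (p:ℝ) ^ ((-a.valuation : ℤ) : ℝ) := by
      rw [Padic.norm_eq_zpow_neg_valuation ha0, Real.rpow_intCast]
    have hL : ‖lam₁‖ = ‖b‖ * ‖sq‖ := hlam₁b hab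
    have hfact : (lam₂ / lam₁) ^ 2 - 1 = (lam₂ - lam₁) * (lam₂ + lam₁) / lam₁ ^ 2 := by
      field_simp
      ring
    have hnorm : ‖(lam₂ / lam₁) ^ 2 - 1‖ = (‖b‖ * ‖sq‖) * ‖a‖ / (‖b‖ * ‖sq‖) ^ 2 := by
      rw [hfact, norm_div, norm_mul, hdiffn, hsum, hiso, norm_mul, h2Q, one_mul,
        norm_pow, hL]
    have hbne : ‖b‖ ≠ 0 := norm_ne_zero_iff.mpr hb
    have hnorm2 : ‖(lam₂ / lam₁) ^ 2 - 1‖ = ‖a‖ / (‖b‖ * ‖sq‖) := by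
      rw [hnorm]
      field_simp
    have hvab : b.valuation + 1 ≤ a.valuation := by
      rw [han, hbn] at hab
      have := (Real.rpow_lt_rpow_left_iff hr1).mp hab
      have h2 : (-a.valuation : ℝ) < (-b.valuation : ℝ) := by exact_mod_cast this
      have h3 : -a.valuation < -b.valuation := by exact_mod_cast h2
      omega
    set m : ℕ := (a.valuation - b.valuation).toNat with hm
    have hm' : (m : ℤ) = a.valuation - b.valuation := Int.toNat_of_nonneg (by omega)
    have hm1 : 1 ≤ m := by omega
    refine ⟨2 * m - 1, ⟨m - 1, by omega⟩, by omega, ?_⟩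
    rw [hnorm2, han, hbn, hsqn, ← Real.rpow_add hr0, ← Real.rpow_sub hr0]
    congr 1
    have hmr : (m : ℝ) = (a.valuation : ℝ) - (b.valuation : ℝ) := by
      exact_mod_cast congrArg (Int.cast : ℤ → ℝ) hm'
    have h2m : ((2 * m - 1 : ℕ) : ℝ) = 2 * (m : ℝ) - 1 := by
      have hmm : 1 ≤ 2 * m := by omega
      rw [Nat.cast_sub hmm]; push_cast; ring
    rw [h2m]
    push_cast
    linarith
  refine ⟨case1, case2, ?_⟩
  -- part (iii)
  have hhalf : ∀ k : ℕ, 1 ≤ k → (p : ℝ) ^ (-(k : ℝ) / 2) ≤ (p : ℝ) ^ (-(1/2 : ℝ)) := by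
    intro k hk
    apply (Real.rpow_le_rpow_left_iff hr1).mpr
    have : (1 : ℝ) ≤ (k : ℝ) := by exact_mod_cast hk
    linarith
  rcases le_or_gt ‖b‖ ‖a‖ with hba | hab
  · obtain ⟨k₁, hodd, hpos, heq⟩ := case1 hba
    have hle : ‖(lam₂ / lam₁) ^ 1 - 1‖ ≤ (p : ℝ) ^ (-(1/2 : ℝ)) := by
      rw [pow_one, heq]; exact hhalf k₁ hpos
    have hl1 : l = 1 := le_antisymm (hlmin 1 one_pos hle) hl0
    exact ⟨by omega, k₁, hodd, hpos, by rw [hl1, pow_one]; exact heq⟩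
  · obtain ⟨k₂, hodd, hpos, heq⟩ := case2 hab
    have hle : ‖(lam₂ / lam₁) ^ 2 - 1‖ ≤ (p : ℝ) ^ (-(1/2 : ℝ)) := by
      rw [heq]; exact hhalf k₂ hpos
    have hl2 : l ≤ 2 := hlmin 2 two_pos hle
    have hne1 : l ≠ 1 := by
      intro h
      rw [h, pow_one] at hl
      have hn1 : ‖lam₂ / lam₁ - 1‖ = 1 := by
        rw [div_sub_one hlam₁0, norm_div, hdiffn, hlam₁b hab, div_self]
        exact ne_of_gt (mul_pos (norm_pos_iff.mpr hb) hsqpos)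
      rw [hn1] at hl
      have : (p : ℝ) ^ (-(1/2 : ℝ)) < 1 := Real.rpow_lt_one_of_one_lt_of_neg hr1 (by norm_num)
      linarith
    have hl2' : l = 2 := by omega
    exact ⟨hl2, k₂, hodd, hpos, by rw [hl2']; exact heq⟩
end

section
/- Let L(a,b) be a non-degenerate Lucas sequence of the first kind and let p ≥ 3 be a prime. If the characteristic roots λ_1, λ_2 of L(a,b) belong to ℚ_p (i.e. the discriminant D = a² + 4b is a square in ℚ_p), then the Kepler set of (L_n) is not all of ℚ_p: K((L_n)) ≠ ℚ_p. -/
/-- The Lucas sequence of the first kind `L(a,b)`: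
`L 0 = 0`, `L 1 = 1`, `L n = a L (n-1) + b L (n-2)`. -/
def lucasSeq (a b : ℤ) : ℕ → ℤ
  | 0 => 0
  | 1 => 1
  | n + 2 => a * lucasSeq a b (n + 1) + b * lucasSeq a b n

/-!
Let `μ₁, μ₂` be the characteristic roots, labelled so that `|μ₂| ≤ |μ₁|`, and `r n = L (n+1) / L n`.
Then `r n - μ₁ = μ₂ ^ n / L n` and `L n (μ₁ - μ₂) = μ₁ ^ n - μ₂ ^ n`. If `|μ₂| = |μ₁|`, the
ultrametric inequality gives `|μ₁ ^ n - μ₂ ^ n| ≤ |μ₂| ^ n`, so every ratio stays at distance at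
least `|μ₁ - μ₂|` from `μ₁`. If `|μ₂| < |μ₁|`, then `|L (n+1)| = |μ₁| ^ n`, so every ratio lies on
the sphere of radius `|μ₁| > 0`, which misses `0`. Either way the ratios lie in a closed proper
subset of the field.
-/

open IsUltrametricDist Metric Set

section Lucas

variable {R : Type*} [CommRing R] {a b : ℤ} {μ₁ μ₂ : R}

lemma lucasSeq_succ_sub_mul (hsum : μ₁ + μ₂ = a) (hprod : μ₁ * μ₂ = -b) (n : ℕ) :
    (lucasSeq a b (n + 1) : R) - μ₁ * lucasSeq a b n = μ₂ ^ n := by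
  induction n with
  | zero => simp [lucasSeq]
  | succ n ih =>
    have hrec : (lucasSeq a b (n + 2) : R) = a * lucasSeq a b (n + 1) + b * lucasSeq a b n := by
      simp [lucasSeq]
    linear_combination hrec - (lucasSeq a b (n + 1) : R) * hsum + (lucasSeq a b n : R) * hprod +
      μ₂ * ih

lemma lucasSeq_mul_sub (hsum : μ₁ + μ₂ = a) (hprod : μ₁ * μ₂ = -b) (n : ℕ) :
    (lucasSeq a b n : R) * (μ₁ - μ₂) = μ₁ ^ n - μ₂ ^ n := by
  linear_combination lucasSeq_succ_sub_mul (add_comm μ₁ μ₂ ▸ hsum) (mul_comm μ₁ μ₂ ▸ hprod) n -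
    lucasSeq_succ_sub_mul hsum hprod n

end Lucas

section Ultrametric

variable {K : Type*} [NormedField K] [IsUltrametricDist K] {a b : ℤ} {μ₁ μ₂ : K}

lemma norm_sub_le_max_of_isUltrametricDist (x y : K) : ‖x - y‖ ≤ max ‖x‖ ‖y‖ := by
  simpa only [sub_eq_add_neg, norm_neg] using norm_add_le_max x (-y)

lemma norm_sub_eq_of_norm_lt {x y : K} (h : ‖y‖ < ‖x‖) : ‖x - y‖ = ‖x‖ := by
  rw [sub_eq_add_neg, norm_add_eq_max_of_norm_ne_norm (by rw [norm_neg]; exact h.ne'), norm_neg,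
    max_eq_left h.le]

lemma norm_sub_le_norm_lucasSeq_ratio_sub (hsum : μ₁ + μ₂ = a) (hprod : μ₁ * μ₂ = -b)
    (hnorm : ‖μ₁‖ = ‖μ₂‖) {n : ℕ} (hn : (lucasSeq a b n : K) ≠ 0) :
    ‖μ₁ - μ₂‖ ≤ ‖(lucasSeq a b (n + 1) : K) / lucasSeq a b n - μ₁‖ := by
  have hratio : (lucasSeq a b (n + 1) : K) / lucasSeq a b n - μ₁ = μ₂ ^ n / lucasSeq a b n := by
    rw [← lucasSeq_succ_sub_mul hsum hprod n]
    field_simp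
  rw [hratio, norm_div, norm_pow, le_div_iff₀ (norm_pos_iff.mpr hn), mul_comm, ← norm_mul,
    lucasSeq_mul_sub hsum hprod]
  simpa only [norm_pow, hnorm, max_self] using norm_sub_le_max_of_isUltrametricDist (μ₁ ^ n) (μ₂ ^ n)

lemma norm_lucasSeq_succ (hsum : μ₁ + μ₂ = a) (hprod : μ₁ * μ₂ = -b) (hlt : ‖μ₂‖ < ‖μ₁‖)
    (n : ℕ) : ‖(lucasSeq a b (n + 1) : K)‖ = ‖μ₁‖ ^ n := by
  have hμ₁ : 0 < ‖μ₁‖ := (norm_nonneg μ₂).trans_lt hlt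
  have hpow : ‖μ₂ ^ (n + 1)‖ < ‖μ₁ ^ (n + 1)‖ := by
    simpa only [norm_pow] using pow_lt_pow_left₀ hlt (norm_nonneg μ₂) n.succ_ne_zero
  have h := congrArg norm (lucasSeq_mul_sub (R := K) hsum hprod (n + 1))
  rw [norm_mul, norm_sub_eq_of_norm_lt hlt, norm_sub_eq_of_norm_lt hpow, norm_pow, pow_succ] at h
  exact mul_right_cancel₀ hμ₁.ne' h

lemma norm_lucasSeq_ratio (hsum : μ₁ + μ₂ = a) (hprod : μ₁ * μ₂ = -b) (hlt : ‖μ₂‖ < ‖μ₁‖)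
    {n : ℕ} (hn : (lucasSeq a b n : K) ≠ 0) :
    ‖(lucasSeq a b (n + 1) : K) / lucasSeq a b n‖ = ‖μ₁‖ := by
  obtain _ | n := n
  · simp [lucasSeq] at hn
  have hμ₁ : ‖μ₁‖ ≠ 0 := ((norm_nonneg μ₂).trans_lt hlt).ne'
  rw [norm_div, norm_lucasSeq_succ hsum hprod hlt, norm_lucasSeq_succ hsum hprod hlt, pow_succ,
    mul_div_cancel_left₀ _ (pow_ne_zero n hμ₁)]

theorem closure_lucasSeq_ratios_ne_univ (hsum : μ₁ + μ₂ = a) (hprod : μ₁ * μ₂ = -b)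
    (hne : μ₁ ≠ μ₂) :
    closure {x : K | ∃ n : ℕ, (lucasSeq a b n : K) ≠ 0 ∧
      x = (lucasSeq a b (n + 1) : K) / lucasSeq a b n} ≠ univ := by
  wlog hle : ‖μ₂‖ ≤ ‖μ₁‖ generalizing μ₁ μ₂
  · exact this (add_comm μ₁ μ₂ ▸ hsum) (mul_comm μ₁ μ₂ ▸ hprod) hne.symm (not_le.mp hle).le
  intro huniv
  have closure_subset {t : Set K} (ht : IsClosed t)
      (hratio : ∀ n, (lucasSeq a b n : K) ≠ 0 → (lucasSeq a b (n + 1) : K) / lucasSeq a b n ∈ t)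
      (x : K) : x ∈ t :=
    closure_minimal (by rintro _ ⟨n, hn, rfl⟩; exact hratio n hn) ht (huniv ▸ mem_univ x)
  rcases hle.eq_or_lt with heq | hlt
  · have hμ := closure_subset isOpen_ball.isClosed_compl
      (fun n hn => by
        simpa [dist_eq_norm] using norm_sub_le_norm_lucasSeq_ratio_sub hsum hprod heq.symm hn) μ₁
    exact hμ (mem_ball_self (norm_pos_iff.mpr (sub_ne_zero.mpr hne)))
  · have h0 := closure_subset isClosed_sphere
      (fun n hn => mem_sphere_zero_iff_norm.mpr (norm_lucasSeq_ratio hsum hprod hlt hn)) 0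
    exact ((norm_nonneg μ₂).trans_lt hlt).ne (by simpa using h0)

end Ultrametric

theorem stmt_8_general (p : ℕ) [Fact p.Prime]
    (a b : ℤ) (ha : a ≠ 0)
    -- the discriminant `D = a² + 4b` is a square in `ℚ_p`, with square root `δ`,
    -- so the characteristic roots `λ₁, λ₂` lie in `ℚ_p`
    (δ : ℚ_[p]) (hδ : δ ^ 2 = ((a ^ 2 + 4 * b : ℤ) : ℚ_[p]))
    (lam₁ lam₂ : ℚ_[p])
    (hlam₁ : lam₁ = ((a : ℚ_[p]) + δ) / 2) (hlam₂ : lam₂ = ((a : ℚ_[p]) - δ) / 2)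
    -- `L(a,b)` is non-degenerate: `λ₂/λ₁` is not a root of unity
    (hnd : ∀ n : ℕ, 0 < n → (lam₂ / lam₁) ^ n ≠ 1) :
    keplerSet p (fun n => (lucasSeq a b n : ℚ_[p])) ≠ Set.univ := by
  have hsum : lam₁ + lam₂ = a := by rw [hlam₁, hlam₂]; ring
  have hprod : lam₁ * lam₂ = -b := by
    rw [hlam₁, hlam₂]
    push_cast at hδ
    linear_combination -hδ / 4
  have hne : lam₁ ≠ lam₂ := by
    rintro rfl
    have hlam : lam₁ = 0 := by
      by_contra h
      exact hnd 1 one_pos (by rw [pow_one, div_self h])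
    rw [hlam, add_zero] at hsum
    exact ha (by exact_mod_cast hsum.symm)
  exact closure_lucasSeq_ratios_ne_univ hsum hprod hne

theorem stmt_8 (p : ℕ) [Fact p.Prime] (hp : 3 ≤ p)
    (a b : ℤ) (ha : a ≠ 0) (hb : b ≠ 0)
    -- the discriminant `D = a² + 4b` is a square in `ℚ_p`, with square root `δ`,
    -- so the characteristic roots `λ₁, λ₂` lie in `ℚ_p`
    (δ : ℚ_[p]) (hδ : δ ^ 2 = ((a ^ 2 + 4 * b : ℤ) : ℚ_[p]))
    (lam₁ lam₂ : ℚ_[p])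
    (hlam₁ : lam₁ = ((a : ℚ_[p]) + δ) / 2) (hlam₂ : lam₂ = ((a : ℚ_[p]) - δ) / 2)
    -- `L(a,b)` is non-degenerate: `λ₂/λ₁` is not a root of unity
    (hnd : ∀ n : ℕ, 0 < n → (lam₂ / lam₁) ^ n ≠ 1) :
    keplerSet p (fun n => (lucasSeq a b n : ℚ_[p])) ≠ Set.univ :=
  stmt_8_general p a b ha δ hδ lam₁ lam₂ hlam₁ hlam₂ hnd
end

section
/- Let L(a,1) be a Lucas sequence of the first kind (b = 1), let p ≥ 3 be a prime with rank of appearance α_L(p) > 2, and suppose p² divides the discriminant D = a² + 4. Then the union of the closure in ℚ_p of the set {L_{n+1}/L_n : n ≥ 1} and the closure in ℚ_p of the set {L_{n+2}/L_n : n ≥ 1} equals all of ℚ_p. -/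
/-!
Put `c = a / 2` and `δ = (a² + 4) / a²`, so that `|c|_p = 1`, `|δ|_p ≤ p⁻²` and Binet's formula,
expanded binomially, reads `L_{N+1} = c ^ N F(N+1)` with `F(N) = ∑_j C(N, 2j+1) δ^j`.
Since `ν_p((2j+1)!) ≤ j` for `p ≥ 3`, the terms with `j ≥ 1` are `p⁻ʲ`-Lipschitz in `N`, so `F`
is the identity of `ℕ ⊂ ℤ_p` up to a `p⁻¹`-contraction. Given `y` with `|1 - y|_p ≥ 1`, the map
`n ↦ (F(n+r) - y F(n)) / (1 - y)` is again of this kind, and successive approximation (`ℕ` is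
dense in `ℤ_p`) drives it to `0`; thus `L_{n+r}/L_n = c^r F(n+r)/F(n)` comes arbitrarily close
to every `x` with `|x - c^r|_p ≥ 1`. Finally `c² ≡ -1 (mod p)` forces `|c - 1|_p = 1`, so every
`x` satisfies `|x - c|_p ≥ 1` or `|x - c²|_p ≥ 1`: the case `r = 1` or `r = 2`.
-/

open Finset

section OddBinomSum

variable {R : Type*} [CommRing R]

-- For `δ = s ^ 2` one has `2 * s * oddBinomSum δ N = (1 + s) ^ N - (1 - s) ^ N`.
def oddBinomSum (δ : R) (N : ℕ) : R :=
  ∑ j ∈ range N, (N.choose (2 * j + 1) : R) * δ ^ j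

theorem oddBinomSum_eq_sum_range (δ : R) {N M : ℕ} (h : N ≤ M) :
    oddBinomSum δ N = ∑ j ∈ range M, (N.choose (2 * j + 1) : R) * δ ^ j := by
  refine sum_subset (range_subset_range.2 h) fun j _ hj => ?_
  rw [mem_range, not_lt] at hj
  rw [Nat.choose_eq_zero_of_lt (by omega), Nat.cast_zero, zero_mul]

@[simp]
theorem oddBinomSum_zero (δ : R) : oddBinomSum δ 0 = 0 := by
  simp [oddBinomSum]

theorem oddBinomSum_one (δ : R) : oddBinomSum δ 1 = 1 := by
  simp [oddBinomSum]

theorem oddBinomSum_two (δ : R) : oddBinomSum δ 2 = 2 := by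
  simp [oddBinomSum, sum_range_succ]

theorem Nat.choose_add_two_add_choose (N k : ℕ) :
    (N + 2).choose (k + 3) + N.choose (k + 3) = 2 * (N + 1).choose (k + 3) + N.choose (k + 1) := by
  simp only [Nat.choose_succ_succ']
  ring

theorem oddBinomSum_add_two (δ : R) (N : ℕ) :
    oddBinomSum δ (N + 2) = 2 * oddBinomSum δ (N + 1) + (δ - 1) * oddBinomSum δ N := by
  have hterm : ∀ j : ℕ, ((N + 2).choose (2 * (j + 1) + 1) : R) * δ ^ (j + 1)
        + (N.choose (2 * (j + 1) + 1) : R) * δ ^ (j + 1)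
      = 2 * (((N + 1).choose (2 * (j + 1) + 1) : R) * δ ^ (j + 1))
        + δ * ((N.choose (2 * j + 1) : R) * δ ^ j) := by
    intro j
    have h := congrArg (Nat.cast : ℕ → R) (Nat.choose_add_two_add_choose N (2 * j))
    push_cast at h
    rw [show 2 * (j + 1) + 1 = 2 * j + 3 by ring]
    linear_combination δ ^ (j + 1) * h
  have key : ∑ j ∈ range (N + 2),
        (((N + 2).choose (2 * j + 1) : R) * δ ^ j + (N.choose (2 * j + 1) : R) * δ ^ j)
      = 2 * ∑ j ∈ range (N + 2), ((N + 1).choose (2 * j + 1) : R) * δ ^ j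
        + δ * ∑ j ∈ range (N + 1), (N.choose (2 * j + 1) : R) * δ ^ j := by
    rw [sum_range_succ', sum_range_succ' (fun j => ((N + 1).choose (2 * j + 1) : R) * δ ^ j),
      sum_congr rfl fun j _ => hterm j, sum_add_distrib, ← mul_sum, ← mul_sum]
    simp only [mul_zero, zero_add, Nat.choose_one_right, Nat.cast_add, Nat.cast_ofNat, pow_zero,
      mul_one, Nat.cast_one]
    ring
  rw [sum_add_distrib, ← oddBinomSum_eq_sum_range δ (N := N + 2) le_rfl,
    ← oddBinomSum_eq_sum_range δ (N := N) (by omega : N ≤ N + 2),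
    ← oddBinomSum_eq_sum_range δ (N := N + 1) (by omega : N + 1 ≤ N + 2),
    ← oddBinomSum_eq_sum_range δ (N := N) (by omega : N ≤ N + 1)] at key
  linear_combination key

theorem lucasSeq_succ_eq_pow_mul_oddBinomSum {a : ℤ} {c δ : R} (hac : (a : R) = 2 * c)
    (hcδ : c ^ 2 * (δ - 1) = 1) :
    ∀ N : ℕ, (lucasSeq a 1 (N + 1) : R) = c ^ N * oddBinomSum δ (N + 1)
  | 0 => by simp [lucasSeq, oddBinomSum_one]
  | 1 => by simp [lucasSeq, oddBinomSum_two, hac]; ring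
  | N + 2 => by
    have h1 := lucasSeq_succ_eq_pow_mul_oddBinomSum hac hcδ (N + 1)
    have h0 := lucasSeq_succ_eq_pow_mul_oddBinomSum hac hcδ N
    rw [lucasSeq, Int.cast_add, Int.cast_mul, one_mul, h1, h0, hac, oddBinomSum_add_two δ (N + 1)]
    linear_combination (-(c ^ N * oddBinomSum δ (N + 1))) * hcδ

end OddBinomSum

theorem lucasSeq_add_div_eq {K : Type*} [Field K] {a : ℤ} {c δ : K} (hac : (a : K) = 2 * c)
    (hcδ : c ^ 2 * (δ - 1) = 1) (r : ℕ) {n : ℕ} (hn : 1 ≤ n) :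
    (lucasSeq a 1 (n + r) : K) / lucasSeq a 1 n
      = c ^ r * (oddBinomSum δ (n + r) / oddBinomSum δ n) := by
  obtain ⟨N, rfl⟩ : ∃ N, n = N + 1 := ⟨n - 1, by omega⟩
  have hc : c ≠ 0 := by
    rintro rfl
    simp at hcδ
  rw [show N + 1 + r = N + r + 1 by ring, lucasSeq_succ_eq_pow_mul_oddBinomSum hac hcδ,
    lucasSeq_succ_eq_pow_mul_oddBinomSum hac hcδ, pow_add, mul_assoc,
    mul_div_mul_left _ _ (pow_ne_zero N hc), mul_div_assoc]

section UltrametricField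

variable {K : Type*} [NormedField K] [IsUltrametricDist K]

theorem norm_le_norm_one_sub {y : K} (hy : 1 ≤ ‖1 - y‖) : ‖y‖ ≤ ‖1 - y‖ := by
  calc ‖y‖ = ‖1 + -(1 - y)‖ := by ring_nf
    _ ≤ max ‖(1 : K)‖ ‖-(1 - y)‖ := IsUltrametricDist.norm_add_le_max _ _
    _ = ‖1 - y‖ := by rw [norm_one, norm_neg, max_eq_right hy]

theorem norm_eq_one_of_sq_mul_sub_one_eq_one {c δ : K} (hcδ : c ^ 2 * (δ - 1) = 1)
    (hδ : ‖δ‖ < 1) : ‖c‖ = 1 := by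
  have h1 : ‖δ - 1‖ = 1 := by
    rw [sub_eq_add_neg, IsUltrametricDist.norm_add_eq_max_of_norm_ne_norm
      (by rw [norm_neg, norm_one]; exact hδ.ne), norm_neg, norm_one, max_eq_right hδ.le]
  have h2 := congrArg norm hcδ
  rw [norm_mul, norm_pow, h1, mul_one, norm_one] at h2
  exact (pow_eq_one_iff_of_nonneg (norm_nonneg c) two_ne_zero).1 h2

theorem one_le_norm_sub_sq_of_norm_sub_lt_one {c x : K} (hc : ‖c‖ = 1) (hc1 : ‖c - 1‖ = 1)
    (hx : ‖x - c‖ < 1) : 1 ≤ ‖x - c ^ 2‖ := by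
  have h := IsUltrametricDist.norm_add_le_max (x - c) (-(x - c ^ 2))
  rw [show x - c + -(x - c ^ 2) = c * (c - 1) by ring, norm_mul, hc, hc1, one_mul, norm_neg] at h
  exact (le_max_iff.1 h).resolve_left hx.not_ge

end UltrametricField

open scoped Nat

section Padic

theorem inv_natCast_lt_one (p : ℕ) [Fact p.Prime] : (p : ℝ)⁻¹ < 1 :=
  Padic.norm_p (p := p) ▸ Padic.norm_p_lt_one

variable {p : ℕ} [Fact p.Prime]

theorem norm_two_eq_one (hp : 3 ≤ p) : ‖(2 : ℚ_[p])‖ = 1 := by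
  have h : ‖((2 : ℕ) : ℚ_[p])‖ = 1 :=
    Padic.norm_natCast_eq_one_iff.2 ((Nat.coprime_primes Fact.out Nat.prime_two).2 (by omega))
  rwa [Nat.cast_ofNat] at h

theorem norm_choose_sub_choose_mul_norm_factorial_le (u v k : ℕ) :
    ‖(u.choose k : ℚ_[p]) - v.choose k‖ * ‖(k ! : ℚ_[p])‖ ≤ ‖(u : ℚ_[p]) - v‖ := by
  obtain ⟨m, hm⟩ : (u : ℤ) - v ∣ (u.descFactorial k : ℤ) - v.descFactorial k := by
    simpa only [descPochhammer_eval_eq_descFactorial] using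
      (descPochhammer ℤ k).sub_dvd_eval_sub (u : ℤ) v
  have hm' : ((u.choose k : ℚ_[p]) - v.choose k) * k ! = ((u : ℚ_[p]) - v) * m := by
    have := congrArg (Int.cast : ℤ → ℚ_[p]) hm
    push_cast [Nat.descFactorial_eq_factorial_mul_choose] at this
    linear_combination this
  rw [← norm_mul, hm', norm_mul]
  exact mul_le_of_le_one_right (norm_nonneg _) (Padic.norm_int_le_one m)

theorem inv_pow_le_norm_factorial (hp : 3 ≤ p) (j : ℕ) :
    (p : ℝ)⁻¹ ^ j ≤ ‖((2 * j + 1)! : ℚ_[p])‖ := by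
  have hv : padicValNat p (2 * j + 1)! ≤ j := by
    have h := sub_one_mul_padicValNat_factorial (p := p) (2 * j + 1)
    have : 2 * padicValNat p (2 * j + 1)! ≤ (p - 1) * padicValNat p (2 * j + 1)! :=
      Nat.mul_le_mul_right _ (by omega)
    omega
  rw [Padic.norm_eq_zpow_neg_valuation (Nat.cast_ne_zero.2 (Nat.factorial_ne_zero _)),
    Padic.valuation_natCast, zpow_neg, ← inv_zpow, zpow_natCast]
  exact pow_le_pow_of_le_one (by positivity) (inv_natCast_lt_one p).le hv

theorem norm_choose_sub_choose_mul_pow_le (hp : 3 ≤ p) {δ : ℚ_[p]} (hδ : ‖δ‖ ≤ (p : ℝ)⁻¹ ^ 2)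
    (u v j : ℕ) :
    ‖((u.choose (2 * j + 1) : ℚ_[p]) - v.choose (2 * j + 1)) * δ ^ j‖
      ≤ (p : ℝ)⁻¹ ^ j * ‖(u : ℚ_[p]) - v‖ := by
  set C := (u.choose (2 * j + 1) : ℚ_[p]) - v.choose (2 * j + 1)
  have hC : ‖C‖ * (p : ℝ)⁻¹ ^ j ≤ ‖(u : ℚ_[p]) - v‖ :=
    (mul_le_mul_of_nonneg_left (inv_pow_le_norm_factorial hp j) (norm_nonneg _)).trans
      (norm_choose_sub_choose_mul_norm_factorial_le u v _)
  calc ‖C * δ ^ j‖ = ‖C‖ * ‖δ‖ ^ j := by rw [norm_mul, norm_pow]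
    _ ≤ ‖C‖ * ((p : ℝ)⁻¹ ^ 2) ^ j := by gcongr
    _ = (p : ℝ)⁻¹ ^ j * (‖C‖ * (p : ℝ)⁻¹ ^ j) := by ring
    _ ≤ (p : ℝ)⁻¹ ^ j * ‖(u : ℚ_[p]) - v‖ := by gcongr

def IsNearIdentity (f : ℕ → ℚ_[p]) : Prop :=
  ∀ u v : ℕ, ‖f u - f v - (u - v)‖ ≤ (p : ℝ)⁻¹ * ‖(u : ℚ_[p]) - v‖

theorem isNearIdentity_oddBinomSum (hp : 3 ≤ p) {δ : ℚ_[p]} (hδ : ‖δ‖ ≤ (p : ℝ)⁻¹ ^ 2) :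
    IsNearIdentity (oddBinomSum δ) := by
  intro u v
  have hsum : oddBinomSum δ u - oddBinomSum δ v - (u - v) = ∑ j ∈ range (u + v),
      ((u.choose (2 * (j + 1) + 1) : ℚ_[p]) - v.choose (2 * (j + 1) + 1)) * δ ^ (j + 1) := by
    rw [oddBinomSum_eq_sum_range δ (M := u + v + 1) (by omega),
      oddBinomSum_eq_sum_range δ (M := u + v + 1) (by omega), ← sum_sub_distrib, sum_range_succ']
    simp [sub_mul]
  rw [hsum]
  refine IsUltrametricDist.norm_sum_le_of_forall_le_of_nonneg (by positivity) fun j _ => ?_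
  refine (norm_choose_sub_choose_mul_pow_le hp hδ u v (j + 1)).trans ?_
  gcongr
  exact pow_le_of_le_one (by positivity) (inv_natCast_lt_one p).le (by omega)

theorem exists_natCast_norm_sub_lt {z : ℚ_[p]} (hz : ‖z‖ ≤ 1) {ε : ℝ} (hε : 0 < ε) :
    ∃ m : ℕ, ‖(m : ℚ_[p]) - z‖ < ε := by
  obtain ⟨m, hm⟩ := PadicInt.denseRange_natCast.exists_dist_lt (show ℤ_[p] from ⟨z, hz⟩) hε
  refine ⟨m, ?_⟩
  rwa [dist_comm, dist_eq_norm, PadicInt.norm_def, PadicInt.coe_sub, PadicInt.coe_natCast] at hm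

namespace IsNearIdentity

variable {f : ℕ → ℚ_[p]}

theorem norm_eq (hf : IsNearIdentity f) (h0 : f 0 = 0) (N : ℕ) : ‖f N‖ = ‖(N : ℚ_[p])‖ := by
  rcases eq_or_ne N 0 with rfl | hN
  · simp [h0]
  apply Padic.norm_eq_of_norm_sub_lt_right
  have h := hf N 0
  rw [h0, Nat.cast_zero, sub_zero, sub_zero] at h
  exact h.trans_lt (mul_lt_of_lt_one_left (norm_pos_iff.2 (Nat.cast_ne_zero.2 hN))
    (inv_natCast_lt_one p))

theorem shift_sub_mul_div (hf : IsNearIdentity f) (r : ℕ) {y : ℚ_[p]} (hy : 1 ≤ ‖1 - y‖) :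
    IsNearIdentity fun n => (f (n + r) - y * f n) / (1 - y) := by
  intro u v
  have hy0 : 1 - y ≠ 0 := norm_pos_iff.1 (by linarith)
  have hshift := hf (u + r) (v + r)
  rw [Nat.cast_add, Nat.cast_add, add_sub_add_right_eq_sub] at hshift
  have e : (f (u + r) - y * f u) / (1 - y) - (f (v + r) - y * f v) / (1 - y) - (u - v)
      = ((f (u + r) - f (v + r) - (u - v)) + -y * (f u - f v - (u - v))) / (1 - y) := by
    field_simp
    ring
  rw [e, norm_div, div_le_iff₀ (by linarith)]
  refine (IsUltrametricDist.norm_add_le_max _ _).trans (max_le ?_ ?_)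
  · exact hshift.trans (le_mul_of_one_le_right (by positivity) hy)
  · rw [norm_mul, norm_neg, mul_comm _ ‖1 - y‖]
    exact mul_le_mul (norm_le_norm_one_sub hy) (hf u v) (norm_nonneg _) (norm_nonneg _)

theorem exists_norm_le_inv_pow (hf : IsNearIdentity f) (h0 : ‖f 0‖ ≤ 1) (k : ℕ) :
    ∃ N, 1 ≤ N ∧ ‖f N‖ ≤ (p : ℝ)⁻¹ ^ k := by
  have hq := (inv_natCast_lt_one p).le
  have hq0 : 0 < (p : ℝ)⁻¹ := inv_pos.2 (Nat.cast_pos.2 (Fact.out : p.Prime).pos)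
  induction k with
  | zero =>
    have h1 := hf 1 0
    rw [Nat.cast_one, Nat.cast_zero, sub_zero, norm_one, mul_one] at h1
    refine ⟨1, le_rfl, ?_⟩
    calc ‖f 1‖ = ‖(f 1 - f 0 - 1) + (f 0 + 1)‖ := by ring_nf
      _ ≤ max ‖f 1 - f 0 - 1‖ ‖f 0 + 1‖ := IsUltrametricDist.norm_add_le_max _ _
      _ ≤ 1 := max_le (h1.trans hq) ((IsUltrametricDist.norm_add_le_max _ _).trans
          (max_le h0 norm_one.le))
      _ = (p : ℝ)⁻¹ ^ 0 := (pow_zero _).symm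
  | succ k ih =>
    obtain ⟨N, hN, hfN⟩ := ih
    have hfN1 : ‖-f N‖ ≤ 1 := by rw [norm_neg]; exact hfN.trans (pow_le_one₀ (by positivity) hq)
    obtain ⟨m, hm⟩ := exists_natCast_norm_sub_lt hfN1 (ε := (p : ℝ)⁻¹ ^ (k + 1)) (by positivity)
    rw [sub_neg_eq_add] at hm
    have hmk : ‖(m : ℚ_[p])‖ ≤ (p : ℝ)⁻¹ ^ k :=
      calc ‖(m : ℚ_[p])‖ = ‖(m + f N) + -f N‖ := by ring_nf
        _ ≤ max ‖(m : ℚ_[p]) + f N‖ ‖-f N‖ := IsUltrametricDist.norm_add_le_max _ _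
        _ ≤ (p : ℝ)⁻¹ ^ k := max_le (hm.le.trans (pow_le_pow_of_le_one (by positivity) hq
          (Nat.le_succ k))) (by rwa [norm_neg])
    have hstep := hf (N + m) N
    rw [Nat.cast_add, add_sub_cancel_left] at hstep
    refine ⟨N + m, by omega, ?_⟩
    calc ‖f (N + m)‖ = ‖(f (N + m) - f N - m) + (m + f N)‖ := by ring_nf
      _ ≤ max ‖f (N + m) - f N - m‖ ‖(m : ℚ_[p]) + f N‖ := IsUltrametricDist.norm_add_le_max _ _
      _ ≤ (p : ℝ)⁻¹ ^ (k + 1) := by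
        refine max_le ?_ hm.le
        rw [pow_succ']
        exact hstep.trans (mul_le_mul_of_nonneg_left hmk (by positivity))

theorem exists_norm_lt (hf : IsNearIdentity f) (h0 : ‖f 0‖ ≤ 1) {ε : ℝ} (hε : 0 < ε) :
    ∃ N, 1 ≤ N ∧ ‖f N‖ < ε := by
  obtain ⟨k, hk⟩ := exists_pow_lt_of_lt_one hε (inv_natCast_lt_one p)
  obtain ⟨N, hN, hfN⟩ := hf.exists_norm_le_inv_pow h0 k
  exact ⟨N, hN, hfN.trans_lt hk⟩

theorem norm_sub_div_le (hf : IsNearIdentity f) (h0 : f 0 = 0) {r : ℕ} (hr : ‖(r : ℚ_[p])‖ = 1)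
    {y : ℚ_[p]} (hy : 1 ≤ ‖1 - y‖) {n : ℕ} (hn : ‖f (n + r) - y * f n‖ < 1) :
    ‖y - f (n + r) / f n‖ ≤ ‖1 - y‖ * ‖f (n + r) - y * f n‖ := by
  -- if `p ∣ n`, then `f (n + r)` is a unit, hence so is `y * f n`
  have hlow : 1 ≤ ‖1 - y‖ * ‖(n : ℚ_[p])‖ := by
    rcases lt_or_ge ‖(n : ℚ_[p])‖ 1 with hn1 | hn1
    · have hnr : ‖f (n + r)‖ = 1 := by
        rw [hf.norm_eq h0, Nat.cast_add, add_comm,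
          IsUltrametricDist.norm_add_eq_max_of_norm_ne_norm (by rw [hr]; exact hn1.ne'), hr,
          max_eq_left hn1.le]
      have h1 : 1 ≤ ‖y * f n‖ := by
        by_contra! h
        have := IsUltrametricDist.norm_add_le_max (f (n + r) - y * f n) (y * f n)
        rw [sub_add_cancel, hnr] at this
        exact (max_lt hn h).not_ge this
      rw [norm_mul, hf.norm_eq h0] at h1
      exact h1.trans (mul_le_mul_of_nonneg_right (norm_le_norm_one_sub hy) (norm_nonneg _))
    · exact one_le_mul_of_one_le_of_one_le hy hn1
  have hfn : 0 < ‖f n‖ :=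
    hf.norm_eq h0 n ▸ pos_of_mul_pos_right (one_pos.trans_le hlow) (norm_nonneg _)
  rw [show y - f (n + r) / f n = -(f (n + r) - y * f n) / f n by
      field_simp [norm_pos_iff.1 hfn]; ring,
    norm_div, norm_neg, div_le_iff₀ hfn, hf.norm_eq h0]
  calc ‖f (n + r) - y * f n‖ = ‖f (n + r) - y * f n‖ * 1 := (mul_one _).symm
    _ ≤ ‖f (n + r) - y * f n‖ * (‖1 - y‖ * ‖(n : ℚ_[p])‖) := by gcongr
    _ = _ := by ring

theorem exists_norm_sub_div_lt (hf : IsNearIdentity f) (h0 : f 0 = 0) {r : ℕ}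
    (hr : ‖(r : ℚ_[p])‖ = 1) {y : ℚ_[p]} (hy : 1 ≤ ‖1 - y‖) {ε : ℝ} (hε : 0 < ε) :
    ∃ n, 1 ≤ n ∧ ‖y - f (n + r) / f n‖ < ε := by
  set S := ‖1 - y‖
  have hS : 0 < S := one_pos.trans_le hy
  have hg0 : ‖(f (0 + r) - y * f 0) / (1 - y)‖ ≤ 1 := by
    rw [zero_add, h0, mul_zero, sub_zero, norm_div, hf.norm_eq h0, hr, div_le_one hS]
    exact hy
  obtain ⟨n, hn, hgn⟩ := (hf.shift_sub_mul_div r hy).exists_norm_lt hg0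
    (lt_min (div_pos hε (mul_pos hS hS)) (inv_pos.2 hS))
  have hg : ‖f (n + r) - y * f n‖ = S * ‖(f (n + r) - y * f n) / (1 - y)‖ := by
    rw [norm_div, mul_div_cancel₀ _ hS.ne']
  refine ⟨n, hn, (hf.norm_sub_div_le h0 hr hy ?_).trans_lt ?_⟩
  · rw [hg, ← mul_inv_cancel₀ hS.ne']
    exact mul_lt_mul_of_pos_left (hgn.trans_le (min_le_right _ _)) hS
  · calc S * ‖f (n + r) - y * f n‖ < S * (S * (ε / (S * S))) := by
          rw [hg]; gcongr; exact hgn.trans_le (min_le_left _ _)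
      _ = ε := by field_simp

end IsNearIdentity

theorem mem_closure_lucasSeq_div (hp : 3 ≤ p) {a : ℤ} {c δ : ℚ_[p]} (hac : (a : ℚ_[p]) = 2 * c)
    (hcδ : c ^ 2 * (δ - 1) = 1) (hδ : ‖δ‖ ≤ (p : ℝ)⁻¹ ^ 2) {r : ℕ} (hr : ‖(r : ℚ_[p])‖ = 1)
    {x : ℚ_[p]} (hx : 1 ≤ ‖x - c ^ r‖) :
    x ∈ closure {t : ℚ_[p] | ∃ n : ℕ, 1 ≤ n ∧
      t = (lucasSeq a 1 (n + r) : ℚ_[p]) / (lucasSeq a 1 n : ℚ_[p])} := by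
  have hc := norm_eq_one_of_sq_mul_sub_one_eq_one hcδ
    (hδ.trans_lt (pow_lt_one₀ (by positivity) (inv_natCast_lt_one p) two_ne_zero))
  have hcr : ‖c ^ r‖ = 1 := by rw [norm_pow, hc, one_pow]
  have hcr0 : c ^ r ≠ 0 := norm_ne_zero_iff.1 (hcr ▸ one_ne_zero)
  obtain ⟨y, rfl⟩ : ∃ y, x = c ^ r * y := ⟨x / c ^ r, (mul_div_cancel₀ x hcr0).symm⟩
  have hy : ‖1 - y‖ = ‖c ^ r * y - c ^ r‖ := by
    rw [← mul_sub_one, norm_mul, hcr, one_mul, norm_sub_rev]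
  rw [Metric.mem_closure_iff]
  intro ε hε
  obtain ⟨n, hn, hyn⟩ := (isNearIdentity_oddBinomSum hp hδ).exists_norm_sub_div_lt
    (oddBinomSum_zero δ) hr (hy ▸ hx) hε
  refine ⟨_, ⟨n, hn, rfl⟩, ?_⟩
  rw [lucasSeq_add_div_eq hac hcδ r hn, dist_eq_norm, ← mul_sub, norm_mul, hcr, one_mul]
  exact hyn

theorem norm_sub_one_eq_one (hp : 3 ≤ p) {c δ : ℚ_[p]} (hcδ : c ^ 2 * (δ - 1) = 1)
    (hδ : ‖δ‖ < 1) : ‖c - 1‖ = 1 := by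
  have hc := norm_eq_one_of_sq_mul_sub_one_eq_one hcδ hδ
  have hle : ∀ s : ℚ_[p], ‖s‖ ≤ 1 → ‖c + s‖ ≤ 1 := fun s hs =>
    (IsUltrametricDist.norm_add_le_max _ _).trans (max_le hc.le hs)
  refine le_antisymm (sub_eq_add_neg c 1 ▸ hle (-1) (by rw [norm_neg, norm_one]))
    (not_lt.1 fun h1 => ?_)
  have h2 : ‖(2 : ℚ_[p])‖ < 1 := by
    calc ‖(2 : ℚ_[p])‖ = ‖c ^ 2 * δ + -((c - 1) * (c + 1))‖ := by
          congr 1; linear_combination -hcδ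
      _ ≤ max ‖c ^ 2 * δ‖ ‖-((c - 1) * (c + 1))‖ := IsUltrametricDist.norm_add_le_max _ _
      _ < 1 := by
        rw [norm_neg, norm_mul, norm_mul, norm_pow, hc, one_pow, one_mul]
        exact max_lt hδ (mul_lt_one_of_nonneg_of_lt_one_left (norm_nonneg _) h1
          (hle 1 norm_one.le))
  exact h2.ne (norm_two_eq_one hp)

theorem norm_intCast_eq_one_of_sq_dvd_sq_add_four (hp : 3 ≤ p) {a : ℤ}
    (hD : (p : ℤ) ^ 2 ∣ a ^ 2 + 4) : ‖(a : ℚ_[p])‖ = 1 := by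
  refine le_antisymm (Padic.norm_int_le_one a) (not_lt.1 fun h => ?_)
  have h4 : (p : ℤ) ∣ 2 ^ 2 := by
    have hpD := (dvd_pow_self (p : ℤ) two_ne_zero).trans hD
    rwa [Int.dvd_add_right (dvd_pow (Padic.norm_intCast_lt_one_iff.1 h) two_ne_zero)] at hpD
  have h2 := Int.le_of_dvd two_pos ((Nat.prime_iff_prime_int.1 Fact.out).dvd_of_dvd_pow h4)
  omega

end Padic

theorem stmt_12_general (p : ℕ) [Fact p.Prime] (hp : 3 ≤ p)
    (a : ℤ)
    -- `p²` divides the discriminant `D = a² + 4`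
    (hD : (p : ℤ) ^ 2 ∣ (a ^ 2 + 4)) :
    closure {x : ℚ_[p] | ∃ n : ℕ, 1 ≤ n ∧
        x = (lucasSeq a 1 (n + 1) : ℚ_[p]) / (lucasSeq a 1 n : ℚ_[p])} ∪
      closure {x : ℚ_[p] | ∃ n : ℕ, 1 ≤ n ∧
        x = (lucasSeq a 1 (n + 2) : ℚ_[p]) / (lucasSeq a 1 n : ℚ_[p])} = Set.univ := by
  have ha := norm_intCast_eq_one_of_sq_dvd_sq_add_four hp hD
  have ha0 : (a : ℚ_[p]) ≠ 0 := norm_ne_zero_iff.1 (ha ▸ one_ne_zero)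
  set c : ℚ_[p] := a / 2
  set δ : ℚ_[p] := ((a ^ 2 + 4 : ℤ) : ℚ_[p]) / (a : ℚ_[p]) ^ 2
  have hac : (a : ℚ_[p]) = 2 * c := (mul_div_cancel₀ _ two_ne_zero).symm
  have hcδ : c ^ 2 * (δ - 1) = 1 := by
    simp only [c, δ]
    field_simp
    push_cast
    ring
  have hδ : ‖δ‖ ≤ (p : ℝ)⁻¹ ^ 2 := by
    rw [norm_div, norm_pow, ha, one_pow, div_one, inv_pow, ← zpow_natCast, ← zpow_neg]
    exact (Padic.norm_int_le_pow_iff_dvd _ 2).2 hD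
  have hδ1 : ‖δ‖ < 1 :=
    hδ.trans_lt (pow_lt_one₀ (by positivity) (inv_natCast_lt_one p) two_ne_zero)
  refine Set.eq_univ_of_forall fun x => ?_
  by_cases hx : 1 ≤ ‖x - c‖
  · exact Or.inl (mem_closure_lucasSeq_div hp hac hcδ hδ (r := 1) (by simp) (by rwa [pow_one]))
  · refine Or.inr (mem_closure_lucasSeq_div hp hac hcδ hδ (r := 2)
      (by rw [Nat.cast_ofNat]; exact norm_two_eq_one hp) ?_)
    exact one_le_norm_sub_sq_of_norm_sub_lt_one (norm_eq_one_of_sq_mul_sub_one_eq_one hcδ hδ1)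
      (norm_sub_one_eq_one hp hcδ hδ1) (not_le.1 hx)

theorem stmt_12 (p : ℕ) [Fact p.Prime] (hp : 3 ≤ p)
    (a : ℤ) (ha : a ≠ 0)
    -- `α` is the rank of appearance of `p` in `L(a,1)`, and `α > 2`
    (α : ℕ) (hα0 : 0 < α) (hαdvd : (p : ℤ) ∣ lucasSeq a 1 α)
    (hαmin : ∀ m : ℕ, 0 < m → (p : ℤ) ∣ lucasSeq a 1 m → α ≤ m)
    (hα2 : 2 < α)
    -- `p²` divides the discriminant `D = a² + 4`
    (hD : (p : ℤ) ^ 2 ∣ (a ^ 2 + 4)) :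
    closure {x : ℚ_[p] | ∃ n : ℕ, 1 ≤ n ∧
        x = (lucasSeq a 1 (n + 1) : ℚ_[p]) / (lucasSeq a 1 n : ℚ_[p])} ∪
      closure {x : ℚ_[p] | ∃ n : ℕ, 1 ≤ n ∧
        x = (lucasSeq a 1 (n + 2) : ℚ_[p]) / (lucasSeq a 1 n : ℚ_[p])} = Set.univ :=
  stmt_12_general p hp a hD
end

section
/- Let p ≥ 3 be a prime, let λ ∈ ℤ_p^* be a unit that is not a root of unity, let l be the order of λ modulo p (the least positive integer with ν_p(λ^l − 1) ≥ 1), and let k = ν_p(λ^l − 1). Then the closure in ℚ_p of the set {λ^n : n ∈ ℕ} (equivalently, the closed subgroup of ℤ_p^* generated by λ) equals the disjoint union ⨆_{i=0}^{l−1} (λ^i + p^k·ℤ_p). -/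
/-!
Put `g = λ ^ l`, so that `‖g - 1‖ = p ^ (-k) ≤ p⁻¹`. For odd `p` the sum `∑_{i<p} g ^ i` has norm
exactly `‖p‖`, hence `‖g ^ p - 1‖ = p⁻¹ ‖g - 1‖` and `g ^ (p ^ N)` lies at distance exactly
`p ^ (-N) ‖g - 1‖` from `1`. Choosing the exponent digit by digit, the powers of `g` approximate
every point of the ball `B(1, ‖g - 1‖)` arbitrarily well, so their closure is that ball.
The powers of `λ` are the union of the translates `λ ^ i • {g ^ m}` for `i < l`, whose closures
are the balls `B(λ ^ i, p ^ (-k))`; these are disjoint because, by minimality of `l`,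
`‖λ ^ j - λ ^ i‖ = ‖λ ^ (j - i) - 1‖ > p⁻¹` for `i < j < l`.
-/

open Metric IsUltrametricDist Filter Pointwise

section Ultrametric

variable {R : Type*} [NormedRing R] [NormOneClass R] [IsUltrametricDist R]

theorem norm_eq_one_of_norm_sub_one_lt_one {y : R} (hy : ‖y - 1‖ < 1) : ‖y‖ = 1 := by
  rw [← sub_add_cancel y 1, norm_add_eq_max_of_norm_ne_norm (by simpa using hy.ne), norm_one,
    max_eq_right hy.le]

theorem norm_pow_sub_one_le {y : R} (hy : ‖y‖ ≤ 1) (m : ℕ) : ‖y ^ m - 1‖ ≤ ‖y - 1‖ := by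
  rw [← geom_sum_mul]
  refine (norm_mul_le _ _).trans (mul_le_of_le_one_left (norm_nonneg _) ?_)
  exact norm_sum_le_of_forall_le_of_nonneg zero_le_one fun i _ =>
    (norm_pow_le y i).trans (pow_le_one₀ (norm_nonneg y) hy)

theorem norm_pow_sub_one_sub_mul_le {y : R} (hy : ‖y‖ ≤ 1) (m : ℕ) :
    ‖y ^ m - 1 - m * (y - 1)‖ ≤ ‖y - 1‖ ^ 2 := by
  have hsum : y ^ m - 1 - m * (y - 1) = (∑ i ∈ Finset.range m, (y ^ i - 1)) * (y - 1) := by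
    rw [Finset.sum_sub_distrib, Finset.sum_const, Finset.card_range, sub_mul, geom_sum_mul,
      nsmul_eq_mul, mul_one]
  rw [hsum, sq]
  exact (norm_mul_le _ _).trans <| mul_le_mul_of_nonneg_right
    (norm_sum_le_of_forall_le_of_nonneg (norm_nonneg _) fun i _ => norm_pow_sub_one_le hy i)
    (norm_nonneg _)

end Ultrametric

namespace Padic

variable {p : ℕ} [hp : Fact p.Prime]

theorem inv_prime_lt_one : (p : ℝ)⁻¹ < 1 :=
  inv_lt_one_of_one_lt₀ (mod_cast hp.out.one_lt)

theorem norm_sum_range_natCast_lt_one (hp2 : p ≠ 2) : ‖∑ i ∈ Finset.range p, (i : ℚ_[p])‖ < 1 := by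
  rw [← Nat.cast_sum, norm_natCast_lt_one_iff]
  refine ((Nat.coprime_primes hp.out Nat.prime_two).mpr hp2).dvd_of_dvd_mul_right ?_
  rw [Finset.sum_range_id_mul_two]
  exact dvd_mul_right p _

-- `∑_{i<p} y^i = p + ∑_{i<p} (y^i - 1 - i (y - 1)) + (∑_{i<p} i) (y - 1)`, and both error terms
-- are smaller than `‖p‖ = p⁻¹`.
theorem norm_geom_sum_prime (hp2 : p ≠ 2) {y : ℚ_[p]} (hy : ‖y - 1‖ ≤ (p : ℝ)⁻¹) :
    ‖∑ i ∈ Finset.range p, y ^ i‖ = (p : ℝ)⁻¹ := by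
  have hp0 : (0 : ℝ) < (p : ℝ)⁻¹ := by simpa using hp.out.pos
  have hy1 : ‖y‖ ≤ 1 := (norm_eq_one_of_norm_sub_one_lt_one (hy.trans_lt inv_prime_lt_one)).le
  have hsplit : ∑ i ∈ Finset.range p, y ^ i = p + ((∑ i ∈ Finset.range p,
      (y ^ i - 1 - i * (y - 1))) + (∑ i ∈ Finset.range p, (i : ℚ_[p])) * (y - 1)) := by
    simp only [Finset.sum_sub_distrib, Finset.sum_mul, Finset.sum_const, Finset.card_range,
      nsmul_eq_mul, mul_one]
    ring
  have hsq : ‖∑ i ∈ Finset.range p, (y ^ i - 1 - i * (y - 1))‖ < (p : ℝ)⁻¹ :=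
    calc _ ≤ ‖y - 1‖ ^ 2 := norm_sum_le_of_forall_le_of_nonneg (by positivity)
            fun i _ => norm_pow_sub_one_sub_mul_le hy1 i
      _ ≤ (p : ℝ)⁻¹ ^ 2 := pow_le_pow_left₀ (norm_nonneg _) hy 2
      _ < (p : ℝ)⁻¹ := pow_lt_self_of_lt_one₀ hp0 inv_prime_lt_one (by norm_num)
  have hlin : ‖(∑ i ∈ Finset.range p, (i : ℚ_[p])) * (y - 1)‖ < (p : ℝ)⁻¹ :=
    calc _ ≤ ‖∑ i ∈ Finset.range p, (i : ℚ_[p])‖ * (p : ℝ)⁻¹ :=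
          (norm_mul_le _ _).trans (mul_le_mul_of_nonneg_left hy (norm_nonneg _))
      _ < (p : ℝ)⁻¹ := mul_lt_of_lt_one_left hp0 (norm_sum_range_natCast_lt_one hp2)
  have herr := (norm_add_le_max _ _).trans_lt (max_lt hsq hlin)
  rw [hsplit, norm_add_eq_max_of_norm_ne_norm (by rw [norm_p]; exact herr.ne'), norm_p,
    max_eq_left herr.le]

theorem norm_pow_prime_sub_one (hp2 : p ≠ 2) {y : ℚ_[p]} (hy : ‖y - 1‖ ≤ (p : ℝ)⁻¹) :
    ‖y ^ p - 1‖ = (p : ℝ)⁻¹ * ‖y - 1‖ := by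
  rw [← geom_sum_mul, norm_mul, norm_geom_sum_prime hp2 hy]

theorem norm_pow_prime_pow_sub_one (hp2 : p ≠ 2) {y : ℚ_[p]} (hy : ‖y - 1‖ ≤ (p : ℝ)⁻¹)
    (n : ℕ) : ‖y ^ p ^ n - 1‖ = (p : ℝ)⁻¹ ^ n * ‖y - 1‖ := by
  induction n with
  | zero => simp
  | succ n ih =>
    have hle : ‖y ^ p ^ n - 1‖ ≤ (p : ℝ)⁻¹ := by
      rw [ih]
      exact mul_le_of_le_one_left (norm_nonneg _) (pow_le_one₀ (by positivity) inv_prime_lt_one.le)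
        |>.trans hy
    rw [pow_succ, pow_mul, norm_pow_prime_sub_one hp2 hle, ih, pow_succ, mul_comm _ (p : ℝ)⁻¹,
      mul_assoc]

theorem exists_natCast_norm_sub_le {w : ℚ_[p]} (hw : ‖w‖ ≤ 1) :
    ∃ a : ℕ, ‖w - a‖ ≤ (p : ℝ)⁻¹ := by
  set z : ℤ_[p] := ⟨w, hw⟩
  obtain ⟨a, -, ha⟩ := PadicInt.exists_mem_range z
  have hlt : ‖z - a‖ < 1 := PadicInt.mem_nonunits.mp ha
  refine ⟨a, ?_⟩
  rw [← zpow_neg_one, norm_le_pow_iff_norm_lt_pow_add_one, neg_add_cancel, zpow_zero]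
  rwa [PadicInt.norm_def, PadicInt.coe_sub, PadicInt.coe_natCast] at hlt

theorem exists_pow_norm_sub_one_add_le {h t : ℚ_[p]} (hh : ‖h - 1‖ ≤ (p : ℝ)⁻¹)
    (ht : ‖t‖ ≤ ‖h - 1‖) : ∃ a : ℕ, ‖h ^ a - (1 + t)‖ ≤ (p : ℝ)⁻¹ * ‖h - 1‖ := by
  rcases eq_or_ne h 1 with rfl | hne
  · exact ⟨0, by simpa using ht⟩
  have hne' : h - 1 ≠ 0 := sub_ne_zero.mpr hne
  have hw : ‖t / (h - 1)‖ ≤ 1 := by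
    rw [norm_div, div_le_one (norm_pos_iff.mpr hne')]
    exact ht
  obtain ⟨a, ha⟩ := exists_natCast_norm_sub_le hw
  have hh1 : ‖h‖ ≤ 1 := (norm_eq_one_of_norm_sub_one_lt_one (hh.trans_lt inv_prime_lt_one)).le
  have hsplit : h ^ a - (1 + t)
      = (h ^ a - 1 - a * (h - 1)) + (h - 1) * (a - t / (h - 1)) := by
    field_simp
    ring
  refine ⟨a, hsplit ▸ (norm_add_le_max _ _).trans (max_le ?_ ?_)⟩
  · calc _ ≤ ‖h - 1‖ ^ 2 := norm_pow_sub_one_sub_mul_le hh1 a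
      _ ≤ (p : ℝ)⁻¹ * ‖h - 1‖ := by rw [sq]; gcongr
  · rw [norm_mul, mul_comm, norm_sub_rev]
    gcongr

theorem exists_pow_norm_sub_le (hp2 : p ≠ 2) {g x : ℚ_[p]} (hg : ‖g - 1‖ ≤ (p : ℝ)⁻¹)
    (hx : ‖x - 1‖ ≤ ‖g - 1‖) (N : ℕ) : ∃ m : ℕ, ‖g ^ m - x‖ ≤ (p : ℝ)⁻¹ ^ N * ‖g - 1‖ := by
  induction N with
  | zero => exact ⟨0, by simpa [norm_sub_rev] using hx⟩
  | succ N ih =>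
    obtain ⟨m, hm⟩ := ih
    have hgm : ‖g ^ m‖ = 1 := by
      rw [norm_pow, norm_eq_one_of_norm_sub_one_lt_one (hg.trans_lt inv_prime_lt_one), one_pow]
    have hgm0 : g ^ m ≠ 0 := norm_ne_zero_iff.mp (by rw [hgm]; exact one_ne_zero)
    have hh := norm_pow_prime_pow_sub_one hp2 hg N
    obtain ⟨a, ha⟩ := exists_pow_norm_sub_one_add_le (h := g ^ p ^ N) (t := (x - g ^ m) / g ^ m)
      (hh ▸ (mul_le_of_le_one_left (norm_nonneg _)
        (pow_le_one₀ (by positivity) inv_prime_lt_one.le)).trans hg)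
      (by rwa [hh, norm_div, hgm, div_one, norm_sub_rev])
    refine ⟨m + p ^ N * a, ?_⟩
    have hfactor :
        g ^ (m + p ^ N * a) - x = g ^ m * ((g ^ p ^ N) ^ a - (1 + (x - g ^ m) / g ^ m)) := by
      rw [pow_add, pow_mul]
      field_simp
      ring
    rw [hfactor, norm_mul, hgm, one_mul, pow_succ, mul_comm _ (p : ℝ)⁻¹, mul_assoc, ← hh]
    exact ha

theorem closure_range_pow (hp2 : p ≠ 2) {g : ℚ_[p]} (hg : ‖g - 1‖ ≤ (p : ℝ)⁻¹) :
    closure (Set.range (g ^ · : ℕ → ℚ_[p])) = closedBall 1 ‖g - 1‖ := by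
  have hg1 : ‖g‖ ≤ 1 := (norm_eq_one_of_norm_sub_one_lt_one (hg.trans_lt inv_prime_lt_one)).le
  refine (closure_minimal ?_ isClosed_closedBall).antisymm fun x hx => ?_
  · rintro _ ⟨n, rfl⟩
    exact mem_closedBall_iff_norm.mpr (norm_pow_sub_one_le hg1 n)
  choose m hm using exists_pow_norm_sub_le hp2 hg (mem_closedBall_iff_norm.mp hx)
  refine mem_closure_of_tendsto (f := fun N => g ^ m N) (b := atTop) ?_
    (Eventually.of_forall fun N => ⟨m N, rfl⟩)
  refine tendsto_iff_norm_sub_tendsto_zero.mpr (squeeze_zero (fun _ => norm_nonneg _) hm ?_)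
  simpa using (tendsto_pow_atTop_nhds_zero_of_lt_one (by positivity) inv_prime_lt_one).mul_const
    ‖g - 1‖

end Padic

theorem range_pow_eq_biUnion_smul {M : Type*} [Monoid M] (a : M) {l : ℕ} (hl : 0 < l) :
    Set.range (a ^ · : ℕ → M) = ⋃ i ∈ Finset.range l, a ^ i • Set.range ((a ^ l) ^ · : ℕ → M) := by
  ext x
  simp only [Set.mem_range, Set.mem_iUnion, Set.mem_smul_set, Finset.mem_range, exists_prop,
    exists_exists_eq_and, smul_eq_mul]
  constructor
  · rintro ⟨n, rfl⟩
    exact ⟨n % l, Nat.mod_lt n hl, n / l, by rw [← pow_mul, ← pow_add, Nat.mod_add_div]⟩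
  · rintro ⟨i, -, m, rfl⟩
    exact ⟨i + l * m, by rw [pow_add, pow_mul]⟩

theorem norm_pow_sub_pow_of_norm_eq_one {K : Type*} [NormedDivisionRing K] {a : K} (ha : ‖a‖ = 1)
    {i j : ℕ} (hij : i ≤ j) : ‖a ^ j - a ^ i‖ = ‖a ^ (j - i) - 1‖ := by
  rw [← pow_mul_pow_sub a hij, ← mul_sub_one, norm_mul, norm_pow, ha, one_pow, one_mul]

theorem IsUltrametricDist.disjoint_closedBall_of_lt_dist {X : Type*} [PseudoMetricSpace X]
    [IsUltrametricDist X] {x y : X} {r : ℝ} (h : r < dist x y) :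
    Disjoint (closedBall x r) (closedBall y r) :=
  Set.disjoint_left.mpr fun z hx hy =>
    h.not_ge ((dist_triangle_max x z y).trans (max_le (dist_comm x z ▸ hx) hy))

theorem stmt_13_general (p : ℕ) [Fact p.Prime] (hp : 3 ≤ p)
    (lam : ℚ_[p]) (hunit : ‖lam‖ = 1)
    -- `l` is the order of `lam` modulo `p`
    (l : ℕ) (hl0 : 0 < l) (hl : ‖lam ^ l - 1‖ ≤ (p : ℝ)⁻¹)
    (hlmin : ∀ m : ℕ, 0 < m → ‖lam ^ m - 1‖ ≤ (p : ℝ)⁻¹ → l ≤ m)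
    -- `k = ν_p(lam ^ l - 1)`
    (k : ℕ) (hk : ‖lam ^ l - 1‖ = (p : ℝ) ^ (-(k : ℤ))) :
    (closure {x : ℚ_[p] | ∃ n : ℕ, x = lam ^ n} =
      ⋃ i ∈ Finset.range l, {x : ℚ_[p] | ‖x - lam ^ i‖ ≤ (p : ℝ) ^ (-(k : ℤ))}) ∧
    (↑(Finset.range l) : Set ℕ).PairwiseDisjoint
      (fun i => {x : ℚ_[p] | ‖x - lam ^ i‖ ≤ (p : ℝ) ^ (-(k : ℤ))}) := by
  have hballs (i : ℕ) : {x : ℚ_[p] | ‖x - lam ^ i‖ ≤ (p : ℝ) ^ (-(k : ℤ))}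
      = closedBall (lam ^ i) ‖lam ^ l - 1‖ := by
    ext
    rw [hk, mem_closedBall_iff_norm]
    rfl
  have hpowers : {x : ℚ_[p] | ∃ n : ℕ, x = lam ^ n} = Set.range (lam ^ · : ℕ → ℚ_[p]) := by
    ext
    simp [eq_comm]
  have hsep {i j : ℕ} (hij : i < j) (hj : j < l) : ‖lam ^ l - 1‖ < dist (lam ^ i) (lam ^ j) := by
    rw [dist_eq_norm, norm_sub_rev (lam ^ i), norm_pow_sub_pow_of_norm_eq_one hunit hij.le]
    exact hl.trans_lt <| not_le.mp fun h => absurd (hlmin (j - i) (by omega) h) (by omega)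
  simp only [hballs, hpowers]
  refine ⟨?_, fun i hi j hj hij => ?_⟩
  · rw [range_pow_eq_biUnion_smul lam hl0, Finset.closure_biUnion]
    refine Set.iUnion₂_congr fun i _ => ?_
    rw [closure_smul₀, Padic.closure_range_pow (by omega) hl, smul_closedBall _ _ (norm_nonneg _),
      norm_pow, hunit, one_pow, one_mul, smul_eq_mul, mul_one]
  · rw [Finset.coe_range, Set.mem_Iio] at hi hj
    rcases hij.lt_or_gt with h | h
    · exact disjoint_closedBall_of_lt_dist (hsep h hj)
    · exact (disjoint_closedBall_of_lt_dist (hsep h hi)).symm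

theorem stmt_13 (p : ℕ) [Fact p.Prime] (hp : 3 ≤ p)
    (lam : ℚ_[p]) (hunit : ‖lam‖ = 1)
    (hru : ∀ n : ℕ, 0 < n → lam ^ n ≠ 1)
    -- `l` is the order of `lam` modulo `p`
    (l : ℕ) (hl0 : 0 < l) (hl : ‖lam ^ l - 1‖ ≤ (p : ℝ)⁻¹)
    (hlmin : ∀ m : ℕ, 0 < m → ‖lam ^ m - 1‖ ≤ (p : ℝ)⁻¹ → l ≤ m)
    -- `k = ν_p(lam ^ l - 1)`
    (k : ℕ) (hk : ‖lam ^ l - 1‖ = (p : ℝ) ^ (-(k : ℤ))) :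
    (closure {x : ℚ_[p] | ∃ n : ℕ, x = lam ^ n} =
      ⋃ i ∈ Finset.range l, {x : ℚ_[p] | ‖x - lam ^ i‖ ≤ (p : ℝ) ^ (-(k : ℤ))}) ∧
    (↑(Finset.range l) : Set ℕ).PairwiseDisjoint
      (fun i => {x : ℚ_[p] | ‖x - lam ^ i‖ ≤ (p : ℝ) ^ (-(k : ℤ))}) :=
  stmt_13_general p hp lam hunit l hl0 hl hlmin k hk
end

section
/- Let p ≥ 3 be a prime and let ℚ_p(√d) be the unramified quadratic extension of ℚ_p. Suppose λ ∈ U^0(√d) is not a root of unity, let l be the order of λ modulo p, and let k = ν_p(λ^l − 1). Then the closure in ℚ_p(√d) of {λ^n : n ∈ ℕ} (the closed subgroup of U^0(√d) generated by λ) equals the disjoint union ⨆_{i=0}^{l−1} ( (λ^i + p^k·ℤ_p[√d]) ∩ U^0(√d) ). In particular, if l = 2(p+1) and k = 1, then this closure equals all of U^0(√d). -/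
/-!
Put `r = ‖λ ^ l - 1‖ = p ^ (-k)`. Every power `λ ^ n` lies within `r` of `λ ^ (n % l)`, and the
union of these closed balls intersected with `U⁰` is closed, which gives one inclusion. Conversely,
for `x` within `r` of `λ ^ i`, the element `w = x / λ ^ i` has norm `1` and `‖w - 1‖ ≤ r`, while
`μ = λ ^ l` satisfies `‖μ ^ p ^ j - 1‖ = r p ^ (-j)` (binomial theorem, `p ≥ 3`). Both have
`N = 1`, so `a + b √d` close to `1` has `‖a - 1‖ = ‖b‖²`: to first order `w` and `μ` are
determined by their `√d`-coordinates, and `w` is approximated by `μ ^ n` one `p`-adic digit of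
`n` at a time. Disjointness of the balls is the minimality of `l`.

If `l = 2 (p + 1)` and `k = 1`, reduce modulo `p` into `𝔽_p(√d) = 𝔽_{p²}`. Frobenius conjugates,
so `z ^ (p + 1)` reduces to `N(z) = ±1`, and `U⁰` lands in the `2 (p + 1)`-st roots of unity. The
residues of `λ ^ i`, `i < l`, are `l` distinct such roots, hence all of them: the balls cover `U⁰`.
-/

open Polynomial

theorem Nat.Prime.inv_cast_pos {p : ℕ} (hp : p.Prime) : 0 < (p : ℝ)⁻¹ := by
  simp [hp.pos]

theorem Nat.Prime.inv_cast_lt_one {p : ℕ} (hp : p.Prime) : (p : ℝ)⁻¹ < 1 :=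
  inv_lt_one_of_one_lt₀ (by exact_mod_cast hp.one_lt)

theorem Padic.norm_two {p : ℕ} [Fact p.Prime] (hp : p ≠ 2) : ‖(2 : ℚ_[p])‖ = 1 := by
  exact_mod_cast Padic.norm_natCast_eq_one_iff.2 ((Nat.coprime_primes Fact.out Nat.prime_two).2 hp)

namespace PadicInt

variable {p : ℕ} [Fact p.Prime]

theorem toZMod_eq_zero_iff_norm_lt_one (x : ℤ_[p]) : toZMod x = 0 ↔ ‖x‖ < 1 := by
  rw [← RingHom.mem_ker, ker_toZMod, IsLocalRing.mem_maximalIdeal, mem_nonunits]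

theorem norm_le_inv_of_norm_lt_one {x : ℤ_[p]} (h : ‖x‖ < 1) : ‖x‖ ≤ (p : ℝ)⁻¹ := by
  simpa using (norm_le_pow_iff_norm_lt_pow_add_one x (-1)).2 (by simpa using h)

theorem norm_sub_le_of_toZMod_eq {a b : ℤ_[p]} (h : toZMod a = toZMod b) :
    ‖(a : ℚ_[p]) - b‖ ≤ (p : ℝ)⁻¹ := by
  have := (toZMod_eq_zero_iff_norm_lt_one (a - b)).1 (by rw [map_sub, h, sub_self])
  exact_mod_cast norm_le_inv_of_norm_lt_one this

theorem prime_ne_two_of_not_isSquare {D : ℤ_[p]} (hD : ¬IsSquare (toZMod D)) : p ≠ 2 := by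
  rintro rfl
  exact hD ⟨toZMod D, by generalize toZMod D = c; fin_cases c <;> rfl⟩

theorem norm_sq_sub_eq_one {D : ℤ_[p]} (hD : ¬IsSquare (toZMod D)) (t : ℤ_[p]) :
    ‖t ^ 2 - D‖ = 1 := by
  refine le_antisymm (norm_le_one _) (not_lt.1 fun h => hD ⟨toZMod t, ?_⟩)
  rw [← toZMod_eq_zero_iff_norm_lt_one, map_sub, map_pow, sub_eq_zero] at h
  rw [← h, sq]

theorem not_isSquare_toZMod (hp : p ≠ 2) {D : ℤ_[p]} (hD : ‖D‖ = 1)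
    (hns : ¬∃ y : ℚ_[p], y ^ 2 = D) : ¬IsSquare (toZMod D) := by
  rintro ⟨r, hr⟩
  set t : ℤ_[p] := (r.val : ℤ_[p])
  have hsmall : ‖t ^ 2 - D‖ < 1 := by
    rw [← toZMod_eq_zero_iff_norm_lt_one, map_sub, map_pow, map_natCast, ZMod.natCast_zmod_val,
      hr, sq, sub_self]
  have ht : ‖t‖ = 1 := by
    have h : ‖t ^ 2 - D + D‖ = 1 := by
      rw [IsUltrametricDist.norm_add_eq_max_of_norm_ne_norm (by rw [hD]; exact hsmall.ne), hD,
        max_eq_right hsmall.le]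
    rw [sub_add_cancel, norm_pow] at h
    exact (pow_eq_one_iff_of_nonneg (norm_nonneg t) two_ne_zero).1 h
  have h2 : ‖(2 : ℤ_[p])‖ = 1 := by exact_mod_cast Padic.norm_two hp
  obtain ⟨z, hz, -⟩ := hensels_lemma (F := X ^ 2 - C D) (a := t)
    (by simpa [ht, h2, derivative_X_pow, one_add_one_eq_two] using hsmall)
  have hz' : z ^ 2 = D := by simpa [sub_eq_zero] using hz
  exact hns ⟨z, by exact_mod_cast congrArg ((↑) : ℤ_[p] → ℚ_[p]) hz'⟩

/-- The reduction modulo `p` of `u + v √D`, an element of `𝔽_p(√(D mod p))`. -/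
noncomputable def residueAdjoinSqrt (D u v : ℤ_[p]) : AdjoinRoot (X ^ 2 - C (toZMod D)) :=
  AdjoinRoot.of _ (toZMod u) + AdjoinRoot.of _ (toZMod v) * AdjoinRoot.root _

end PadicInt

namespace Padic

variable {p : ℕ} [Fact p.Prime] {D : ℤ_[p]}

theorem exists_nat_norm_sub_le {x : ℚ_[p]} (hx : ‖x‖ ≤ 1) : ∃ c : ℕ, ‖x - c‖ ≤ (p : ℝ)⁻¹ := by
  obtain ⟨x, rfl⟩ : ∃ x' : ℤ_[p], (x' : ℚ_[p]) = x := ⟨⟨x, hx⟩, rfl⟩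
  obtain ⟨c, -, hc⟩ := PadicInt.exists_mem_range x
  exact ⟨c, by exact_mod_cast PadicInt.norm_le_inv_of_norm_lt_one (PadicInt.mem_nonunits.1 hc)⟩

theorem norm_sq_sub_eq_one (hD : ¬IsSquare (PadicInt.toZMod D)) {t : ℚ_[p]} (ht : ‖t‖ ≤ 1) :
    ‖t ^ 2 - D‖ = 1 := by
  obtain ⟨t, rfl⟩ : ∃ t' : ℤ_[p], (t' : ℚ_[p]) = t := ⟨⟨t, ht⟩, rfl⟩
  exact_mod_cast PadicInt.norm_sq_sub_eq_one hD t

theorem norm_coe_eq_one_of_not_isSquare (hD : ¬IsSquare (PadicInt.toZMod D)) :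
    ‖(D : ℚ_[p])‖ = 1 := by
  simpa using norm_sq_sub_eq_one hD (t := 0) (by simp)

theorem norm_sq_sub_mul_sq (hD : ¬IsSquare (PadicInt.toZMod D)) (u v : ℚ_[p]) :
    ‖u ^ 2 - D * v ^ 2‖ = max ‖u‖ ‖v‖ ^ 2 := by
  rcases lt_or_ge ‖v‖ ‖u‖ with h | h
  · have hlt : ‖-(D * v ^ 2)‖ < ‖u ^ 2‖ := by
      rw [norm_neg, norm_mul, norm_coe_eq_one_of_not_isSquare hD, one_mul, norm_pow, norm_pow]
      exact pow_lt_pow_left₀ h (norm_nonneg v) two_ne_zero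
    rw [sub_eq_add_neg, IsUltrametricDist.norm_add_eq_max_of_norm_ne_norm hlt.ne',
      max_eq_left hlt.le, max_eq_left h.le, norm_pow]
  · rcases eq_or_ne v 0 with rfl | hv
    · simp_all
    · have key : u ^ 2 - D * v ^ 2 = v ^ 2 * ((u / v) ^ 2 - D) := by field_simp
      rw [key, norm_mul, norm_sq_sub_eq_one hD, max_eq_right h, norm_pow, mul_one]
      rw [norm_div]
      exact div_le_one_of_le₀ h (norm_nonneg v)

theorem norm_sub_one_eq_sq (hD : ¬IsSquare (PadicInt.toZMod D)) {u v : ℚ_[p]}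
    (h : u ^ 2 - D * v ^ 2 = 1) (hu : ‖u - 1‖ < 1) : ‖u - 1‖ = ‖v‖ ^ 2 := by
  have h2 := norm_two (PadicInt.prime_ne_two_of_not_isSquare hD)
  have hu1 : ‖u + 1‖ = 1 := by
    rw [show u + 1 = 2 + (u - 1) by ring, IsUltrametricDist.norm_add_eq_max_of_norm_ne_norm
      (by rw [h2]; exact hu.ne'), h2, max_eq_left hu.le]
  have := congrArg norm (show (u - 1) * (u + 1) = D * v ^ 2 by linear_combination h)
  rwa [norm_mul, norm_mul, hu1, mul_one, norm_coe_eq_one_of_not_isSquare hD, one_mul,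
    norm_pow] at this

end Padic

theorem Polynomial.exists_eq_of_injOn_pow_eq_one {R : Type*} [CommRing R] [IsDomain R] {l : ℕ}
    (hl : 0 < l) {f : ℕ → R} (hinj : Set.InjOn f (Finset.range l)) (hf : ∀ i < l, f i ^ l = 1)
    {y : R} (hy : y ^ l = 1) : ∃ i < l, f i = y := by
  classical
  have hsub : (Finset.range l).image f ⊆ nthRootsFinset l (1 : R) := fun x hx => by
    obtain ⟨i, hi, rfl⟩ := Finset.mem_image.1 hx
    exact (mem_nthRootsFinset hl _).2 (hf i (Finset.mem_range.1 hi))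
  have heq := Finset.eq_of_subset_of_card_le hsub <| by
    rw [Finset.card_image_of_injOn hinj, Finset.card_range]
    exact (Multiset.toFinset_card_le _).trans (card_nthRoots l 1)
  obtain ⟨i, hi, rfl⟩ := Finset.mem_image.1 (heq ▸ (mem_nthRootsFinset hl _).2 hy)
  exact ⟨i, Finset.mem_range.1 hi, rfl⟩

namespace AdjoinRoot

theorem eq_and_eq_of_of_add_of_mul_root_eq {k : Type*} [Field k] {c a b a' b' : k}
    (h : of (X ^ 2 - C c) a + of _ b * root _ = of _ a' + of _ b' * root _) :
    a = a' ∧ b = b' := by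
  have hmk : ∀ x y : k, of (X ^ 2 - C c) x + of _ y * root _ = mk _ (C x + C y * X) := by
    intro x y
    simp [mk_C]
  rw [hmk, hmk, mk_eq_mk] at h
  have h0 := eq_zero_of_dvd_of_degree_lt h (by rw [degree_X_pow_sub_C two_pos]; compute_degree!)
  have h1 := congrArg (coeff · 0) h0
  have h2 := congrArg (coeff · 1) h0
  simp at h1 h2
  exact ⟨sub_eq_zero.1 h1, sub_eq_zero.1 h2⟩

theorem root_X_pow_two_sub_C_sq {R : Type*} [CommRing R] (c : R) :
    root (X ^ 2 - C c) ^ 2 = of _ c := by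
  have h := eval₂_root (X ^ 2 - C c)
  rwa [eval₂_sub, eval₂_X_pow, eval₂_C, sub_eq_zero] at h

variable {p : ℕ} [Fact p.Prime] {c : ZMod p}

theorem root_pow_prime (hp : p ≠ 2) (hc : ¬IsSquare c) :
    root (X ^ 2 - C c) ^ p = -root (X ^ 2 - C c) := by
  have hc0 : c ≠ 0 := by rintro rfl; exact hc ⟨0, by simp⟩
  have hodd : 2 * (p / 2) + 1 = p :=
    Nat.two_mul_div_two_add_one_of_odd ((Fact.out : p.Prime).odd_of_ne_two hp)
  have heuler : c ^ (p / 2) = -1 := (ZMod.pow_div_two_eq_neg_one_or_one p hc0).resolve_left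
    fun h => hc ((ZMod.euler_criterion p hc0).2 h)
  calc root (X ^ 2 - C c) ^ p = (root (X ^ 2 - C c) ^ 2) ^ (p / 2) * root _ := by
        rw [← pow_mul, ← pow_succ, hodd]
    _ = -root (X ^ 2 - C c) := by
        rw [root_X_pow_two_sub_C_sq, ← map_pow, heuler, map_neg, map_one, neg_one_mul]

theorem of_add_of_mul_root_pow_succ (hp : p ≠ 2) (hc : ¬IsSquare c) (a b : ZMod p) :
    (of (X ^ 2 - C c) a + of _ b * root _) ^ (p + 1) = of _ (a ^ 2 - c * b ^ 2) := by
  have : CharP (AdjoinRoot (X ^ 2 - C c)) p := charP_of_injective_algebraMap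
    (of.injective_of_degree_ne_zero (by rw [degree_X_pow_sub_C two_pos]; norm_num)) p
  rw [pow_succ _ p, add_pow_char, mul_pow, ← map_pow, ← map_pow, ZMod.pow_card, ZMod.pow_card,
    root_pow_prime hp hc]
  simp only [map_sub, map_mul, map_pow, ← root_X_pow_two_sub_C_sq]
  ring

end AdjoinRoot

section NormedField

variable {K : Type*} [NormedField K]

theorem norm_pow_eq_one {x : K} (hx : ‖x‖ = 1) (n : ℕ) : ‖x ^ n‖ = 1 := by
  rw [norm_pow, hx, one_pow]

theorem eq_of_norm_pow_sub_pow_le {lam : K} (hlam : ‖lam‖ = 1) {ρ : ℝ} {l : ℕ}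
    (hmin : ∀ m, 0 < m → ‖lam ^ m - 1‖ ≤ ρ → l ≤ m) {i j : ℕ} (hi : i < l) (hj : j < l)
    (h : ‖lam ^ i - lam ^ j‖ ≤ ρ) : i = j := by
  wlog hij : i ≤ j generalizing i j
  · exact (this hj hi (by rwa [norm_sub_rev]) (le_of_not_ge hij)).symm
  have hfac : lam ^ j - lam ^ i = (lam ^ (j - i) - 1) * lam ^ i := by
    rw [sub_mul, one_mul, ← pow_add, Nat.sub_add_cancel hij]
  rw [norm_sub_rev, hfac, norm_mul, norm_pow_eq_one hlam, mul_one] at h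
  by_contra hne
  have := hmin (j - i) (by omega) h
  omega

variable [IsUltrametricDist K]

theorem pairwiseDisjoint_ball_pow_inter {lam : K} (hlam : ‖lam‖ = 1) {ρ : ℝ} {l : ℕ}
    (hmin : ∀ m, 0 < m → ‖lam ^ m - 1‖ ≤ ρ → l ≤ m) (S : Set K) :
    (↑(Finset.range l) : Set ℕ).PairwiseDisjoint (fun i => {x : K | ‖x - lam ^ i‖ ≤ ρ} ∩ S) := by
  intro i hi j hj hij
  refine Set.disjoint_left.2 fun x hxi hxj => hij (eq_of_norm_pow_sub_pow_le hlam hmin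
    (Finset.mem_range.1 hi) (Finset.mem_range.1 hj) ?_)
  rw [show lam ^ i - lam ^ j = -(x - lam ^ i) + (x - lam ^ j) by ring]
  exact (IsUltrametricDist.norm_add_le_max _ _).trans
    (max_le (by rw [norm_neg]; exact hxi.1) hxj.1)

theorem norm_eq_one_of_norm_sub_one_lt_one_s14 {x : K} (h : ‖x - 1‖ < 1) : ‖x‖ = 1 := by
  have := IsUltrametricDist.norm_add_eq_max_of_norm_ne_norm (x := (1 : K)) (y := x - 1)
    (by rw [norm_one]; exact h.ne')
  rwa [add_sub_cancel, norm_one, max_eq_left h.le] at this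

theorem norm_pow_sub_one_le_s14 {x : K} (hx : ‖x‖ ≤ 1) (n : ℕ) : ‖x ^ n - 1‖ ≤ ‖x - 1‖ := by
  rw [← geom_sum_mul, norm_mul]
  refine mul_le_of_le_one_left (norm_nonneg _) ?_
  refine IsUltrametricDist.norm_sum_le_of_forall_le_of_nonneg zero_le_one fun i _ => ?_
  rw [norm_pow]
  exact pow_le_one₀ (norm_nonneg _) hx

theorem norm_pow_sub_one_sub_mul_le_s14 {x : K} (hx : ‖x‖ ≤ 1) (c : ℕ) :
    ‖x ^ c - 1 - c * (x - 1)‖ ≤ ‖x - 1‖ ^ 2 := by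
  have h : x ^ c - 1 - c * (x - 1) = (∑ i ∈ Finset.range c, (x ^ i - 1)) * (x - 1) := by
    rw [Finset.sum_sub_distrib, sub_mul, geom_sum_mul]
    simp
  rw [h, norm_mul, sq]
  refine mul_le_mul_of_nonneg_right ?_ (norm_nonneg _)
  exact IsUltrametricDist.norm_sum_le_of_forall_le_of_nonneg (norm_nonneg _)
    fun i _ => norm_pow_sub_one_le_s14 hx i

theorem norm_pow_mul_choose_le {p : ℕ} (hp : p.Prime) (hp3 : 3 ≤ p)
    (hpK : ‖(p : K)‖ = (p : ℝ)⁻¹) {y : K} (hy : ‖y‖ ≤ (p : ℝ)⁻¹) {i : ℕ} (hi : 2 ≤ i)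
    (hip : i ≤ p) : ‖y ^ i * (p.choose i : K)‖ ≤ ‖y‖ ^ 2 * (p : ℝ)⁻¹ := by
  have hy1 : ‖y‖ ≤ 1 := hy.trans hp.inv_cast_lt_one.le
  rw [norm_mul, norm_pow]
  rcases hip.lt_or_eq with hip | hip
  · obtain ⟨c, hc⟩ := hp.dvd_choose_self (by omega) hip
    have hc' : ‖(p.choose i : K)‖ ≤ (p : ℝ)⁻¹ := by
      rw [hc, Nat.cast_mul, norm_mul, hpK]
      exact mul_le_of_le_one_right hp.inv_cast_pos.le (IsUltrametricDist.norm_natCast_le_one K c)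
    exact mul_le_mul (pow_le_pow_of_le_one (norm_nonneg y) hy1 hi) hc' (norm_nonneg _)
      (by positivity)
  · rw [hip, Nat.choose_self, Nat.cast_one, norm_one, mul_one]
    calc ‖y‖ ^ p = ‖y‖ ^ 2 * ‖y‖ ^ (p - 2) := by rw [← pow_add]; congr 1; omega
      _ ≤ ‖y‖ ^ 2 * ‖y‖ := by
        gcongr
        exact pow_le_of_le_one (norm_nonneg y) hy1 (by omega)
      _ ≤ ‖y‖ ^ 2 * (p : ℝ)⁻¹ := by gcongr

theorem norm_pow_prime_sub_one {p : ℕ} (hp : p.Prime) (hp3 : 3 ≤ p)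
    (hpK : ‖(p : K)‖ = (p : ℝ)⁻¹) {x : K} (hx : ‖x - 1‖ ≤ (p : ℝ)⁻¹) :
    ‖x ^ p - 1‖ = ‖x - 1‖ * (p : ℝ)⁻¹ := by
  rcases eq_or_ne x 1 with rfl | hx1
  · simp
  have hr : 0 < ‖x - 1‖ := norm_pos_iff.2 (sub_ne_zero.2 hx1)
  have hsplit : x ^ p - 1
      = (x - 1) * p + ∑ i ∈ Finset.Ico 2 (p + 1), (x - 1) ^ i * (p.choose i : K) := by
    conv_lhs => rw [← sub_add_cancel x 1, add_pow, Finset.range_eq_Ico,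
      Finset.sum_eq_sum_Ico_succ_bot (by omega), Finset.sum_eq_sum_Ico_succ_bot (by omega)]
    simp
  have htail : ‖∑ i ∈ Finset.Ico 2 (p + 1), (x - 1) ^ i * (p.choose i : K)‖ < ‖(x - 1) * p‖ := by
    refine (IsUltrametricDist.norm_sum_le_of_forall_le_of_nonneg (by positivity) fun i hi =>
      norm_pow_mul_choose_le hp hp3 hpK hx (Finset.mem_Ico.1 hi).1
        (Nat.lt_succ_iff.1 (Finset.mem_Ico.1 hi).2)).trans_lt ?_
    rw [norm_mul, hpK, sq]
    exact mul_lt_mul_of_pos_right (mul_lt_of_lt_one_right hr (hx.trans_lt hp.inv_cast_lt_one))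
      hp.inv_cast_pos
  rw [hsplit, IsUltrametricDist.norm_add_eq_max_of_norm_ne_norm htail.ne', max_eq_left htail.le,
    norm_mul, hpK]

theorem norm_pow_prime_pow_sub_one {p : ℕ} (hp : p.Prime) (hp3 : 3 ≤ p)
    (hpK : ‖(p : K)‖ = (p : ℝ)⁻¹) {x : K} (hx : ‖x - 1‖ ≤ (p : ℝ)⁻¹) (j : ℕ) :
    ‖x ^ p ^ j - 1‖ = ‖x - 1‖ * (p : ℝ)⁻¹ ^ j := by
  induction j with
  | zero => simp
  | succ j ih =>
    have hle : ‖x ^ p ^ j - 1‖ ≤ (p : ℝ)⁻¹ := by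
      rw [ih]
      exact (mul_le_of_le_one_right (norm_nonneg _)
        (pow_le_one₀ hp.inv_cast_pos.le hp.inv_cast_lt_one.le)).trans hx
    rw [pow_succ, pow_mul, norm_pow_prime_sub_one hp hp3 hpK hle, ih, pow_succ, mul_assoc]

end NormedField

/-- A model of the unramified quadratic extension `ℚ_p(√D)`, with `sq = √D`. Being a non-square
modulo `p`, `D` is a unit. -/
structure UnramifiedQuadratic (p : ℕ) [Fact p.Prime] (K : Type*) [NormedField K]
    [Algebra ℚ_[p] K] (D : ℤ_[p]) (sq : K) : Prop where
  norm_algebraMap (x : ℚ_[p]) : ‖algebraMap ℚ_[p] K x‖ = ‖x‖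
  not_isSquare : ¬IsSquare (PadicInt.toZMod D)
  sq_sq : sq ^ 2 = algebraMap ℚ_[p] K D
  exists_eq (x : K) : ∃ u v : ℚ_[p], x = algebraMap ℚ_[p] K u + algebraMap ℚ_[p] K v * sq

namespace UnramifiedQuadratic

variable {p : ℕ} [Fact p.Prime] {K : Type*} [NormedField K] [Algebra ℚ_[p] K]
  {D : ℤ_[p]} {sq : K} {Nm : K → ℚ_[p]}

local notation "ι" => algebraMap ℚ_[p] K

theorem three_le_prime (hK : UnramifiedQuadratic p K D sq) : 3 ≤ p :=
  (Fact.out : p.Prime).two_le.lt_of_ne (PadicInt.prime_ne_two_of_not_isSquare hK.not_isSquare).symm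

theorem norm_sq (hK : UnramifiedQuadratic p K D sq) : ‖sq‖ = 1 := by
  have h : ‖sq‖ ^ 2 = 1 := by
    rw [← norm_pow, hK.sq_sq, hK.norm_algebraMap,
      Padic.norm_coe_eq_one_of_not_isSquare hK.not_isSquare]
  exact (pow_eq_one_iff_of_nonneg (norm_nonneg sq) two_ne_zero).1 h

theorem norm_natCast_p (hK : UnramifiedQuadratic p K D sq) : ‖(p : K)‖ = (p : ℝ)⁻¹ := by
  rw [← map_natCast ι, hK.norm_algebraMap, Padic.norm_p]

theorem Nm_one (hNm : ∀ u v : ℚ_[p], Nm (ι u + ι v * sq) = u ^ 2 - D * v ^ 2) : Nm 1 = 1 := by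
  simpa using hNm 1 0

theorem Nm_mul (hK : UnramifiedQuadratic p K D sq)
    (hNm : ∀ u v : ℚ_[p], Nm (ι u + ι v * sq) = u ^ 2 - D * v ^ 2) (x y : K) :
    Nm (x * y) = Nm x * Nm y := by
  obtain ⟨u, v, rfl⟩ := hK.exists_eq x
  obtain ⟨s, t, rfl⟩ := hK.exists_eq y
  have h : (ι u + ι v * sq) * (ι s + ι t * sq)
      = ι (u * s + D * (v * t)) + ι (u * t + v * s) * sq := by
    simp only [map_add, map_mul]
    linear_combination (ι v * ι t) * hK.sq_sq
  rw [h, hNm, hNm, hNm]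
  ring

theorem Nm_pow (hK : UnramifiedQuadratic p K D sq)
    (hNm : ∀ u v : ℚ_[p], Nm (ι u + ι v * sq) = u ^ 2 - D * v ^ 2) (x : K) (n : ℕ) :
    Nm (x ^ n) = Nm x ^ n := by
  induction n with
  | zero => simpa using Nm_one hNm
  | succ n ih => rw [pow_succ, hK.Nm_mul hNm, ih, pow_succ]

theorem Nm_pow_sq_eq_one (hK : UnramifiedQuadratic p K D sq)
    (hNm : ∀ u v : ℚ_[p], Nm (ι u + ι v * sq) = u ^ 2 - D * v ^ 2) {x : K} (hx : Nm x ^ 2 = 1)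
    (n : ℕ) : Nm (x ^ n) ^ 2 = 1 := by
  rw [hK.Nm_pow hNm, ← pow_mul, mul_comm, pow_mul, hx, one_pow]

theorem residueAdjoinSqrt_pow_eq_one (hK : UnramifiedQuadratic p K D sq)
    (hNm : ∀ u v : ℚ_[p], Nm (ι u + ι v * sq) = u ^ 2 - D * v ^ 2) {u v : ℤ_[p]}
    (h : Nm (ι u + ι v * sq) ^ 2 = 1) :
    PadicInt.residueAdjoinSqrt D u v ^ (2 * (p + 1)) = 1 := by
  have hN : ((u ^ 2 - D * v ^ 2) ^ 2 : ℤ_[p]) = 1 := by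
    rw [hNm] at h
    exact PadicInt.ext (by push_cast; exact h)
  rw [mul_comm, pow_mul, PadicInt.residueAdjoinSqrt, AdjoinRoot.of_add_of_mul_root_pow_succ
    (PadicInt.prime_ne_two_of_not_isSquare hK.not_isSquare) hK.not_isSquare]
  simp only [← map_pow, ← map_mul, ← map_sub, hN, map_one]

variable [IsUltrametricDist K]

theorem norm_add_mul_sq (hK : UnramifiedQuadratic p K D sq) (u v : ℚ_[p]) :
    ‖ι u + ι v * sq‖ = max ‖u‖ ‖v‖ := by
  set M := max ‖u‖ ‖v‖
  have hle : ∀ v' : ℚ_[p], ‖v'‖ = ‖v‖ → ‖ι u + ι v' * sq‖ ≤ M := fun v' hv' => by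
    refine (IsUltrametricDist.norm_add_le_max _ _).trans ?_
    rw [norm_mul, hK.norm_algebraMap, hK.norm_algebraMap, hK.norm_sq, mul_one, hv']
  -- the product with the conjugate is the norm, whose absolute value is `M ^ 2`
  have hprod : ‖ι u + ι v * sq‖ * ‖ι u + ι (-v) * sq‖ = M ^ 2 := by
    rw [← norm_mul, ← Padic.norm_sq_sub_mul_sq hK.not_isSquare, ← hK.norm_algebraMap]
    congr 1
    simp only [map_sub, map_mul, map_pow, map_neg]
    linear_combination (-(ι v) ^ 2) * hK.sq_sq
  have h1 := hle v rfl
  have h2 := hle (-v) (norm_neg v)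
  nlinarith [norm_nonneg (ι u + ι v * sq), norm_nonneg (ι u + ι (-v) * sq)]

theorem norm_sub_add_mul_sq (hK : UnramifiedQuadratic p K D sq) (u v s t : ℚ_[p]) :
    ‖ι u + ι v * sq - (ι s + ι t * sq)‖ = max ‖u - s‖ ‖v - t‖ := by
  rw [← hK.norm_add_mul_sq, map_sub, map_sub]
  ring_nf

theorem norm_add_mul_sq_sub_one (hK : UnramifiedQuadratic p K D sq) (u v : ℚ_[p]) :
    ‖ι u + ι v * sq - 1‖ = max ‖u - 1‖ ‖v‖ := by
  simpa using hK.norm_sub_add_mul_sq u v 1 0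

theorem exists_eq_of_norm_le_one (hK : UnramifiedQuadratic p K D sq) {x : K} (hx : ‖x‖ ≤ 1) :
    ∃ u v : ℤ_[p], x = ι u + ι v * sq := by
  obtain ⟨u, v, rfl⟩ := hK.exists_eq x
  rw [hK.norm_add_mul_sq, max_le_iff] at hx
  exact ⟨⟨u, hx.1⟩, ⟨v, hx.2⟩, rfl⟩

theorem norm_sub_le_of_residueAdjoinSqrt_eq (hK : UnramifiedQuadratic p K D sq)
    {u v u' v' : ℤ_[p]}
    (h : PadicInt.residueAdjoinSqrt D u v = PadicInt.residueAdjoinSqrt D u' v') :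
    ‖ι u + ι v * sq - (ι u' + ι v' * sq)‖ ≤ (p : ℝ)⁻¹ := by
  obtain ⟨hu, hv⟩ := AdjoinRoot.eq_and_eq_of_of_add_of_mul_root_eq h
  rw [hK.norm_sub_add_mul_sq]
  exact max_le (PadicInt.norm_sub_le_of_toZMod_eq hu) (PadicInt.norm_sub_le_of_toZMod_eq hv)

/-- The elements of norm `1` with `N = ±1` fall into at most `2 (p + 1)` classes modulo `p`,
as their residues are `2 (p + 1)`-st roots of unity in `𝔽_{p²}`. -/
theorem exists_norm_sub_le_of_injOn (hK : UnramifiedQuadratic p K D sq)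
    (hNm : ∀ u v : ℚ_[p], Nm (ι u + ι v * sq) = u ^ 2 - D * v ^ 2) {f : ℕ → K}
    (hf : ∀ i, ‖f i‖ ≤ 1 ∧ Nm (f i) ^ 2 = 1)
    (hinj : ∀ i < 2 * (p + 1), ∀ j < 2 * (p + 1), ‖f i - f j‖ ≤ (p : ℝ)⁻¹ → i = j)
    {z : K} (hz : ‖z‖ ≤ 1) (hzN : Nm z ^ 2 = 1) :
    ∃ i < 2 * (p + 1), ‖z - f i‖ ≤ (p : ℝ)⁻¹ := by
  have : Fact (Irreducible (X ^ 2 - C (PadicInt.toZMod D))) :=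
    ⟨X_pow_sub_C_irreducible_of_prime Nat.prime_two
      fun b hb => hK.not_isSquare ⟨b, by rw [← hb, pow_two]⟩⟩
  choose u v hf' using fun i => hK.exists_eq_of_norm_le_one (hf i).1
  obtain ⟨uz, vz, rfl⟩ := hK.exists_eq_of_norm_le_one hz
  obtain ⟨i, hi, heq⟩ := Polynomial.exists_eq_of_injOn_pow_eq_one (by positivity)
    (f := fun i => PadicInt.residueAdjoinSqrt D (u i) (v i))
    (fun i hi j hj hij => hinj i (Finset.mem_range.1 hi) j (Finset.mem_range.1 hj)
      (by rw [hf' i, hf' j]; exact hK.norm_sub_le_of_residueAdjoinSqrt_eq hij))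
    (fun i _ => hK.residueAdjoinSqrt_pow_eq_one hNm (hf' i ▸ (hf i).2))
    (hK.residueAdjoinSqrt_pow_eq_one hNm hzN)
  exact ⟨i, hi, by rw [hf' i]; exact hK.norm_sub_le_of_residueAdjoinSqrt_eq heq.symm⟩

theorem norm_Nm_sub_le (hK : UnramifiedQuadratic p K D sq)
    (hNm : ∀ u v : ℚ_[p], Nm (ι u + ι v * sq) = u ^ 2 - D * v ^ 2) {x y : K}
    (hx : ‖x‖ ≤ 1) (hy : ‖y‖ ≤ 1) : ‖Nm x - Nm y‖ ≤ ‖x - y‖ := by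
  obtain ⟨u, v, rfl⟩ := hK.exists_eq x
  obtain ⟨s, t, rfl⟩ := hK.exists_eq y
  rw [hK.norm_add_mul_sq, max_le_iff] at hx hy
  have hus : ‖u + s‖ ≤ 1 := (IsUltrametricDist.norm_add_le_max _ _).trans (max_le hx.1 hy.1)
  have hvt : ‖v + t‖ ≤ 1 := (IsUltrametricDist.norm_add_le_max _ _).trans (max_le hx.2 hy.2)
  rw [hNm, hNm, hK.norm_sub_add_mul_sq]
  calc ‖u ^ 2 - D * v ^ 2 - (s ^ 2 - D * t ^ 2)‖
      = ‖(u - s) * (u + s) + -(D * ((v - t) * (v + t)))‖ := by ring_nf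
    _ ≤ max (‖u - s‖ * ‖u + s‖) (‖v - t‖ * ‖v + t‖) := by
      refine (IsUltrametricDist.norm_add_le_max _ _).trans (le_of_eq ?_)
      rw [norm_neg, norm_mul, norm_mul, norm_mul,
        Padic.norm_coe_eq_one_of_not_isSquare hK.not_isSquare, one_mul]
    _ ≤ max ‖u - s‖ ‖v - t‖ :=
      max_le_max (mul_le_of_le_one_right (norm_nonneg _) hus)
        (mul_le_of_le_one_right (norm_nonneg _) hvt)

theorem Nm_eq_one (hK : UnramifiedQuadratic p K D sq)
    (hNm : ∀ u v : ℚ_[p], Nm (ι u + ι v * sq) = u ^ 2 - D * v ^ 2) {w : K}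
    (hw : Nm w ^ 2 = 1) (hw1 : ‖w - 1‖ < 1) : Nm w = 1 := by
  refine (sq_eq_one_iff.1 hw).resolve_right fun h => ?_
  have := hK.norm_Nm_sub_le hNm (norm_eq_one_of_norm_sub_one_lt_one_s14 hw1).le norm_one.le
  rw [h, Nm_one hNm, show (-1 : ℚ_[p]) - 1 = -2 by norm_num, norm_neg,
    Padic.norm_two (PadicInt.prime_ne_two_of_not_isSquare hK.not_isSquare)] at this
  exact this.not_gt hw1

theorem isClosed_setOf_norm_eq_one_Nm_sq_eq_one (hK : UnramifiedQuadratic p K D sq)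
    (hNm : ∀ u v : ℚ_[p], Nm (ι u + ι v * sq) = u ^ 2 - D * v ^ 2) :
    IsClosed {z : K | ‖z‖ = 1 ∧ Nm z ^ 2 = 1} := by
  have hcont : ContinuousOn Nm (Metric.sphere 0 1) :=
    (LipschitzOnWith.of_dist_le_mul (K := 1) fun x hx y hy => by
      simp only [mem_sphere_iff_norm, sub_zero] at hx hy
      simpa [dist_eq_norm] using hK.norm_Nm_sub_le hNm hx.le hy.le).continuousOn
  convert hcont.preimage_isClosed_of_isClosed Metric.isClosed_sphere
    (isClosed_eq (continuous_pow 2) continuous_const : IsClosed {a : ℚ_[p] | a ^ 2 = 1}) using 1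
  ext z
  simp only [Set.mem_ofPred_eq, Set.mem_inter_iff, Set.mem_preimage, mem_sphere_iff_norm,
    sub_zero]

/-- The first-order step of the approximation. Since `N = 1`, the rational coordinates of `w - 1`
and `μ - 1` are quadratically small, so only the `√D`-coordinates `v`, `t` matter, and
`c ≡ v / t (mod p)`. -/
theorem exists_nat_norm_sub_one_sub_mul_le (hK : UnramifiedQuadratic p K D sq)
    (hNm : ∀ u v : ℚ_[p], Nm (ι u + ι v * sq) = u ^ 2 - D * v ^ 2) {w μ : K}
    (hw : Nm w = 1) (hμ : Nm μ = 1) {r : ℝ} (hr0 : 0 < r) (hrp : r ≤ (p : ℝ)⁻¹)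
    (hw1 : ‖w - 1‖ ≤ r) (hμ1 : ‖μ - 1‖ = r) :
    ∃ c : ℕ, ‖w - 1 - c * (μ - 1)‖ ≤ r * (p : ℝ)⁻¹ := by
  have hr1 : r < 1 := hrp.trans_lt (Fact.out : p.Prime).inv_cast_lt_one
  have hr2 : r ^ 2 ≤ r * (p : ℝ)⁻¹ := by
    rw [pow_two]
    exact mul_le_mul_of_nonneg_left hrp hr0.le
  obtain ⟨u, v, rfl⟩ := hK.exists_eq w
  obtain ⟨s, t, rfl⟩ := hK.exists_eq μ
  rw [hNm] at hw hμ
  rw [hK.norm_add_mul_sq_sub_one, max_le_iff] at hw1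
  rw [hK.norm_add_mul_sq_sub_one] at hμ1
  have hu := Padic.norm_sub_one_eq_sq hK.not_isSquare hw (hw1.1.trans_lt hr1)
  have hs := Padic.norm_sub_one_eq_sq hK.not_isSquare hμ
    ((hμ1 ▸ le_max_left _ _ : ‖s - 1‖ ≤ r).trans_lt hr1)
  have ht : ‖t‖ = r := by
    refine (hμ1 ▸ le_max_right _ _ : ‖t‖ ≤ r).antisymm (not_lt.1 fun hlt => ?_)
    have : max ‖s - 1‖ ‖t‖ < r := max_lt (by rw [hs]; nlinarith [norm_nonneg t]) hlt
    exact this.ne hμ1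
  have ht0 : t ≠ 0 := norm_pos_iff.1 (ht ▸ hr0)
  obtain ⟨c, hc⟩ := Padic.exists_nat_norm_sub_le (x := v / t)
    (by rw [norm_div, ht]; exact div_le_one_of_le₀ hw1.2 hr0.le)
  refine ⟨c, ?_⟩
  have hcoord : ι u + ι v * sq - 1 - c * (ι s + ι t * sq - 1)
      = ι (u - 1 - c * (s - 1)) + ι (t * (v / t - c)) * sq := by
    rw [mul_sub t, mul_div_cancel₀ v ht0]
    simp only [map_sub, map_mul, map_natCast, map_one]
    ring
  rw [hcoord, hK.norm_add_mul_sq, norm_mul, ht]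
  refine max_le ?_ (mul_le_mul_of_nonneg_left hc hr0.le)
  rw [sub_eq_add_neg]
  refine (IsUltrametricDist.norm_add_le_max _ _).trans (max_le ?_ ?_)
  · rw [hu]
    exact (pow_le_pow_left₀ (norm_nonneg v) hw1.2 2).trans hr2
  · rw [norm_neg, norm_mul, hs, ht]
    exact (mul_le_of_le_one_left (by positivity) (IsUltrametricDist.norm_natCast_le_one _ c)).trans
      hr2

theorem exists_nat_norm_sub_pow_le (hK : UnramifiedQuadratic p K D sq)
    (hNm : ∀ u v : ℚ_[p], Nm (ι u + ι v * sq) = u ^ 2 - D * v ^ 2) {w μ : K}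
    (hw : Nm w = 1) (hμ : Nm μ = 1) {r : ℝ} (hr0 : 0 < r) (hrp : r ≤ (p : ℝ)⁻¹)
    (hw1 : ‖w - 1‖ ≤ r) (hμ1 : ‖μ - 1‖ = r) :
    ∃ c : ℕ, ‖w - μ ^ c‖ ≤ r * (p : ℝ)⁻¹ := by
  obtain ⟨c, hc⟩ := hK.exists_nat_norm_sub_one_sub_mul_le hNm hw hμ hr0 hrp hw1 hμ1
  have hμ1' : ‖μ - 1‖ < 1 := hμ1 ▸ hrp.trans_lt (Fact.out : p.Prime).inv_cast_lt_one
  have hμn : ‖μ‖ ≤ 1 := (norm_eq_one_of_norm_sub_one_lt_one_s14 hμ1').le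
  have hquad : ‖μ ^ c - 1 - c * (μ - 1)‖ ≤ r * (p : ℝ)⁻¹ := by
    refine (norm_pow_sub_one_sub_mul_le_s14 hμn c).trans ?_
    rw [hμ1, pow_two]
    exact mul_le_mul_of_nonneg_left hrp hr0.le
  refine ⟨c, ?_⟩
  rw [show w - μ ^ c = (w - 1 - c * (μ - 1)) + -(μ ^ c - 1 - c * (μ - 1)) by ring]
  exact (IsUltrametricDist.norm_add_le_max _ _).trans (max_le hc (by rwa [norm_neg]))

theorem exists_nat_norm_sub_pow_le_mul_pow (hK : UnramifiedQuadratic p K D sq)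
    (hNm : ∀ u v : ℚ_[p], Nm (ι u + ι v * sq) = u ^ 2 - D * v ^ 2) {w μ : K}
    (hw : Nm w = 1) (hμ : Nm μ = 1) (hμ0 : 0 < ‖μ - 1‖) (hμp : ‖μ - 1‖ ≤ (p : ℝ)⁻¹)
    (hw1 : ‖w - 1‖ ≤ ‖μ - 1‖) (j : ℕ) :
    ∃ n : ℕ, ‖w - μ ^ n‖ ≤ ‖μ - 1‖ * (p : ℝ)⁻¹ ^ j := by
  have hp : p.Prime := Fact.out
  have hμn : ‖μ‖ = 1 := norm_eq_one_of_norm_sub_one_lt_one_s14 (hμp.trans_lt hp.inv_cast_lt_one)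
  induction j with
  | zero => exact ⟨0, by simpa using hw1⟩
  | succ j ih =>
    obtain ⟨n, hn⟩ := ih
    have hμn0 : μ ^ n ≠ 0 := norm_ne_zero_iff.1 (by rw [norm_pow_eq_one hμn]; exact one_ne_zero)
    have hw' : Nm (w / μ ^ n) = 1 := by
      have := hK.Nm_mul hNm (w / μ ^ n) (μ ^ n)
      rwa [div_mul_cancel₀ w hμn0, hK.Nm_pow hNm, hμ, one_pow, mul_one, hw, eq_comm] at this
    have hw'1 : ‖w / μ ^ n - 1‖ = ‖w - μ ^ n‖ := by
      rw [div_sub_one hμn0, norm_div, norm_pow_eq_one hμn, div_one]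
    have hμ' : ‖μ ^ p ^ j - 1‖ = ‖μ - 1‖ * (p : ℝ)⁻¹ ^ j :=
      norm_pow_prime_pow_sub_one hp hK.three_le_prime hK.norm_natCast_p hμp j
    have hμ'p : ‖μ - 1‖ * (p : ℝ)⁻¹ ^ j ≤ (p : ℝ)⁻¹ := (mul_le_of_le_one_right hμ0.le
      (pow_le_one₀ hp.inv_cast_pos.le hp.inv_cast_lt_one.le)).trans hμp
    obtain ⟨c, hc⟩ := hK.exists_nat_norm_sub_pow_le hNm hw' (by rw [hK.Nm_pow hNm, hμ, one_pow])
      (mul_pos hμ0 (pow_pos hp.inv_cast_pos j)) hμ'p (hw'1 ▸ hn) hμ'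
    refine ⟨n + p ^ j * c, ?_⟩
    have hfac : w - μ ^ (n + p ^ j * c) = (w / μ ^ n - (μ ^ p ^ j) ^ c) * μ ^ n := by
      rw [sub_mul, div_mul_cancel₀ w hμn0, ← pow_mul, ← pow_add, add_comm]
    rwa [hfac, norm_mul, norm_pow_eq_one hμn, mul_one, pow_succ, ← mul_assoc]

theorem mem_closure_range_pow (hK : UnramifiedQuadratic p K D sq)
    (hNm : ∀ u v : ℚ_[p], Nm (ι u + ι v * sq) = u ^ 2 - D * v ^ 2) {w μ : K}
    (hw : Nm w = 1) (hμ : Nm μ = 1) (hμp : ‖μ - 1‖ ≤ (p : ℝ)⁻¹) (hw1 : ‖w - 1‖ ≤ ‖μ - 1‖) :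
    w ∈ closure (Set.range (μ ^ ·)) := by
  rcases (norm_nonneg (μ - 1)).eq_or_lt with hμ0 | hμ0
  · rw [← hμ0, norm_le_zero_iff, sub_eq_zero] at hw1
    exact subset_closure ⟨0, by simp [hw1]⟩
  refine Metric.mem_closure_iff.2 fun ε hε => ?_
  obtain ⟨j, hj⟩ := exists_pow_lt_of_lt_one (div_pos hε hμ0)
    (Fact.out : p.Prime).inv_cast_lt_one
  obtain ⟨n, hn⟩ := hK.exists_nat_norm_sub_pow_le_mul_pow hNm hw hμ hμ0 hμp hw1 j
  refine ⟨μ ^ n, ⟨n, rfl⟩, ?_⟩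
  rw [dist_eq_norm]
  exact hn.trans_lt (by rwa [lt_div_iff₀' hμ0] at hj)

theorem closure_powers_eq (hK : UnramifiedQuadratic p K D sq)
    (hNm : ∀ u v : ℚ_[p], Nm (ι u + ι v * sq) = u ^ 2 - D * v ^ 2) {lam : K} (hlam : ‖lam‖ = 1)
    (hlamN : Nm lam ^ 2 = 1) {l : ℕ} (hl0 : 0 < l) (hl : ‖lam ^ l - 1‖ ≤ (p : ℝ)⁻¹) :
    closure {x : K | ∃ n : ℕ, x = lam ^ n} = ⋃ i ∈ Finset.range l,
      ({x : K | ‖x - lam ^ i‖ ≤ ‖lam ^ l - 1‖} ∩ {z : K | ‖z‖ = 1 ∧ Nm z ^ 2 = 1}) := by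
  have hl1 : ‖lam ^ l - 1‖ < 1 := hl.trans_lt (Fact.out : p.Prime).inv_cast_lt_one
  apply subset_antisymm
  · refine closure_minimal ?_ (isClosed_biUnion_finset fun i _ => (isClosed_le (by fun_prop)
      continuous_const).inter (hK.isClosed_setOf_norm_eq_one_Nm_sq_eq_one hNm))
    rintro _ ⟨n, rfl⟩
    refine Set.mem_iUnion₂.2 ⟨n % l, Finset.mem_range.2 (Nat.mod_lt n hl0), ?_,
      norm_pow_eq_one hlam n, hK.Nm_pow_sq_eq_one hNm hlamN n⟩
    have hfac : lam ^ n - lam ^ (n % l) = ((lam ^ l) ^ (n / l) - 1) * lam ^ (n % l) := by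
      rw [sub_mul, one_mul, ← pow_mul, ← pow_add, Nat.div_add_mod]
    simp only [Set.mem_ofPred_eq]
    rw [hfac, norm_mul, norm_pow_eq_one hlam, mul_one]
    exact norm_pow_sub_one_le_s14 (norm_pow_eq_one hlam l).le _
  · simp only [Set.iUnion_subset_iff]
    rintro i - x ⟨hxi, -, hxN⟩
    have hi0 : lam ^ i ≠ 0 := norm_ne_zero_iff.1 (by rw [norm_pow_eq_one hlam]; exact one_ne_zero)
    have hw1 : ‖x / lam ^ i - 1‖ = ‖x - lam ^ i‖ := by
      rw [div_sub_one hi0, norm_div, norm_pow_eq_one hlam, div_one]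
    have hwN : Nm (x / lam ^ i) = 1 := by
      refine hK.Nm_eq_one hNm ?_ (hw1 ▸ hxi.trans_lt hl1)
      have := hK.Nm_mul hNm (x / lam ^ i) (lam ^ i)
      rw [div_mul_cancel₀ x hi0] at this
      simpa [this, mul_pow, hK.Nm_pow_sq_eq_one hNm hlamN i] using hxN
    have hw := hK.mem_closure_range_pow hNm hwN
      (hK.Nm_eq_one hNm (hK.Nm_pow_sq_eq_one hNm hlamN l) hl1) hl (hw1 ▸ hxi)
    rw [← div_mul_cancel₀ x hi0]
    refine map_mem_closure (f := (· * lam ^ i)) (continuous_mul_const (lam ^ i)) hw ?_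
    rintro _ ⟨n, rfl⟩
    exact ⟨l * n + i, by simp only [pow_add, pow_mul]⟩

theorem subset_iUnion_ball_pow (hK : UnramifiedQuadratic p K D sq)
    (hNm : ∀ u v : ℚ_[p], Nm (ι u + ι v * sq) = u ^ 2 - D * v ^ 2) {lam : K} (hlam : ‖lam‖ = 1)
    (hlamN : Nm lam ^ 2 = 1) (hmin : ∀ m, 0 < m → ‖lam ^ m - 1‖ ≤ (p : ℝ)⁻¹ → 2 * (p + 1) ≤ m) :
    {z : K | ‖z‖ = 1 ∧ Nm z ^ 2 = 1} ⊆ ⋃ i ∈ Finset.range (2 * (p + 1)),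
      ({x : K | ‖x - lam ^ i‖ ≤ (p : ℝ)⁻¹} ∩ {z : K | ‖z‖ = 1 ∧ Nm z ^ 2 = 1}) := by
  rintro z ⟨hz1, hzN⟩
  obtain ⟨i, hi, h⟩ := hK.exists_norm_sub_le_of_injOn hNm (f := (lam ^ ·))
    (fun i => ⟨(norm_pow_eq_one hlam i).le, hK.Nm_pow_sq_eq_one hNm hlamN i⟩)
    (fun i hi j hj => eq_of_norm_pow_sub_pow_le hlam hmin hi hj) hz1.le hzN
  exact Set.mem_iUnion₂.2 ⟨i, Finset.mem_range.2 hi, h, hz1, hzN⟩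

end UnramifiedQuadratic

theorem stmt_14_general (p : ℕ) [Fact p.Prime] (hp : 3 ≤ p)
    -- `K` is the unramified quadratic extension `ℚ_p(√d)` of `ℚ_p`
    (K : Type) [NormedField K] [Algebra ℚ_[p] K]
    (hiso : ∀ x : ℚ_[p], ‖algebraMap ℚ_[p] K x‖ = ‖x‖)
    (hna : ∀ x y : K, ‖x + y‖ ≤ max ‖x‖ ‖y‖)
    (d : ℚ_[p]) (hd : ‖d‖ = 1) (hdns : ¬ ∃ y : ℚ_[p], y ^ 2 = d)
    (sq : K) (hsq : sq ^ 2 = algebraMap ℚ_[p] K d)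
    (hspan : ∀ x : K, ∃ u v : ℚ_[p], x = algebraMap ℚ_[p] K u + algebraMap ℚ_[p] K v * sq)
    -- `Nm` is the norm of `ℚ_p(√d)/ℚ_p`
    (Nm : K → ℚ_[p])
    (hNm : ∀ u v : ℚ_[p],
      Nm (algebraMap ℚ_[p] K u + algebraMap ℚ_[p] K v * sq) = u ^ 2 - d * v ^ 2)
    -- `U0` is `U^0(√d) = {z ∈ ℤ_p[√d]^* : N(z) = ±1}`
    (U0 : Set K) (hU0 : U0 = {z : K | ‖z‖ = 1 ∧ (Nm z = 1 ∨ Nm z = -1)})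
    -- `λ ∈ U^0(√d)` is not a root of unity
    (lam : K) (hlam : lam ∈ U0)
    -- `l` is the order of `λ` modulo `p`
    (l : ℕ) (hl0 : 0 < l) (hl : ‖lam ^ l - 1‖ ≤ (p : ℝ)⁻¹)
    (hlmin : ∀ m : ℕ, 0 < m → ‖lam ^ m - 1‖ ≤ (p : ℝ)⁻¹ → l ≤ m)
    -- `k = ν_p(λ ^ l - 1)`
    (k : ℕ) (hk : ‖lam ^ l - 1‖ = (p : ℝ) ^ (-(k : ℤ))) :
    (closure {x : K | ∃ n : ℕ, x = lam ^ n} =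
      ⋃ i ∈ Finset.range l, ({x : K | ‖x - lam ^ i‖ ≤ (p : ℝ) ^ (-(k : ℤ))} ∩ U0)) ∧
    (↑(Finset.range l) : Set ℕ).PairwiseDisjoint
      (fun i => {x : K | ‖x - lam ^ i‖ ≤ (p : ℝ) ^ (-(k : ℤ))} ∩ U0) ∧
    (l = 2 * (p + 1) → k = 1 → closure {x : K | ∃ n : ℕ, x = lam ^ n} = U0) := by
  have : IsUltrametricDist K :=
    IsUltrametricDist.isUltrametricDist_of_forall_norm_add_le_max_norm hna
  have hK : UnramifiedQuadratic p K ⟨d, hd.le⟩ sq :=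
    ⟨hiso, PadicInt.not_isSquare_toZMod (by omega) hd hdns, hsq, hspan⟩
  rw [show U0 = {z : K | ‖z‖ = 1 ∧ Nm z ^ 2 = 1} by simp only [hU0, sq_eq_one_iff]] at hlam ⊢
  have hclosure := hK.closure_powers_eq hNm hlam.1 hlam.2 hl0 hl
  rw [← hk]
  refine ⟨hclosure, pairwiseDisjoint_ball_pow_inter hlam.1
    (fun m hm h => hlmin m hm (h.trans hl)) _, fun hl2 hk1 => ?_⟩
  subst hl2
  rw [hclosure, hk, hk1, Nat.cast_one, zpow_neg_one]
  exact subset_antisymm (Set.iUnion₂_subset fun i _ => Set.inter_subset_right)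
    (hK.subset_iUnion_ball_pow hNm hlam.1 hlam.2 hlmin)

theorem stmt_14 (p : ℕ) [Fact p.Prime] (hp : 3 ≤ p)
    -- `K` is the unramified quadratic extension `ℚ_p(√d)` of `ℚ_p`
    (K : Type) [NormedField K] [Algebra ℚ_[p] K]
    (hiso : ∀ x : ℚ_[p], ‖algebraMap ℚ_[p] K x‖ = ‖x‖)
    (hna : ∀ x y : K, ‖x + y‖ ≤ max ‖x‖ ‖y‖)
    (hval : ∀ x : K, x ≠ 0 → ∃ m : ℤ, ‖x‖ = (p : ℝ) ^ (-m))
    (d : ℚ_[p]) (hd : ‖d‖ = 1) (hdns : ¬ ∃ y : ℚ_[p], y ^ 2 = d)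
    (sq : K) (hsq : sq ^ 2 = algebraMap ℚ_[p] K d)
    (hspan : ∀ x : K, ∃ u v : ℚ_[p], x = algebraMap ℚ_[p] K u + algebraMap ℚ_[p] K v * sq)
    -- `Nm` is the norm of `ℚ_p(√d)/ℚ_p`
    (Nm : K → ℚ_[p])
    (hNm : ∀ u v : ℚ_[p],
      Nm (algebraMap ℚ_[p] K u + algebraMap ℚ_[p] K v * sq) = u ^ 2 - d * v ^ 2)
    -- `U0` is `U^0(√d) = {z ∈ ℤ_p[√d]^* : N(z) = ±1}`
    (U0 : Set K) (hU0 : U0 = {z : K | ‖z‖ = 1 ∧ (Nm z = 1 ∨ Nm z = -1)})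
    -- `λ ∈ U^0(√d)` is not a root of unity
    (lam : K) (hlam : lam ∈ U0) (hru : ∀ n : ℕ, 0 < n → lam ^ n ≠ 1)
    -- `l` is the order of `λ` modulo `p`
    (l : ℕ) (hl0 : 0 < l) (hl : ‖lam ^ l - 1‖ ≤ (p : ℝ)⁻¹)
    (hlmin : ∀ m : ℕ, 0 < m → ‖lam ^ m - 1‖ ≤ (p : ℝ)⁻¹ → l ≤ m)
    -- `k = ν_p(λ ^ l - 1)`
    (k : ℕ) (hk : ‖lam ^ l - 1‖ = (p : ℝ) ^ (-(k : ℤ))) :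
    (closure {x : K | ∃ n : ℕ, x = lam ^ n} =
      ⋃ i ∈ Finset.range l, ({x : K | ‖x - lam ^ i‖ ≤ (p : ℝ) ^ (-(k : ℤ))} ∩ U0)) ∧
    (↑(Finset.range l) : Set ℕ).PairwiseDisjoint
      (fun i => {x : K | ‖x - lam ^ i‖ ≤ (p : ℝ) ^ (-(k : ℤ))} ∩ U0) ∧
    (l = 2 * (p + 1) → k = 1 → closure {x : K | ∃ n : ℕ, x = lam ^ n} = U0) :=
  stmt_14_general p hp K hiso hna d hd hdns sq hsq hspan Nm hNm U0 hU0 lam hlam l hl0 hl hlmin k hk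
end

section
/- Let p ≥ 3 be a prime that is not a Wall–Sun–Sun prime, and suppose the rank of appearance of p in the Fibonacci sequence satisfies α_F(p) = p + 1. Then the Kepler set of the Fibonacci sequence is the whole p-adic field: K((F_n)) = ℚ_p. -/
open Nat (fib)
open Finset Filter Topology

-- The binomial expansion of `Q ^ ((m + 1) n) = (F (m + 1) Q + F m) ^ n`, `Q` the Fibonacci matrix.
theorem Nat.cast_fib_succ_mul_add {R : Type*} [CommSemiring R] (m n r : ℕ) :
    (fib ((m + 1) * n + r) : R) = ∑ j ∈ range (n + 1),
      (n.choose j : R) * ((fib (m + 1) : R) ^ j * (fib m : R) ^ (n - j) * fib (j + r)) := by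
  induction n generalizing r with
  | zero => simp
  | succ n ih =>
    rw [sum_choose_succ_mul (fun i k => (fib (m + 1) : R) ^ i * (fib m : R) ^ k * fib (i + r)),
      show (m + 1) * (n + 1) + r = (m + 1) * n + (r + m + 1) by ring, ih, ← sum_add_distrib]
    refine sum_congr rfl fun j hj => ?_
    rw [show j + (r + m + 1) = m + (j + r) + 1 by ring, Nat.fib_add,
      Nat.sub_add_comm (mem_range_succ_iff.mp hj), add_right_comm j 1 r]
    push_cast
    ring

theorem Nat.lt_pow_sub_one_of_three_le {p j : ℕ} (hp : 3 ≤ p) (hj : 2 ≤ j) : j < p ^ (j - 1) :=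
  calc j ≤ 2 ^ (j - 1) := by have := Nat.lt_two_pow_self (n := j - 1); omega
    _ < 3 ^ (j - 1) := Nat.pow_lt_pow_left (by norm_num) (by omega)
    _ ≤ p ^ (j - 1) := Nat.pow_le_pow_left hp _

theorem IsUltrametricDist.norm_sum_lt_of_forall_lt {ι M : Type*} [SeminormedAddCommGroup M]
    [IsUltrametricDist M] {s : Finset ι} {f : ι → M} {C : ℝ} (hC : 0 < C)
    (h : ∀ i ∈ s, ‖f i‖ < C) : ‖∑ i ∈ s, f i‖ < C := by
  rcases s.eq_empty_or_nonempty with rfl | hs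
  · simpa using hC
  obtain ⟨i, hi, hle⟩ := exists_norm_finsetSum_le_of_nonempty hs f
  exact hle.trans_lt (h i hi)

namespace Padic

variable {p : ℕ} [Fact p.Prime]

theorem norm_natCast_le_one (n : ℕ) : ‖(n : ℚ_[p])‖ ≤ 1 := by
  simpa using norm_int_le_one (p := p) n

theorem norm_natCast_le_pow_iff_dvd (n k : ℕ) :
    ‖(n : ℚ_[p])‖ ≤ (p : ℝ) ^ (-k : ℤ) ↔ p ^ k ∣ n := by
  exact_mod_cast norm_int_le_pow_iff_dvd (p := p) n k

theorem norm_le_inv_of_norm_lt_one {x : ℚ_[p]} (hx : ‖x‖ < 1) : ‖x‖ ≤ (p : ℝ)⁻¹ := by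
  simpa using (norm_lt_pow_iff_norm_le_pow_sub_one x 0).mp (by simpa using hx)

theorem norm_pow_pred_lt_norm_natCast (hp : 3 ≤ p) {x : ℚ_[p]} (hx : ‖x‖ < 1) {j : ℕ}
    (hj : 2 ≤ j) : ‖x‖ ^ (j - 1) < ‖(j : ℚ_[p])‖ := by
  have hp1 : (1 : ℝ) < p := by exact_mod_cast (Fact.out : p.Prime).one_lt
  have hv : padicValNat p j < j - 1 := by
    refine (Nat.pow_lt_pow_iff_right (a := p) (by omega)).mp ?_
    exact (Nat.le_of_dvd (by omega) pow_padicValNat_dvd).trans_lt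
      (Nat.lt_pow_sub_one_of_three_le hp hj)
  rw [norm_eq_zpow_neg_valuation (x := (j : ℚ_[p])) (by exact_mod_cast (by omega : j ≠ 0)),
    valuation_natCast]
  calc ‖x‖ ^ (j - 1) ≤ ((p : ℝ)⁻¹) ^ (j - 1) :=
        pow_le_pow_left₀ (norm_nonneg x) (norm_le_inv_of_norm_lt_one hx) _
    _ = (p : ℝ) ^ (-((j - 1 : ℕ) : ℤ)) := by rw [zpow_neg, zpow_natCast, inv_pow]
    _ < (p : ℝ) ^ (-(padicValNat p j : ℤ)) := zpow_lt_zpow_right₀ hp1 (by omega)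

theorem norm_choose_mul_norm_le (n j : ℕ) :
    ‖(n.choose j : ℚ_[p])‖ * ‖(j : ℚ_[p])‖ ≤ ‖(n : ℚ_[p])‖ := by
  obtain _ | n := n
  · cases j <;> simp
  obtain _ | j := j
  · simp
  have h := congrArg (fun k : ℕ => ‖(k : ℚ_[p])‖) (Nat.add_one_mul_choose_eq n j)
  simp only [Nat.cast_mul, norm_mul] at h
  rw [← h]
  exact mul_le_of_le_one_right (norm_nonneg _) (norm_natCast_le_one _)

-- In the expansion `Nat.cast_fib_succ_mul_add` the term `j = 1`, `n F (m + 1) (F m) ^ (n - 1)`,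
-- has strictly larger norm than all the others.
theorem norm_fib_mul (hp : 3 ≤ p) {m : ℕ} (hm : p ∣ fib m) (n : ℕ) :
    ‖(fib (m * n) : ℚ_[p])‖ = ‖(n : ℚ_[p])‖ * ‖(fib m : ℚ_[p])‖ := by
  obtain _ | m := m
  · simp
  rcases Nat.eq_zero_or_pos n with rfl | hn
  · simp
  set a : ℚ_[p] := (fib (m + 1) : ℚ_[p])
  set b : ℚ_[p] := (fib m : ℚ_[p])
  have ha : ‖a‖ < 1 := norm_natCast_lt_one_iff.mpr hm
  have ha0 : a ≠ 0 := by simp [a]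
  have hb : ‖b‖ = 1 := norm_natCast_eq_one_iff.mpr
    (Nat.Coprime.coprime_dvd_left hm (Nat.fib_coprime_fib_succ m).symm)
  set t : ℕ → ℚ_[p] := fun j => (n.choose j : ℚ_[p]) * (a ^ j * b ^ (n - j) * fib j)
  have ht1 : ‖t 1‖ = ‖(n : ℚ_[p])‖ * ‖a‖ := by simp [t, hb]
  have hpos : 0 < ‖(n : ℚ_[p])‖ * ‖a‖ := by
    have : (n : ℚ_[p]) ≠ 0 := by exact_mod_cast hn.ne'
    positivity
  have htj : ∀ j ∈ (range (n + 1)).erase 1, ‖t j‖ < ‖(n : ℚ_[p])‖ * ‖a‖ := by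
    intro j hj
    obtain rfl | hj2 : j = 0 ∨ 2 ≤ j := by have := (mem_erase.mp hj).1; omega
    · simpa [t] using hpos
    have hj0 : 0 < ‖(j : ℚ_[p])‖ := norm_pos_iff.mpr (by exact_mod_cast (by omega : j ≠ 0))
    refine lt_of_mul_lt_mul_right ?_ hj0.le
    calc ‖t j‖ * ‖(j : ℚ_[p])‖
        ≤ ‖(n.choose j : ℚ_[p])‖ * (‖a‖ ^ j * 1) * ‖(j : ℚ_[p])‖ := by
          simp only [t, norm_mul, norm_pow, hb, one_pow, mul_one]
          gcongr
          exact mul_le_of_le_one_right (by positivity) (norm_natCast_le_one _)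
      _ = ‖(n.choose j : ℚ_[p])‖ * ‖(j : ℚ_[p])‖ * (‖a‖ * ‖a‖ ^ (j - 1)) := by
          rw [← pow_succ', Nat.sub_add_cancel (by omega)]
          ring
      _ ≤ ‖(n : ℚ_[p])‖ * ‖a‖ * ‖a‖ ^ (j - 1) := by
          rw [mul_assoc ‖(n : ℚ_[p])‖]
          gcongr
          exact norm_choose_mul_norm_le n j
      _ < ‖(n : ℚ_[p])‖ * ‖a‖ * ‖(j : ℚ_[p])‖ :=
          mul_lt_mul_of_pos_left (norm_pow_pred_lt_norm_natCast hp ha hj2) hpos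
  have hsum : (fib ((m + 1) * n) : ℚ_[p]) = t 1 + ∑ j ∈ (range (n + 1)).erase 1, t j := by
    rw [add_sum_erase _ _ (by simpa using hn)]
    simpa using Nat.cast_fib_succ_mul_add (R := ℚ_[p]) m n 0
  rw [← ht1]
  refine norm_eq_of_norm_sub_lt_right ?_
  rw [hsum, add_sub_cancel_left, ht1]
  exact IsUltrametricDist.norm_sum_lt_of_forall_lt hpos htj

end Padic

structure Nat.IsFibRankOfAppearance (d α : ℕ) : Prop where
  pos : 0 < α
  dvd_fib : d ∣ fib α
  le_of_dvd_fib : ∀ m, 0 < m → d ∣ fib m → α ≤ m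

theorem Nat.IsFibRankOfAppearance.dvd_of_dvd_fib {d α n : ℕ} (h : IsFibRankOfAppearance d α)
    (hn : d ∣ fib n) : α ∣ n := by
  have hgcd : d ∣ fib (α.gcd n) := Nat.fib_gcd α n ▸ Nat.dvd_gcd h.dvd_fib hn
  have hα : α.gcd n = α := le_antisymm (Nat.le_of_dvd h.pos (α.gcd_dvd_left n))
    (h.le_of_dvd_fib _ (Nat.gcd_pos_of_pos_left n h.pos) hgcd)
  exact hα ▸ α.gcd_dvd_right n

theorem Nat.IsFibRankOfAppearance.mul_pow_dvd_of_pow_succ_dvd_fib {p α : ℕ} [Fact p.Prime]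
    (h : IsFibRankOfAppearance p α) (hp : 3 ≤ p) (hWSS : ¬p ^ 2 ∣ fib α) {k n : ℕ}
    (hn : p ^ (k + 1) ∣ fib n) : α * p ^ k ∣ n := by
  obtain ⟨m, rfl⟩ := h.dvd_of_dvd_fib ((dvd_pow_self p k.succ_ne_zero).trans hn)
  refine mul_dvd_mul_left α ((Padic.norm_natCast_le_pow_iff_dvd m k).mp ?_)
  have hp0 : (0 : ℝ) < p := by exact_mod_cast (Fact.out : p.Prime).pos
  have hnorm : ‖(fib α : ℚ_[p])‖ = (p : ℝ) ^ (-1 : ℤ) := by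
    refine le_antisymm ((Padic.norm_natCast_le_pow_iff_dvd _ 1).mpr (by simpa using h.dvd_fib)) ?_
    by_contra hlt
    rw [not_le, Padic.norm_lt_pow_iff_norm_le_pow_sub_one] at hlt
    exact hWSS ((Padic.norm_natCast_le_pow_iff_dvd _ 2).mp (by simpa using hlt))
  have hle := (Padic.norm_natCast_le_pow_iff_dvd _ _).mpr hn
  rw [Padic.norm_fib_mul hp h.dvd_fib, hnorm, show (-(k + 1 : ℕ) : ℤ) = -k + -1 by push_cast; ring,
    zpow_add₀ hp0.ne'] at hle
  exact le_of_mul_le_mul_right hle (by positivity)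

theorem mul_fib_eq_zero_of_mul_fib_eq {R : Type*} [CommRing R] {a b : R} {d : ℕ} :
    ∀ {i : ℕ}, a * fib i = b * fib (i + d) → a * fib (i + 1) = b * fib (i + d + 1) →
      b * fib d = 0
  | 0, h₀, _ => by simpa using h₀.symm
  | i + 1, h₀, h₁ => by
    refine mul_fib_eq_zero_of_mul_fib_eq (i := i) ?_ (by rwa [add_right_comm])
    have e₁ : (fib (i + 1 + 1) : R) = fib i + fib (i + 1) := by
      rw [← Nat.cast_add, ← Nat.fib_add_two]
    have e₂ : (fib (i + d + 1 + 1) : R) = fib (i + d) + fib (i + d + 1) := by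
      rw [← Nat.cast_add, ← Nat.fib_add_two]
    rw [add_right_comm i 1 d] at h₀ h₁
    linear_combination h₁ - h₀ - a * e₁ + b * e₂

theorem card_filter_isUnit_eq_card_units (R : Type*) [Monoid R] [Fintype R] [Fintype Rˣ]
    [DecidablePred (IsUnit : R → Prop)] : #{x : R | IsUnit x} = Fintype.card Rˣ := by
  rw [← card_univ, ← card_map ⟨((↑) : Rˣ → R), Units.val_injective⟩]
  congr 1
  ext x
  simp only [mem_filter, mem_univ, true_and, Finset.mem_map, Function.Embedding.coeFn_mk]
  exact ⟨fun ⟨u, hu⟩ => ⟨u, hu⟩, fun ⟨u, hu⟩ => ⟨u, hu⟩⟩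

namespace ZMod

theorem card_isUnit_or_isUnit (N : ℕ) [NeZero N] :
    #{x : ZMod N × ZMod N | IsUnit x.1 ∨ IsUnit x.2} =
      N.totient * N + (N - N.totient) * N.totient := by
  classical
  have hunits : #{x : ZMod N | IsUnit x} = N.totient := by
    rw [card_filter_isUnit_eq_card_units, ZMod.card_units_eq_totient]
  have hnonunits : #{x : ZMod N | ¬IsUnit x} = N - N.totient := by
    rw [filter_not, card_sdiff_of_subset (filter_subset _ _), hunits, card_univ, ZMod.card]
  have hsplit : univ.filter (fun x : ZMod N × ZMod N => IsUnit x.1 ∨ IsUnit x.2) =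
      univ.filter IsUnit ×ˢ univ ∪ univ.filter (¬IsUnit ·) ×ˢ univ.filter IsUnit := by
    ext x
    simp only [mem_filter, mem_univ, true_and, mem_union, mem_product]
    tauto
  rw [hsplit, card_union_of_disjoint, card_product, card_product, hunits, hnonunits, card_univ,
    ZMod.card]
  exact disjoint_left.mpr fun x hx hx' => by simp_all

theorem isUnit_fib_or_isUnit_fib_succ {p : ℕ} (hp : p.Prime) (k n : ℕ) :
    IsUnit (fib n : ZMod (p ^ (k + 1))) ∨ IsUnit (fib (n + 1) : ZMod (p ^ (k + 1))) := by
  simp only [ZMod.isUnit_natCast_iff_not_dvd_pow hp k.succ_pos, ← not_and_or]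
  rintro ⟨h, h'⟩
  exact hp.one_lt.ne' (Nat.eq_one_of_dvd_coprimes (Nat.fib_coprime_fib_succ n) h h')

end ZMod

def fibOrbit (N β : ℕ) (x : Fin β × (ZMod N)ˣ) : ZMod N × ZMod N :=
  (x.2 * fib x.1, x.2 * fib (x.1 + 1))

theorem fibOrbit_injective {N β : ℕ} (hβ : ∀ d, N ∣ fib d → β ∣ d)
    (hunit : ∀ n, IsUnit (fib n : ZMod N) ∨ IsUnit (fib (n + 1) : ZMod N)) :
    Function.Injective (fibOrbit N β) := by
  have hfst : ∀ {i j : Fin β} (u v : (ZMod N)ˣ), i ≤ j →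
      fibOrbit N β (i, u) = fibOrbit N β (j, v) → i = j := by
    intro i j u v hij h
    obtain ⟨d, hd⟩ := Nat.exists_eq_add_of_le (Fin.le_def.mp hij)
    simp only [fibOrbit, Prod.mk.injEq, hd] at h
    have hd0 := (Units.mul_right_eq_zero v).mp (mul_fib_eq_zero_of_mul_fib_eq h.1 h.2)
    obtain ⟨c, rfl⟩ := hβ d ((ZMod.natCast_eq_zero_iff _ _).mp hd0)
    have hc : β * c < β * 1 := by have := j.isLt; omega
    exact Fin.ext (by simp [hd, Nat.lt_one_iff.mp (Nat.lt_of_mul_lt_mul_left hc)])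
  rintro ⟨i, u⟩ ⟨j, v⟩ h
  obtain rfl : i = j := (le_total i j).elim (fun hle => hfst u v hle h)
    (fun hle => (hfst v u hle h.symm).symm)
  simp only [fibOrbit, Prod.mk.injEq] at h
  rcases hunit i with hi | hi
  · simpa [Units.ext_iff] using hi.mul_left_inj.mp h.1
  · simpa [Units.ext_iff] using hi.mul_left_inj.mp h.2

theorem exists_unit_mul_fib_eq_of_card_le {N β : ℕ} [NeZero N] (hβ : ∀ d, N ∣ fib d → β ∣ d)
    (hunit : ∀ n, IsUnit (fib n : ZMod N) ∨ IsUnit (fib (n + 1) : ZMod N))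
    (hcard : N.totient * N + (N - N.totient) * N.totient ≤ β * N.totient)
    {a b : ZMod N} (hab : IsUnit a ∨ IsUnit b) :
    ∃ (n : ℕ) (u : (ZMod N)ˣ), (u : ZMod N) * fib n = a ∧ (u : ZMod N) * fib (n + 1) = b := by
  classical
  set U := univ.filter fun x : ZMod N × ZMod N => IsUnit x.1 ∨ IsUnit x.2
  have hsub : univ.image (fibOrbit N β) ⊆ U := by
    simp only [subset_iff, mem_image, mem_univ, true_and, mem_filter, U]
    rintro _ ⟨⟨i, u⟩, rfl⟩
    simpa [fibOrbit] using hunit i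
  have hle : #U ≤ #(univ.image (fibOrbit N β)) := by
    rwa [card_image_of_injective _ (fibOrbit_injective hβ hunit), card_univ, Fintype.card_prod,
      Fintype.card_fin, ZMod.card_units_eq_totient, ZMod.card_isUnit_or_isUnit]
  have hab' : (a, b) ∈ U := mem_filter.mpr ⟨mem_univ _, hab⟩
  rw [← eq_of_subset_of_card_le hsub hle] at hab'
  obtain ⟨⟨i, u⟩, -, h⟩ := mem_image.mp hab'
  exact ⟨i, u, (Prod.ext_iff.mp h).1, (Prod.ext_iff.mp h).2⟩

namespace PadicInt

variable {p : ℕ} [Fact p.Prime]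

theorem tendsto_of_toZModPow_eq {s : ℕ → ℤ_[p]} {a : ℤ_[p]}
    (h : ∀ k, toZModPow (k + 1) (s k) = toZModPow (k + 1) a) :
    Tendsto (fun k => (s k : ℚ_[p])) atTop (𝓝 a) := by
  have hp : (p : ℝ)⁻¹ < 1 := inv_lt_one_of_one_lt₀ (by exact_mod_cast (Fact.out : p.Prime).one_lt)
  refine tendsto_iff_norm_sub_tendsto_zero.mpr (squeeze_zero (fun _ => norm_nonneg _) (fun k => ?_)
    ((tendsto_pow_atTop_nhds_zero_of_lt_one (by positivity) hp).comp (tendsto_add_atTop_nat 1)))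
  have hker : s k - a ∈ RingHom.ker (toZModPow (k + 1)) := by
    rw [RingHom.mem_ker, map_sub, h k, sub_self]
  rw [ker_toZModPow, ← norm_le_pow_iff_mem_span_pow] at hker
  calc ‖(s k : ℚ_[p]) - a‖ = ‖s k - a‖ := rfl
    _ ≤ (p : ℝ) ^ (-(k + 1 : ℕ) : ℤ) := hker
    _ = (p : ℝ)⁻¹ ^ (k + 1) := by rw [zpow_neg, zpow_natCast, inv_pow]

theorem exists_toZModPow_mul_fib_eq {α : ℕ} (hrank : Nat.IsFibRankOfAppearance p α)
    (hp : 3 ≤ p) (hWSS : ¬p ^ 2 ∣ fib α) (hα : α = p + 1) (k : ℕ) {a b : ℤ_[p]}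
    (hab : IsUnit a ∨ IsUnit b) :
    ∃ (n : ℕ) (u : ℤ_[p]), toZModPow (k + 1) (u * (fib n : ℤ_[p])) = toZModPow (k + 1) a ∧
      toZModPow (k + 1) (u * (fib (n + 1) : ℤ_[p])) = toZModPow (k + 1) b := by
  have hpp : p.Prime := Fact.out
  have hcard : (p ^ (k + 1)).totient * p ^ (k + 1) +
      (p ^ (k + 1) - (p ^ (k + 1)).totient) * (p ^ (k + 1)).totient ≤
        α * p ^ k * (p ^ (k + 1)).totient := by
    obtain ⟨q, rfl⟩ := Nat.exists_eq_add_of_le hpp.one_le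
    rw [Nat.totient_prime_pow_succ hpp, hα, Nat.add_sub_cancel_left,
      Nat.sub_eq_of_eq_add (by ring : (1 + q) ^ (k + 1) = (1 + q) ^ k + (1 + q) ^ k * q)]
    exact le_of_eq (by ring)
  obtain ⟨n, v, hn, hn1⟩ := exists_unit_mul_fib_eq_of_card_le
    (fun _ hd => hrank.mul_pow_dvd_of_pow_succ_dvd_fib hp hWSS hd)
    (ZMod.isUnit_fib_or_isUnit_fib_succ hpp k) hcard
    (hab.imp (·.map (toZModPow (k + 1))) (·.map (toZModPow (k + 1))))
  refine ⟨n, ((v : ZMod (p ^ (k + 1))).val : ℤ_[p]), ?_, ?_⟩ <;>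
    simpa [map_mul, map_natCast, ZMod.natCast_zmod_val]

end PadicInt

theorem Padic.exists_isUnit_or_isUnit_div_eq {p : ℕ} [Fact p.Prime] (x : ℚ_[p]) :
    ∃ a b : ℤ_[p], (IsUnit a ∨ IsUnit b) ∧ (a : ℚ_[p]) ≠ 0 ∧ (b : ℚ_[p]) / a = x := by
  by_cases hx : ‖x‖ ≤ 1
  · exact ⟨1, ⟨x, hx⟩, Or.inl isUnit_one, by simp, by simp⟩
  have hx0 : x ≠ 0 := by rintro rfl; simp at hx
  have hinv : ‖x⁻¹‖ ≤ 1 := by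
    rw [norm_inv]
    exact inv_le_one_of_one_le₀ (le_of_not_ge hx)
  exact ⟨⟨x⁻¹, hinv⟩, 1, Or.inr isUnit_one, by simpa using hx0, by simp⟩

theorem stmt_19 (p : ℕ) [Fact p.Prime] (hp : 3 ≤ p)
    -- `α` is the rank of appearance of `p` in the Fibonacci sequence
    (α : ℕ) (hα0 : 0 < α) (hαdvd : p ∣ Nat.fib α)
    (hαmin : ∀ m : ℕ, 0 < m → p ∣ Nat.fib m → α ≤ m)
    -- `p` is not a Wall–Sun–Sun prime
    (hWSS : ¬ p ^ 2 ∣ Nat.fib α)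
    -- `α_F(p) = p + 1`
    (hα : α = p + 1) :
    keplerSet p (fun n => (Nat.fib n : ℚ_[p])) = Set.univ := by
  refine Set.eq_univ_of_forall fun x => ?_
  obtain ⟨a, b, hab, ha, rfl⟩ := Padic.exists_isUnit_or_isUnit_div_eq x
  choose n u hna hnb using fun k => PadicInt.exists_toZModPow_mul_fib_eq
    ⟨hα0, hαdvd, hαmin⟩ hp hWSS hα k hab
  have hs := PadicInt.tendsto_of_toZModPow_eq hna
  have ht := PadicInt.tendsto_of_toZModPow_eq hnb
  refine mem_closure_of_tendsto (ht.div hs ha) ?_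
  filter_upwards [hs.eventually_ne ha] with k hk
  push_cast at hk ⊢
  exact ⟨n k, right_ne_zero_of_mul hk, mul_div_mul_left _ _ (left_ne_zero_of_mul hk)⟩
end
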